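/- arXiv:2511.08807 — 7 statements merged into one kernel-verified Lean document; each statement's English description precedes it below -/
import Mathlib

section
/- Let D = (A,B) be a bipartite digraph admitting a b-coloring with k ≥ 3 colors. Then one of the parts A, B contains vertices of all k colors and the other part contains vertices of at least k−1 colors. -/
open Classical

/-- A closed directed walk of length `n+1` inside the set `S`. -/
def IsClosedWalkIn {V : Type*} (E : V → V → Prop) (S : Set V) (n : ℕ)
    (c : Fin (n + 1) → V) : Prop :=
  (∀ i, c i ∈ S) ∧ ∀ i : Fin (n + 1), E (c i) (c (i + 1))

/-- The set `S` induces no directed cycle (equivalently, no closed directed walk). -/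
def AcyclicSet {V : Type*} (E : V → V → Prop) (S : Set V) : Prop :=
  ¬ ∃ (n : ℕ) (c : Fin (n + 1) → V), IsClosedWalkIn E S n c

/-- An acyclic coloring: every color class induces no directed cycle. -/
def AcyclicColoring {V : Type*} (E : V → V → Prop) {k : ℕ} (Γ : V → Fin k) : Prop :=
  ∀ i : Fin k, AcyclicSet E {v | Γ v = i}

/-- `u` is a b⁺-vertex: it has an out-neighbor of every other color. -/
def IsBPlus {V : Type*} (E : V → V → Prop) {k : ℕ} (Γ : V → Fin k) (u : V) : Prop :=
  ∀ j : Fin k, j ≠ Γ u → ∃ w, E u w ∧ Γ w = j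

/-- `u` is a b⁻-vertex: it has an in-neighbor of every other color. -/
def IsBMinus {V : Type*} (E : V → V → Prop) {k : ℕ} (Γ : V → Fin k) (u : V) : Prop :=
  ∀ j : Fin k, j ≠ Γ u → ∃ w, E w u ∧ Γ w = j

/-- A b-coloring: an acyclic coloring in which every color class contains a
b⁺-vertex and a b⁻-vertex. -/
def IsBColoring {V : Type*} (E : V → V → Prop) {k : ℕ} (Γ : V → Fin k) : Prop :=
  AcyclicColoring E Γ ∧
    ∀ i : Fin k, (∃ u, Γ u = i ∧ IsBPlus E Γ u) ∧ (∃ u, Γ u = i ∧ IsBMinus E Γ u)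

/-- The dib-chromatic number: the maximum number of colors of a b-coloring. -/
noncomputable def dib {V : Type*} (E : V → V → Prop) : ℕ :=
  sSup {k | ∃ Γ : V → Fin k, IsBColoring E Γ}

/-- The dichromatic number: the minimum number of colors of an acyclic coloring. -/
noncomputable def dc {V : Type*} (E : V → V → Prop) : ℕ :=
  sInf {k | ∃ Γ : V → Fin k, AcyclicColoring E Γ}

/-- Out-degree. -/
noncomputable def outDeg {V : Type*} (E : V → V → Prop) (v : V) : ℕ := {w | E v w}.ncard

/-- In-degree. -/
noncomputable def inDeg {V : Type*} (E : V → V → Prop) (v : V) : ℕ := {w | E w v}.ncard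

/-- `(A, B)` is a bipartition of the digraph: the parts are disjoint independent sets
covering all vertices, and every arc goes between the parts. -/
def IsBipartition {V : Type*} (E : V → V → Prop) (A B : Set V) : Prop :=
  Disjoint A B ∧ A ∪ B = Set.univ ∧
    ∀ u v, E u v → (u ∈ A ∧ v ∈ B) ∨ (u ∈ B ∧ v ∈ A)

/-- The digraph is weakly connected. -/
def WeaklyConnected {V : Type*} (E : V → V → Prop) : Prop :=
  ∀ u v : V, Relation.ReflTransGen (fun a b => E a b ∨ E b a) u v

/-- The set `S` is weakly connected in the induced subdigraph. -/
def WeaklyConnectedOn {V : Type*} (E : V → V → Prop) (S : Set V) : Prop :=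
  ∀ ⦃u⦄, u ∈ S → ∀ ⦃v⦄, v ∈ S →
    Relation.ReflTransGen (fun a b => (E a b ∨ E b a) ∧ a ∈ S ∧ b ∈ S) u v

/-- A simple digraph (oriented graph): no digons. -/
def SimpleDigraph' {V : Type*} (E : V → V → Prop) : Prop :=
  ∀ u v, E u v → ¬ E v u
/-- in a b-coloring of a bipartite digraph with k ≥ 3 colors, one part has
all k colors and the other at least k − 1 colors. -/
theorem stmt4 {V : Type*} [Fintype V] (E : V → V → Prop) (A B : Set V)
    (hbip : IsBipartition E A B) (k : ℕ) (hk : 3 ≤ k)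
    (Γ : V → Fin k) (hbc : IsBColoring E Γ) :
    ((∀ i : Fin k, ∃ v ∈ A, Γ v = i) ∧ k - 1 ≤ {i : Fin k | ∃ v ∈ B, Γ v = i}.ncard) ∨
    ((∀ i : Fin k, ∃ v ∈ B, Γ v = i) ∧ k - 1 ≤ {i : Fin k | ∃ v ∈ A, Γ v = i}.ncard) := by
  obtain ⟨hdis, hcov, harc⟩ := hbip
  obtain ⟨hac, hb⟩ := hbc
  have hAB : ∀ v : V, v ∈ A ∨ v ∈ B := by
    intro v
    have : v ∈ A ∪ B := by rw [hcov]; exact Set.mem_univ v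
    exact this
  have hdisAB : ∀ v : V, v ∈ A → v ∈ B → False := fun v hA hB =>
    Set.disjoint_left.mp hdis hA hB
  -- arcs from B go to A, arcs from A go to B
  have arcBA : ∀ u w, E u w → u ∈ B → w ∈ A := by
    intro u w he hu
    rcases harc u w he with ⟨h1, _⟩ | ⟨_, h2⟩
    · exact absurd hu (fun hB => hdisAB u h1 hB)
    · exact h2
  have arcAB : ∀ u w, E u w → u ∈ A → w ∈ B := by
    intro u w he hu
    rcases harc u w he with ⟨_, h2⟩ | ⟨h1, _⟩
    · exact h2
    · exact absurd hu (fun hA => hdisAB u hA h1)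
  -- if a color is missing in A, all other colors appear in A
  have keyA : ∀ i : Fin k, (¬ ∃ v ∈ A, Γ v = i) →
      ∀ m : Fin k, m ≠ i → ∃ v ∈ A, Γ v = m := by
    intro i hi m hm
    obtain ⟨u, hu, hbp⟩ := (hb i).1
    have huB : u ∈ B := by
      rcases hAB u with h | h
      · exact absurd ⟨u, h, hu⟩ hi
      · exact h
    obtain ⟨w, hew, hwc⟩ := hbp m (by rw [hu]; exact hm)
    exact ⟨w, arcBA u w hew huB, hwc⟩
  have keyB : ∀ i : Fin k, (¬ ∃ v ∈ B, Γ v = i) →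
      ∀ m : Fin k, m ≠ i → ∃ v ∈ B, Γ v = m := by
    intro i hi m hm
    obtain ⟨u, hu, hbp⟩ := (hb i).1
    have huA : u ∈ A := by
      rcases hAB u with h | h
      · exact h
      · exact absurd ⟨u, h, hu⟩ hi
    obtain ⟨w, hew, hwc⟩ := hbp m (by rw [hu]; exact hm)
    exact ⟨w, arcAB u w hew huA, hwc⟩
  -- not both parts can miss a color
  have notboth : ¬ ((∃ i, ¬ ∃ v ∈ A, Γ v = i) ∧ (∃ j, ¬ ∃ v ∈ B, Γ v = j)) := by
    rintro ⟨⟨i, hi⟩, ⟨j, hj⟩⟩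
    have hm : ∃ m : Fin k, m ≠ i ∧ m ≠ j := by
      by_contra h
      push_neg at h
      have hsub : (Finset.univ : Finset (Fin k)) ⊆ {i, j} := by
        intro m _
        rcases eq_or_ne m i with h1 | h1
        · simp [h1]
        · simp [h m h1]
      have h2 := Finset.card_le_card hsub
      have h3 : ({i, j} : Finset (Fin k)).card ≤ 2 := by
        refine (Finset.card_insert_le _ _).trans ?_
        simp
      simp only [Finset.card_univ, Fintype.card_fin] at h2
      omega
    obtain ⟨m, hmi, hmj⟩ := hm
    obtain ⟨u, hu, hbp⟩ := (hb m).1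
    rcases hAB u with h | h
    · obtain ⟨w, hew, hwc⟩ := hbp j (by rw [hu]; exact Ne.symm hmj)
      exact hj ⟨w, arcAB u w hew h, hwc⟩
    · obtain ⟨w, hew, hwc⟩ := hbp i (by rw [hu]; exact Ne.symm hmi)
      exact hi ⟨w, arcBA u w hew h, hwc⟩
  -- cardinality bound when all colors except possibly one appear
  have card_ge : ∀ (S : Set V) (i : Fin k), (∀ m : Fin k, m ≠ i → ∃ v ∈ S, Γ v = m) →
      k - 1 ≤ {m : Fin k | ∃ v ∈ S, Γ v = m}.ncard := by
    intro S i h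
    have hsub : ({i}ᶜ : Set (Fin k)) ⊆ {m | ∃ v ∈ S, Γ v = m} := fun m hm => h m hm
    have h1 : ({i}ᶜ : Set (Fin k)).ncard = k - 1 := by
      have h2 : ({i} : Set (Fin k)).ncard + ({i}ᶜ : Set (Fin k)).ncard = k := by
        rw [Set.ncard_add_ncard_compl]
        simp [Nat.card_eq_fintype_card]
      rw [Set.ncard_singleton] at h2
      omega
    calc k - 1 = ({i}ᶜ : Set (Fin k)).ncard := h1.symm
      _ ≤ _ := Set.ncard_le_ncard hsub (Set.toFinite _)
  have card_all : ∀ (S : Set V), (∀ m : Fin k, ∃ v ∈ S, Γ v = m) →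
      k - 1 ≤ {m : Fin k | ∃ v ∈ S, Γ v = m}.ncard := by
    intro S h
    have : {m : Fin k | ∃ v ∈ S, Γ v = m} = Set.univ := by
      ext m; simpa using h m
    rw [this, Set.ncard_univ, Nat.card_eq_fintype_card, Fintype.card_fin]
    omega
  by_cases hA : ∀ i : Fin k, ∃ v ∈ A, Γ v = i
  · left
    refine ⟨hA, ?_⟩
    by_cases hB : ∀ j : Fin k, ∃ v ∈ B, Γ v = j
    · exact card_all B hB
    · push_neg at hB
      obtain ⟨j, hj⟩ := hB
      exact card_ge B j (keyB j (by push_neg; exact hj))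
  · right
    push_neg at hA
    obtain ⟨i, hi⟩ := hA
    have hi' : ¬ ∃ v ∈ A, Γ v = i := by push_neg; exact hi
    have hB : ∀ j : Fin k, ∃ v ∈ B, Γ v = j := by
      by_contra h
      push_neg at h
      obtain ⟨j, hj⟩ := h
      exact notboth ⟨⟨i, hi'⟩, ⟨j, by push_neg; exact hj⟩⟩
    exact ⟨hB, card_ge A i (keyA i hi')⟩
end

section
/- Let D be a disconnected bipartite digraph with δ(D) ≥ 2 that is the disjoint union of r ≥ 3 weakly connected bipartite subdigraphs D₁,…,D_r. Then dib(D) > 2. -/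
open Classical

/-- a disconnected bipartite digraph with δ ≥ 2 which is the disjoint union
of r ≥ 3 weakly connected components has dib > 2. -/
theorem stmt5 {V : Type*} [Fintype V] (E : V → V → Prop) (A B : Set V)
    (hbip : IsBipartition E A B) (hdeg : ∀ v, 2 ≤ outDeg E v ∧ 2 ≤ inDeg E v)
    (r : ℕ) (hr : 3 ≤ r) (P : Fin r → Set V)
    (hdisj : ∀ i j, i ≠ j → Disjoint (P i) (P j))
    (hcover : (⋃ i, P i) = Set.univ)
    (hne : ∀ i, (P i).Nonempty)
    (hcomp : ∀ u v, E u v → ∃ i, u ∈ P i ∧ v ∈ P i)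
    (hwc : ∀ i, WeaklyConnectedOn E (P i)) :
    2 < dib E := by
  classical
  -- basic facts about Fin 3
  have hfin1 : ∀ i : Fin 3, i + 1 ≠ i ∧ i + 2 ≠ i ∧ i + 1 ≠ i + 2 := by decide
  have hfin2 : ∀ j k : Fin 3, k ≠ j → k = j + 1 ∨ k = j + 2 := by decide
  -- opposite sides
  have hopp : ∀ u v, E u v → ((u ∈ A) ↔ ¬ (v ∈ A)) := by
    intro u v h
    rcases hbip.2.2 u v h with ⟨hu, hv⟩ | ⟨hu, hv⟩
    · exact ⟨fun _ hvA => Set.disjoint_left.mp hbip.1 hvA hv, fun _ => hu⟩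
    · exact ⟨fun huA => (Set.disjoint_left.mp hbip.1 huA hu).elim, fun hnv => (hnv hv).elim⟩
  -- neighbors stay in the same part
  have hmemr : ∀ u v, E u v → ∀ j, u ∈ P j → v ∈ P j := by
    intro u v h j hu
    obtain ⟨m, hum, hvm⟩ := hcomp u v h
    rcases eq_or_ne m j with rfl | hmj
    · exact hvm
    · exact (Set.disjoint_left.mp (hdisj m j hmj) hum hu).elim
  have hmeml : ∀ u v, E u v → ∀ j, v ∈ P j → u ∈ P j := by
    intro u v h j hv
    obtain ⟨m, hum, hvm⟩ := hcomp u v h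
    rcases eq_or_ne m j with rfl | hmj
    · exact hum
    · exact (Set.disjoint_left.mp (hdisj m j hmj) hvm hv).elim
  -- degree helpers
  have hout2 : ∀ v : V, ∃ a b, E v a ∧ E v b ∧ a ≠ b := by
    intro v
    have h2 : 1 < {w | E v w}.ncard := lt_of_lt_of_le one_lt_two (hdeg v).1
    obtain ⟨a, ha, b, hb, hab⟩ := (Set.one_lt_ncard (Set.toFinite _)).mp h2
    exact ⟨a, b, ha, hb, hab⟩
  have hin2 : ∀ (v a : V), ∃ w, E w v ∧ w ≠ a := by
    intro v a
    have h2 : 1 < {w | E w v}.ncard := lt_of_lt_of_le one_lt_two (hdeg v).2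
    obtain ⟨b, hb, hba⟩ := Set.exists_ne_of_one_lt_ncard h2 a
    exact ⟨b, hb, hba⟩
  -- the embedding of the first three components
  let ι : Fin 3 → Fin r := fun i => Fin.castLE hr i
  have hι : ∀ a b : Fin 3, a ≠ b → ι a ≠ ι b := by
    intro a b hab h
    have h' : (a : ℕ) = (b : ℕ) := congrArg (fun t : Fin r => t.1) h
    exact hab (Fin.ext h')
  -- choose data in each of the three components
  have hdata : ∀ i : Fin 3, ∃ x y₁ y₂ z : V,
      x ∈ P (ι i) ∧ E x y₁ ∧ E x y₂ ∧ y₁ ≠ y₂ ∧ E z x ∧ z ≠ y₁ := by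
    intro i
    obtain ⟨x, hx⟩ := hne (ι i)
    obtain ⟨y₁, y₂, hy1, hy2, hyne⟩ := hout2 x
    obtain ⟨z, hz, hzy⟩ := hin2 x y₁
    exact ⟨x, y₁, y₂, z, hx, hy1, hy2, hyne, hz, hzy⟩
  choose x y1 y2 z hx hy1 hy2 hyne hz hzy1 using hdata
  -- the special sets and the coloring
  set C : Fin 3 → Set V := fun i => if E (y2 i) (x i) then {y2 i} else {y2 i, z i} with hC
  set f : Fin 3 → V → Fin 3 :=
    fun i v => if (v ∈ A ↔ x i ∈ A) then i else if v ∈ C i then i + 2 else i + 1 with hf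
  set Γ : V → Fin 3 := fun v =>
    if v ∈ P (ι 0) then f 0 v else
    if v ∈ P (ι 1) then f 1 v else
    if v ∈ P (ι 2) then f 2 v else
    if v ∈ A then 0 else 1 with hΓ
  have hnotmem : ∀ (a b : Fin 3), a ≠ b → ∀ v, v ∈ P (ι a) → v ∉ P (ι b) := by
    intro a b hab v hv
    exact Set.disjoint_left.mp (hdisj (ι a) (ι b) (hι a b hab)) hv
  -- Γ agrees with f i on P (ι i)
  have hK1 : ∀ (i : Fin 3) v, v ∈ P (ι i) → Γ v = f i v := by
    intro i v hv
    have heq : ∀ a : Fin 3, v ∈ P (ι a) → i = a := by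
      intro a ha
      by_contra hne'
      exact hnotmem i a hne' v hv ha
    simp only [hΓ]
    by_cases h0 : v ∈ P (ι 0)
    · rw [if_pos h0, heq 0 h0]
    · rw [if_neg h0]
      by_cases h1 : v ∈ P (ι 1)
      · rw [if_pos h1, heq 1 h1]
      · rw [if_neg h1]
        have hi2 : i = 2 := by
          have i0 : (i : ℕ) ≠ 0 := fun e => h0 ((Fin.ext e : i = 0) ▸ hv)
          have i1 : (i : ℕ) ≠ 1 := fun e => h1 ((Fin.ext e : i = 1) ▸ hv)
          have := i.2
          exact Fin.ext (by omega)
        have h2 : v ∈ P (ι 2) := hi2 ▸ hv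
        rw [if_pos h2, hi2]
  have hK2 : ∀ v, (∀ i : Fin 3, v ∉ P (ι i)) → Γ v = if v ∈ A then 0 else 1 := by
    intro v hv
    simp only [hΓ]
    rw [if_neg (hv 0), if_neg (hv 1), if_neg (hv 2)]
  -- f-value lemmas
  have hfsame : ∀ (i : Fin 3) v, (v ∈ A ↔ x i ∈ A) → f i v = i := by
    intro i v h; simp only [hf]; rw [if_pos h]
  have hfi : ∀ (i : Fin 3) v, ¬(v ∈ A ↔ x i ∈ A) → v ∈ C i → f i v = i + 2 := by
    intro i v h h'; simp only [hf]; rw [if_neg h, if_pos h']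
  have hfo : ∀ (i : Fin 3) v, ¬(v ∈ A ↔ x i ∈ A) → v ∉ C i → f i v = i + 1 := by
    intro i v h h'; simp only [hf]; rw [if_neg h, if_neg h']
  have hfne : ∀ (i : Fin 3) v, ¬(v ∈ A ↔ x i ∈ A) → f i v ≠ i := by
    intro i v h
    by_cases h' : v ∈ C i
    · rw [hfi i v h h']; exact (hfin1 i).2.1
    · rw [hfo i v h h']; exact (hfin1 i).1
  -- independence: no monochromatic edge
  have hK3 : ∀ u v, E u v → Γ u ≠ Γ v := by
    intro u v h
    obtain ⟨m, hum, hvm⟩ := hcomp u v h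
    have hside := hopp u v h
    by_cases hm : m.1 < 3
    · set i : Fin 3 := ⟨m.1, hm⟩ with hi
      have hιi : ι i = m := Fin.ext rfl
      have hum' : u ∈ P (ι i) := by rw [hιi]; exact hum
      have hvm' : v ∈ P (ι i) := by rw [hιi]; exact hvm
      rw [hK1 i u hum', hK1 i v hvm']
      by_cases hs : u ∈ A ↔ x i ∈ A
      · have hs' : ¬(v ∈ A ↔ x i ∈ A) := by tauto
        rw [hfsame i u hs]
        exact fun hh => hfne i v hs' hh.symm
      · have hs' : v ∈ A ↔ x i ∈ A := by tauto
        rw [hfsame i v hs']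
        exact hfne i u hs
    · have hιm : ∀ i : Fin 3, ι i ≠ m := by
        intro i hh
        rw [← hh] at hm
        exact hm i.2
      have hnu : ∀ i : Fin 3, u ∉ P (ι i) := fun i hui =>
        Set.disjoint_left.mp (hdisj (ι i) m (hιm i)) hui hum
      have hnv : ∀ i : Fin 3, v ∉ P (ι i) := fun i hvi =>
        Set.disjoint_left.mp (hdisj (ι i) m (hιm i)) hvi hvm
      rw [hK2 u hnu, hK2 v hnv]
      by_cases huA : u ∈ A
      · have hvA : v ∉ A := hside.mp huA
        rw [if_pos huA, if_neg hvA]; decide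
      · have hvA : v ∈ A := by tauto
        rw [if_neg huA, if_pos hvA]; decide
  -- color of x i is i
  have hxcol : ∀ i : Fin 3, Γ (x i) = i := by
    intro i
    rw [hK1 i (x i) (hx i)]
    exact hfsame i (x i) Iff.rfl
  -- colors of out-neighbors
  have hy1P : ∀ i : Fin 3, y1 i ∈ P (ι i) := fun i => hmemr _ _ (hy1 i) _ (hx i)
  have hy2P : ∀ i : Fin 3, y2 i ∈ P (ι i) := fun i => hmemr _ _ (hy2 i) _ (hx i)
  have hy1col : ∀ i : Fin 3, Γ (y1 i) = i + 1 := by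
    intro i
    rw [hK1 i (y1 i) (hy1P i)]
    refine hfo i (y1 i) ?_ ?_
    · have := hopp (x i) (y1 i) (hy1 i); tauto
    · simp only [hC]
      split
      · simp only [Set.mem_singleton_iff]; exact hyne i
      · simp only [Set.mem_insert_iff, Set.mem_singleton_iff]
        push_neg
        exact ⟨hyne i, fun hh => hzy1 i hh.symm⟩
  have hy2col : ∀ i : Fin 3, Γ (y2 i) = i + 2 := by
    intro i
    rw [hK1 i (y2 i) (hy2P i)]
    refine hfi i (y2 i) ?_ ?_
    · have := hopp (x i) (y2 i) (hy2 i); tauto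
    · simp only [hC]
      split
      · exact Set.mem_singleton _
      · exact Set.mem_insert _ _
  -- in-neighbors of the right colors
  have hincol2 : ∀ i : Fin 3, ∃ w, E w (x i) ∧ Γ w = i + 2 := by
    intro i
    by_cases hcase : E (y2 i) (x i)
    · exact ⟨y2 i, hcase, hy2col i⟩
    · refine ⟨z i, hz i, ?_⟩
      rw [hK1 i (z i) (hmeml _ _ (hz i) _ (hx i))]
      refine hfi i (z i) ?_ ?_
      · have := hopp (z i) (x i) (hz i); tauto
      · simp only [hC]
        rw [if_neg hcase]
        exact Set.mem_insert_iff.mpr (Or.inr rfl)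
  have hincol1 : ∀ i : Fin 3, ∃ w, E w (x i) ∧ Γ w = i + 1 := by
    intro i
    by_cases hcase : E (y2 i) (x i)
    · obtain ⟨w, hw, hwne⟩ := hin2 (x i) (y2 i)
      refine ⟨w, hw, ?_⟩
      rw [hK1 i w (hmeml _ _ hw _ (hx i))]
      refine hfo i w ?_ ?_
      · have := hopp w (x i) hw; tauto
      · simp only [hC]
        rw [if_pos hcase]
        simpa using hwne
    · obtain ⟨w, hw, hwne⟩ := hin2 (x i) (z i)
      refine ⟨w, hw, ?_⟩
      rw [hK1 i w (hmeml _ _ hw _ (hx i))]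
      refine hfo i w ?_ ?_
      · have := hopp w (x i) hw; tauto
      · simp only [hC]
        rw [if_neg hcase]
        simp only [Set.mem_insert_iff, Set.mem_singleton_iff]
        push_neg
        exact ⟨fun hh => hcase (by rw [← hh]; exact hw), hwne⟩
  -- the coloring is a b-coloring
  have hBC : IsBColoring E Γ := by
    constructor
    · intro j ⟨n, c, hS, hE⟩
      exact hK3 (c 0) (c (0 + 1)) (hE 0) ((hS 0).trans (hS (0 + 1)).symm)
    · intro j
      constructor
      · refine ⟨x j, hxcol j, ?_⟩
        intro k hk
        rw [hxcol j] at hk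
        rcases hfin2 j k hk with rfl | rfl
        · exact ⟨y1 j, hy1 j, hy1col j⟩
        · exact ⟨y2 j, hy2 j, hy2col j⟩
      · refine ⟨x j, hxcol j, ?_⟩
        intro k hk
        rw [hxcol j] at hk
        rcases hfin2 j k hk with rfl | rfl
        · exact hincol1 j
        · exact hincol2 j
  -- conclude
  have hmem3 : (3 : ℕ) ∈ {k | ∃ Γ : V → Fin k, IsBColoring E Γ} := ⟨Γ, hBC⟩
  have hbdd : BddAbove {k | ∃ Γ : V → Fin k, IsBColoring E Γ} := by
    refine ⟨Fintype.card V, ?_⟩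
    rintro k ⟨g, hg⟩
    have hsurj : Function.Surjective g := by
      intro i
      obtain ⟨u, hu, -⟩ := (hg.2 i).1
      exact ⟨u, hu⟩
    have := Fintype.card_le_of_surjective g hsurj
    simpa using this
  have h3le : (3 : ℕ) ≤ dib E := le_csSup hbdd hmem3
  omega
end

section
/- Let D be a disconnected bipartite digraph with δ(D) ≥ 2 having exactly two weakly connected components D₁ and D₂, both bipartite with δ ≥ 2. If at least one of D₁, D₂ is not a complete symmetric bipartite digraph, then dib(D) > 2; conversely, if both D₁ and D₂ are complete symmetric bipartite digraphs, then dib(D) = 2. -/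
open Classical

theorem my_digon_walk {V : Type*} {E : V → V → Prop} {S : Set V} (hS : AcyclicSet E S) {u v : V}
    (hu : u ∈ S) (hv : v ∈ S) (huv : E u v) (hvu : E v u) : False := by
  refine hS ⟨1, fun i => if i = 0 then u else v, fun i => ?_, fun i => ?_⟩
  · dsimp only; split <;> assumption
  · fin_cases i <;> simp [Fin.ext_iff] <;> assumption

theorem my_key {V : Type*} {E : V → V → Prop} {k : ℕ} {Γ : V → Fin k}
    (hac : AcyclicColoring E Γ)
    {u : V} {c : Fin k} (hu : Γ u = c) (hbp : IsBPlus E Γ u)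
    {S S' : Set V} (hout : ∀ t, E u t → t ∈ S')
    (hdig : ∀ a ∈ S, ∀ b ∈ S', E a b ∧ E b a)
    {j : Fin k} (hj : j ≠ c) :
    (∃ t, Γ t = j ∧ t ∈ S') ∧ ∀ v, Γ v = j → v ∉ S := by
  obtain ⟨t, ht, htj⟩ := hbp j (by rw [hu]; exact hj)
  refine ⟨⟨t, htj, hout t ht⟩, fun v hv hvS => ?_⟩
  obtain ⟨e1, e2⟩ := hdig v hvS t (hout t ht)
  exact my_digon_walk (hac j) hv htj e1 e2

theorem my_inner {V : Type*} {E : V → V → Prop} {k : ℕ} {Γ : V → Fin k}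
    (hb : IsBColoring E Γ) (X X' Y Y' : Set V)
    (cover : ∀ v : V, v ∈ X ∨ v ∈ X' ∨ v ∈ Y ∨ v ∈ Y')
    (locX : ∀ u t, E u t → u ∈ X → t ∈ X')
    (locX' : ∀ u t, E u t → u ∈ X' → t ∈ X)
    (locY : ∀ u t, E u t → u ∈ Y → t ∈ Y')
    (locY' : ∀ u t, E u t → u ∈ Y' → t ∈ Y)
    (hdX : ∀ a ∈ X, ∀ b ∈ X', E a b ∧ E b a)
    (hdY : ∀ a ∈ Y, ∀ b ∈ Y', E a b ∧ E b a)
    {c₀ c₁ c₂ : Fin k} (h01 : c₀ ≠ c₁) (h02 : c₀ ≠ c₂) (h12 : c₁ ≠ c₂)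
    {u₀ u₁ u₂ : V}
    (hg0 : Γ u₀ = c₀) (hb0 : IsBPlus E Γ u₀)
    (hg1 : Γ u₁ = c₁) (hb1 : IsBPlus E Γ u₁)
    (hg2 : Γ u₂ = c₂) (hb2 : IsBPlus E Γ u₂)
    (hu0 : u₀ ∈ X) : False := by
  have hdX' : ∀ a ∈ X', ∀ b ∈ X, E a b ∧ E b a :=
    fun a ha b hbb => ⟨(hdX b hbb a ha).2, (hdX b hbb a ha).1⟩
  obtain ⟨⟨t1, ht1, ht1X'⟩, hnoX1⟩ :=
    my_key hb.1 hg0 hb0 (fun t ht => locX u₀ t ht hu0) hdX h01.symm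
  obtain ⟨⟨t2, ht2, ht2X'⟩, hnoX2⟩ :=
    my_key hb.1 hg0 hb0 (fun t ht => locX u₀ t ht hu0) hdX h02.symm
  have sub : ∀ Z Z' : Set V, u₁ ∈ Z →
      (∀ u t, E u t → u ∈ Z → t ∈ Z') →
      (∀ u t, E u t → u ∈ Z' → t ∈ Z) →
      (∀ a ∈ Z, ∀ b ∈ Z', E a b ∧ E b a) →
      (u₂ ∈ X ∨ u₂ ∈ X' ∨ u₂ ∈ Z ∨ u₂ ∈ Z') → False := by
    intro Z Z' hu1Z outZ outZ' hdZ hcov2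
    have hdZ' : ∀ a ∈ Z', ∀ b ∈ Z, E a b ∧ E b a :=
      fun a ha b hbb => ⟨(hdZ b hbb a ha).2, (hdZ b hbb a ha).1⟩
    obtain ⟨⟨t0, ht0, ht0Z'⟩, _⟩ :=
      my_key hb.1 hg1 hb1 (fun t ht => outZ u₁ t ht hu1Z) hdZ h01
    obtain ⟨_, hno2Z⟩ :=
      my_key hb.1 hg1 hb1 (fun t ht => outZ u₁ t ht hu1Z) hdZ h12.symm
    rcases hcov2 with h2 | h2 | h2 | h2
    · exact hnoX2 u₂ hg2 h2
    · obtain ⟨_, hno⟩ :=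
        my_key hb.1 hg2 hb2 (fun t ht => locX' u₂ t ht h2) hdX' h12
      exact hno t1 ht1 ht1X'
    · exact hno2Z u₂ hg2 h2
    · obtain ⟨_, hno⟩ :=
        my_key hb.1 hg2 hb2 (fun t ht => outZ' u₂ t ht h2) hdZ' h02
      exact hno t0 ht0 ht0Z'
  rcases cover u₁ with h | h | h | h
  · exact hnoX1 u₁ hg1 h
  · obtain ⟨_, hno⟩ :=
      my_key hb.1 hg1 hb1 (fun t ht => locX' u₁ t ht h) hdX' h12.symm
    exact hno t2 ht2 ht2X'
  · exact sub Y Y' h locY locY' hdY (cover u₂)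
  · have hdY' : ∀ a ∈ Y', ∀ b ∈ Y, E a b ∧ E b a :=
      fun a ha b hbb => ⟨(hdY b hbb a ha).2, (hdY b hbb a ha).1⟩
    refine sub Y' Y h locY' locY hdY' ?_
    rcases cover u₂ with h' | h' | h' | h' <;> tauto

theorem my_le2 {V : Type*} {E : V → V → Prop} {A B P₁ P₂ : Set V}
    (hbip : ∀ u v, E u v → (u ∈ A ∧ v ∈ B) ∨ (u ∈ B ∧ v ∈ A))
    (hABd : ∀ v : V, v ∈ A → v ∈ B → False)
    (hABc : ∀ v : V, v ∈ A ∨ v ∈ B)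
    (hPd : ∀ v : V, v ∈ P₁ → v ∈ P₂ → False)
    (hPc : ∀ v : V, v ∈ P₁ ∨ v ∈ P₂)
    (hcomp : ∀ u v, E u v → (u ∈ P₁ ∧ v ∈ P₁) ∨ (u ∈ P₂ ∧ v ∈ P₂))
    (h1 : ∀ u ∈ A ∩ P₁, ∀ v ∈ B ∩ P₁, E u v ∧ E v u)
    (h2 : ∀ u ∈ A ∩ P₂, ∀ v ∈ B ∩ P₂, E u v ∧ E v u)
    {k : ℕ} (hk : ∃ Γ : V → Fin k, IsBColoring E Γ) : k ≤ 2 := by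
  by_contra hk2
  push_neg at hk2
  obtain ⟨Γ, hb⟩ := hk
  set c₀ : Fin k := ⟨0, by omega⟩ with hc0
  set c₁ : Fin k := ⟨1, by omega⟩ with hc1
  set c₂ : Fin k := ⟨2, by omega⟩ with hc2
  have h01 : c₀ ≠ c₁ := Fin.ne_of_val_ne (by norm_num)
  have h02 : c₀ ≠ c₂ := Fin.ne_of_val_ne (by norm_num)
  have h12 : c₁ ≠ c₂ := Fin.ne_of_val_ne (by norm_num)
  obtain ⟨u₀, hg0, hb0⟩ := (hb.2 c₀).1
  obtain ⟨u₁, hg1, hb1⟩ := (hb.2 c₁).1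
  obtain ⟨u₂, hg2, hb2⟩ := (hb.2 c₂).1
  -- the four sides
  have cover : ∀ v : V, v ∈ A ∩ P₁ ∨ v ∈ B ∩ P₁ ∨ v ∈ A ∩ P₂ ∨ v ∈ B ∩ P₂ := by
    intro v
    rcases hABc v with h | h <;> rcases hPc v with h' | h' <;> tauto
  have locO : ∀ u t, E u t → ((u ∈ A → t ∈ B) ∧ (u ∈ B → t ∈ A) ∧
      (u ∈ P₁ → t ∈ P₁) ∧ (u ∈ P₂ → t ∈ P₂)) := by
    intro u t h
    rcases hbip u t h with ⟨e1, e2⟩ | ⟨e1, e2⟩ <;>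
      rcases hcomp u t h with ⟨e3, e4⟩ | ⟨e3, e4⟩ <;>
        refine ⟨fun hu => ?_, fun hu => ?_, fun hu => ?_, fun hu => ?_⟩ <;>
          first
            | assumption
            | exact (hABd _ e1 hu).elim
            | exact (hABd _ hu e1).elim
            | exact (hPd _ e3 hu).elim
            | exact (hPd _ hu e3).elim
  have loc1 : ∀ u t, E u t → u ∈ A ∩ P₁ → t ∈ B ∩ P₁ :=
    fun u t h hu => ⟨(locO u t h).1 hu.1, (locO u t h).2.2.1 hu.2⟩
  have loc2 : ∀ u t, E u t → u ∈ B ∩ P₁ → t ∈ A ∩ P₁ :=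
    fun u t h hu => ⟨(locO u t h).2.1 hu.1, (locO u t h).2.2.1 hu.2⟩
  have loc3 : ∀ u t, E u t → u ∈ A ∩ P₂ → t ∈ B ∩ P₂ :=
    fun u t h hu => ⟨(locO u t h).1 hu.1, (locO u t h).2.2.2 hu.2⟩
  have loc4 : ∀ u t, E u t → u ∈ B ∩ P₂ → t ∈ A ∩ P₂ :=
    fun u t h hu => ⟨(locO u t h).2.1 hu.1, (locO u t h).2.2.2 hu.2⟩
  have h1' : ∀ a ∈ B ∩ P₁, ∀ b ∈ A ∩ P₁, E a b ∧ E b a :=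
    fun a ha b hbb => ⟨(h1 b hbb a ha).2, (h1 b hbb a ha).1⟩
  have h2' : ∀ a ∈ B ∩ P₂, ∀ b ∈ A ∩ P₂, E a b ∧ E b a :=
    fun a ha b hbb => ⟨(h2 b hbb a ha).2, (h2 b hbb a ha).1⟩
  rcases cover u₀ with h | h | h | h
  · exact my_inner hb _ _ _ _ cover loc1 loc2 loc3 loc4 h1 h2
      h01 h02 h12 hg0 hb0 hg1 hb1 hg2 hb2 h
  · exact my_inner hb _ _ _ _ (fun v => by rcases cover v with h' | h' | h' | h' <;> tauto)
      loc2 loc1 loc3 loc4 h1' h2 h01 h02 h12 hg0 hb0 hg1 hb1 hg2 hb2 h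
  · exact my_inner hb _ _ _ _ (fun v => by rcases cover v with h' | h' | h' | h' <;> tauto)
      loc3 loc4 loc1 loc2 h2 h1 h01 h02 h12 hg0 hb0 hg1 hb1 hg2 hb2 h
  · exact my_inner hb _ _ _ _ (fun v => by rcases cover v with h' | h' | h' | h' <;> tauto)
      loc4 loc3 loc1 loc2 h2' h1 h01 h02 h12 hg0 hb0 hg1 hb1 hg2 hb2 h

theorem my_acyclic_of_indep {V : Type*} {E : V → V → Prop} {S : Set V}
    (h : ∀ u ∈ S, ∀ v ∈ S, ¬ E u v) : AcyclicSet E S := by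
  rintro ⟨n, c, hmem, hstep⟩
  exact h _ (hmem 0) _ (hmem (0 + 1)) (hstep 0)

theorem my_exists_ne {V : Type*} [Fintype V] {s : Set V} (h : 2 ≤ s.ncard) (x : V) :
    ∃ a ∈ s, a ≠ x := by
  obtain ⟨a, b, ha, hb, hab⟩ := (Set.one_lt_ncard_iff (Set.toFinite s)).mp (by omega)
  by_cases hax : a = x
  · exact ⟨b, hb, by rintro rfl; exact hab hax⟩
  · exact ⟨a, ha, hax⟩

theorem my_exists_pair {V : Type*} [Fintype V] {s : Set V} (h : 2 ≤ s.ncard) :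
    ∃ a ∈ s, ∃ b ∈ s, a ≠ b := by
  obtain ⟨a, b, ha, hb, hab⟩ := (Set.one_lt_ncard_iff (Set.toFinite s)).mp (by omega)
  exact ⟨a, ha, b, hb, hab⟩

theorem my_pairfun {V : Type*} (p q r s : V) (hpq : p ≠ q) (hrs : r ≠ s) :
    ∃ f : V → Bool, f p ≠ f q ∧ f r ≠ f s := by
  classical
  by_cases h1 : r = p
  · subst h1
    have hsp : s ≠ r := fun hh => hrs hh.symm
    refine ⟨fun v => if v = q ∨ v = s then true else false, ?_, ?_⟩ <;>
      simp_all [hpq, fun hh : r = s => hrs hh]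
  · by_cases h2 : s = q
    · subst h2
      refine ⟨fun v => if v = s then true else false, ?_, ?_⟩ <;> simp_all
    · have h1' : p ≠ r := fun hh => h1 hh.symm
      have h2' : s ≠ r := fun hh => hrs hh.symm
      refine ⟨fun v => if v = q ∨ v = r then true else false, ?_, ?_⟩ <;> simp_all

theorem my_exists3 {V : Type*} [Fintype V] {E : V → V → Prop} {A B P Q : Set V}
    (harc : ∀ u v, E u v → (u ∈ A ∧ v ∈ B) ∨ (u ∈ B ∧ v ∈ A))
    (hABd : ∀ v : V, v ∈ A → v ∈ B → False)
    (hABc : ∀ v : V, v ∈ A ∨ v ∈ B)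
    (hPQd : ∀ v : V, v ∈ P → v ∈ Q → False)
    (hPQc : ∀ v : V, v ∈ P ∨ v ∈ Q)
    (hdeg : ∀ v : V, 2 ≤ {t | E v t}.ncard ∧ 2 ≤ {t | E t v}.ncard)
    (hneQ : Q.Nonempty)
    (hcomp : ∀ u v, E u v → (u ∈ P ∧ v ∈ P) ∨ (u ∈ Q ∧ v ∈ Q))
    (hnc : ∃ x ∈ A ∩ P, ∃ y ∈ B ∩ P, ¬(E x y ∧ E y x)) :
    ∃ Γ : V → Fin 3, IsBColoring E Γ := by
  classical
  obtain ⟨x, ⟨hxA, hxP⟩, y, ⟨hyB, hyP⟩, hxy⟩ := hnc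
  have hxny : x ≠ y := fun h => hABd x hxA (h ▸ hyB)
  have noloop : ∀ v, ¬ E v v := by
    intro v h
    rcases harc v v h with ⟨e1, e2⟩ | ⟨e1, e2⟩ <;> exact hABd v ‹_› ‹_›
  have locO : ∀ u t, E u t → ((u ∈ A → t ∈ B) ∧ (u ∈ B → t ∈ A) ∧
      (u ∈ P → t ∈ P) ∧ (u ∈ Q → t ∈ Q)) := by
    intro u t h
    rcases harc u t h with ⟨e1, e2⟩ | ⟨e1, e2⟩ <;>
      rcases hcomp u t h with ⟨e3, e4⟩ | ⟨e3, e4⟩ <;>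
        refine ⟨fun hu => ?_, fun hu => ?_, fun hu => ?_, fun hu => ?_⟩ <;>
          first
            | assumption
            | exact (hABd _ e1 hu).elim
            | exact (hABd _ hu e1).elim
            | exact (hPQd _ e3 hu).elim
            | exact (hPQd _ hu e3).elim
  have locI : ∀ u t, E t u → ((u ∈ A → t ∈ B) ∧ (u ∈ B → t ∈ A) ∧
      (u ∈ P → t ∈ P) ∧ (u ∈ Q → t ∈ Q)) := by
    intro u t h
    rcases harc t u h with ⟨e1, e2⟩ | ⟨e1, e2⟩ <;>
      rcases hcomp t u h with ⟨e3, e4⟩ | ⟨e3, e4⟩ <;>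
        refine ⟨fun hu => ?_, fun hu => ?_, fun hu => ?_, fun hu => ?_⟩ <;>
          first
            | assumption
            | exact (hABd _ e2 hu).elim
            | exact (hABd _ hu e2).elim
            | exact (hPQd _ e4 hu).elim
            | exact (hPQd _ hu e4).elim
  -- a vertex in B ∩ Q
  obtain ⟨w, hwB, hwQ⟩ : ∃ w, w ∈ B ∧ w ∈ Q := by
    obtain ⟨v0, hv0Q⟩ := hneQ
    obtain ⟨t, ht⟩ : {t | E v0 t}.Nonempty :=
      Set.nonempty_of_ncard_ne_zero (by have := (hdeg v0).1; omega)
    rcases harc v0 t ht with ⟨e1, e2⟩ | ⟨e1, e2⟩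
    · exact ⟨t, e2, (locO v0 t ht).2.2.2 hv0Q⟩
    · exact ⟨v0, e1, hv0Q⟩
  -- out- and in-neighbours of w
  obtain ⟨p, hp, q, hq, hpq⟩ := my_exists_pair (hdeg w).1
  obtain ⟨r, hr, s, hs, hrs⟩ := my_exists_pair (hdeg w).2
  have hp' : E w p := hp
  have hq' : E w q := hq
  have hr' : E r w := hr
  have hs' : E s w := hs
  have hpA : p ∈ A := (locO w p hp').2.1 hwB
  have hpQ : p ∈ Q := (locO w p hp').2.2.2 hwQ
  have hqA : q ∈ A := (locO w q hq').2.1 hwB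
  have hqQ : q ∈ Q := (locO w q hq').2.2.2 hwQ
  have hrA : r ∈ A := (locI w r hr').2.1 hwB
  have hrQ : r ∈ Q := (locI w r hr').2.2.2 hwQ
  have hsA : s ∈ A := (locI w s hs').2.1 hwB
  have hsQ : s ∈ Q := (locI w s hs').2.2.2 hwQ
  obtain ⟨f, hfpq, hfrs⟩ := my_pairfun p q r s hpq hrs
  -- normalized out/in pairs of w with distinct f-values
  obtain ⟨p0, p1, hp0E, hp1E, hp0f, hp1f, hp0A, hp0Q, hp1A, hp1Q⟩ :
      ∃ p0 p1, E w p0 ∧ E w p1 ∧ f p0 = false ∧ f p1 = true ∧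
        p0 ∈ A ∧ p0 ∈ Q ∧ p1 ∈ A ∧ p1 ∈ Q := by
    rcases Bool.eq_false_or_eq_true (f p) with hfp | hfp <;>
      rcases Bool.eq_false_or_eq_true (f q) with hfq | hfq
    · exact absurd (hfp.trans hfq.symm) hfpq
    · exact ⟨q, p, hq', hp', hfq, hfp, hqA, hqQ, hpA, hpQ⟩
    · exact ⟨p, q, hp', hq', hfp, hfq, hpA, hpQ, hqA, hqQ⟩
    · exact absurd (hfp.trans hfq.symm) hfpq
  obtain ⟨r0, r1, hr0E, hr1E, hr0f, hr1f, hr0A, hr0Q, hr1A, hr1Q⟩ :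
      ∃ r0 r1, E r0 w ∧ E r1 w ∧ f r0 = false ∧ f r1 = true ∧
        r0 ∈ A ∧ r0 ∈ Q ∧ r1 ∈ A ∧ r1 ∈ Q := by
    rcases Bool.eq_false_or_eq_true (f r) with hfr | hfr <;>
      rcases Bool.eq_false_or_eq_true (f s) with hfs | hfs
    · exact absurd (hfr.trans hfs.symm) hfrs
    · exact ⟨s, r, hs', hr', hfs, hfr, hsA, hsQ, hrA, hrQ⟩
    · exact ⟨r, s, hr', hs', hfr, hfs, hrA, hrQ, hsA, hsQ⟩
    · exact absurd (hfr.trans hfs.symm) hfrs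
  -- special vertices in P
  obtain ⟨a1, ha1, ha1x⟩ := my_exists_ne (hdeg y).2 x
  have ha1' : E a1 y := ha1
  have ha1A : a1 ∈ A := (locI y a1 ha1').2.1 hyB
  have ha1P : a1 ∈ P := (locI y a1 ha1').2.2.1 hyP
  obtain ⟨b1, hb1, hb1y⟩ := my_exists_ne (hdeg a1).1 y
  have hb1' : E a1 b1 := hb1
  have hb1B : b1 ∈ B := (locO a1 b1 hb1').1 ha1A
  have hb1P : b1 ∈ P := (locO a1 b1 hb1').2.2.1 ha1P
  obtain ⟨a2, ha2, ha2x⟩ := my_exists_ne (hdeg y).1 x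
  have ha2' : E y a2 := ha2
  have ha2A : a2 ∈ A := (locO y a2 ha2').2.1 hyB
  have ha2P : a2 ∈ P := (locO y a2 ha2').2.2.1 hyP
  obtain ⟨b2, hb2, hb2y⟩ := my_exists_ne (hdeg a2).2 y
  have hb2' : E b2 a2 := hb2
  have hb2B : b2 ∈ B := (locI a2 b2 hb2').1 ha2A
  have hb2P : b2 ∈ P := (locI a2 b2 hb2').2.2.1 ha2P
  obtain ⟨e1, he1, he1y⟩ := my_exists_ne (hdeg x).2 y
  have he1' : E e1 x := he1
  have he1B : e1 ∈ B := (locI x e1 he1').1 hxA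
  have he1P : e1 ∈ P := (locI x e1 he1').2.2.1 hxP
  obtain ⟨d1, hd1, hd1x⟩ := my_exists_ne (hdeg e1).1 x
  have hd1' : E e1 d1 := hd1
  have hd1A : d1 ∈ A := (locO e1 d1 hd1').2.1 he1B
  have hd1P : d1 ∈ P := (locO e1 d1 hd1').2.2.1 he1P
  obtain ⟨e2, he2, he2y⟩ := my_exists_ne (hdeg x).1 y
  have he2' : E x e2 := he2
  have he2B : e2 ∈ B := (locO x e2 he2').1 hxA
  have he2P : e2 ∈ P := (locO x e2 he2').2.2.1 hxP
  obtain ⟨d2, hd2, hd2x⟩ := my_exists_ne (hdeg e2).2 x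
  have hd2' : E d2 e2 := hd2
  have hd2A : d2 ∈ A := (locI e2 d2 hd2').2.1 he2B
  have hd2P : d2 ∈ P := (locI e2 d2 hd2').2.2.1 he2P
  -- the coloring
  refine ⟨fun v => if v = x ∨ v = y ∨ (v ∈ B ∧ v ∈ Q) then 2
    else if v ∈ A ∧ (v ∈ P ∨ f v = false) then 0 else 1, ?_, ?_⟩
  all_goals
    set Γ : V → Fin 3 := fun v => if v = x ∨ v = y ∨ (v ∈ B ∧ v ∈ Q) then 2
      else if v ∈ A ∧ (v ∈ P ∨ f v = false) then 0 else 1 with hΓdef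
  all_goals
    have Γdef : ∀ v, Γ v = if v = x ∨ v = y ∨ (v ∈ B ∧ v ∈ Q) then 2
      else if v ∈ A ∧ (v ∈ P ∨ f v = false) then 0 else 1 := fun v => by rw [hΓdef]
    have hΓx : Γ x = 2 := by rw [Γdef x, if_pos (Or.inl rfl)]
    have hΓy : Γ y = 2 := by rw [Γdef y, if_pos (Or.inr (Or.inl rfl))]
    have hΓBQ : ∀ v, v ∈ B → v ∈ Q → Γ v = 2 := fun v h h' => by
      rw [Γdef v, if_pos (Or.inr (Or.inr ⟨h, h'⟩))]
    have hΓAP : ∀ v, v ∈ A → v ∈ P → v ≠ x → Γ v = 0 := by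
      intro v hA hP hne
      rw [Γdef v, if_neg ?_, if_pos ⟨hA, Or.inl hP⟩]
      rintro (rfl | rfl | ⟨hB, _⟩)
      · exact hne rfl
      · exact hABd _ hA hyB
      · exact hABd _ hA hB
    have hΓAQ0 : ∀ v, v ∈ A → v ∈ Q → f v = false → Γ v = 0 := by
      intro v hA hQ hf
      rw [Γdef v, if_neg ?_, if_pos ⟨hA, Or.inr hf⟩]
      rintro (rfl | rfl | ⟨hB, _⟩)
      · exact hPQd _ hxP hQ
      · exact hABd _ hA hyB
      · exact hABd _ hA hB
    have hΓBP : ∀ v, v ∈ B → v ∈ P → v ≠ y → Γ v = 1 := by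
      intro v hB hP hne
      rw [Γdef v, if_neg ?_, if_neg ?_]
      · rintro ⟨hA, _⟩; exact hABd _ hA hB
      · rintro (rfl | rfl | ⟨_, hQ⟩)
        · exact hABd _ hxA hB
        · exact hne rfl
        · exact hPQd _ hP hQ
    have hΓAQ1 : ∀ v, v ∈ A → v ∈ Q → f v = true → Γ v = 1 := by
      intro v hA hQ hf
      rw [Γdef v, if_neg ?_, if_neg ?_]
      · rintro ⟨_, hP | hf'⟩
        · exact hPQd _ hP hQ
        · exact absurd (hf.symm.trans hf') (by decide)
      · rintro (rfl | rfl | ⟨hB, _⟩)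
        · exact hPQd _ hxP hQ
        · exact hABd _ hA hyB
        · exact hABd _ hA hB
    have hI0 : ∀ v, Γ v = 0 → v ∈ A := by
      intro v hv
      rw [Γdef v] at hv
      by_cases hc1 : v = x ∨ v = y ∨ (v ∈ B ∧ v ∈ Q)
      · rw [if_pos hc1] at hv; exact absurd hv (by decide)
      · rw [if_neg hc1] at hv
        by_cases hc2 : v ∈ A ∧ (v ∈ P ∨ f v = false)
        · exact hc2.1
        · rw [if_neg hc2] at hv; exact absurd hv (by decide)
    have hI1 : ∀ v, Γ v = 1 → (v ∈ B ∧ v ∈ P) ∨ (v ∈ A ∧ v ∈ Q) := by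
      intro v hv
      rw [Γdef v] at hv
      by_cases hc1 : v = x ∨ v = y ∨ (v ∈ B ∧ v ∈ Q)
      · rw [if_pos hc1] at hv; exact absurd hv (by decide)
      · rw [if_neg hc1] at hv
        by_cases hc2 : v ∈ A ∧ (v ∈ P ∨ f v = false)
        · rw [if_pos hc2] at hv; exact absurd hv (by decide)
        · rcases hABc v with hA | hB
          · rcases hPQc v with hP | hQ
            · exact absurd ⟨hA, Or.inl hP⟩ hc2
            · exact Or.inr ⟨hA, hQ⟩
          · rcases hPQc v with hP | hQ
            · exact Or.inl ⟨hB, hP⟩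
            · exact absurd (Or.inr (Or.inr ⟨hB, hQ⟩)) hc1
    have hI2 : ∀ v, Γ v = 2 → v = x ∨ v = y ∨ (v ∈ B ∧ v ∈ Q) := by
      intro v hv
      rw [Γdef v] at hv
      by_cases hc1 : v = x ∨ v = y ∨ (v ∈ B ∧ v ∈ Q)
      · exact hc1
      · rw [if_neg hc1] at hv
        by_cases hc2 : v ∈ A ∧ (v ∈ P ∨ f v = false)
        · rw [if_pos hc2] at hv; exact absurd hv (by decide)
        · rw [if_neg hc2] at hv; exact absurd hv (by decide)
    skip
  -- acyclicity
  · intro i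
    fin_cases i
    · refine my_acyclic_of_indep fun u hu v hv huv => ?_
      have huA := hI0 u hu
      have hvA := hI0 v hv
      rcases harc u v huv with ⟨e1, e2⟩ | ⟨e1, e2⟩
      · exact hABd _ hvA e2
      · exact hABd _ huA e1
    · refine my_acyclic_of_indep fun u hu v hv huv => ?_
      have hu' := hI1 u hu
      have hv' := hI1 v hv
      rcases hcomp u v huv with ⟨e3, e4⟩ | ⟨e3, e4⟩
      · have huB : u ∈ B := by
          rcases hu' with ⟨hB, _⟩ | ⟨_, hQ⟩
          · exact hB
          · exact (hPQd _ e3 hQ).elim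
        have hvB : v ∈ B := by
          rcases hv' with ⟨hB, _⟩ | ⟨_, hQ⟩
          · exact hB
          · exact (hPQd _ e4 hQ).elim
        rcases harc u v huv with ⟨e1, _⟩ | ⟨_, e2⟩
        · exact hABd _ e1 huB
        · exact hABd _ e2 hvB
      · have huA : u ∈ A := by
          rcases hu' with ⟨_, hP⟩ | ⟨hA, _⟩
          · exact (hPQd _ hP e3).elim
          · exact hA
        have hvA : v ∈ A := by
          rcases hv' with ⟨_, hP⟩ | ⟨hA, _⟩
          · exact (hPQd _ hP e4).elim
          · exact hA
        rcases harc u v huv with ⟨_, e2⟩ | ⟨e1, _⟩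
        · exact hABd _ hvA e2
        · exact hABd _ huA e1
    · rintro ⟨n, c, hmem, hstep⟩
      have hxyv : ∀ i, c i = x ∨ c i = y := by
        intro i
        rcases hI2 _ (hmem i) with h | h | ⟨hB, hQ⟩
        · exact Or.inl h
        · exact Or.inr h
        · exfalso
          have harc' := hstep i
          have hA : c (i + 1) ∈ A := (locO _ _ harc').2.1 hB
          have hQ' : c (i + 1) ∈ Q := (locO _ _ harc').2.2.2 hQ
          rcases hI2 _ (hmem (i + 1)) with h | h | ⟨hB', _⟩
          · exact hPQd x hxP (h ▸ hQ')
          · exact hABd _ (h ▸ hA) hyB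
          · exact hABd _ hA hB'
      have hstep' : ∀ i : Fin (n + 1),
          (c i = x ∧ c (i + 1) = y ∧ E x y) ∨ (c i = y ∧ c (i + 1) = x ∧ E y x) := by
        intro i
        have h := hstep i
        rcases hxyv i with h1 | h1 <;> rcases hxyv (i + 1) with h2 | h2 <;>
          rw [h1, h2] at h
        · exact absurd h (noloop x)
        · exact Or.inl ⟨h1, h2, h⟩
        · exact Or.inr ⟨h1, h2, h⟩
        · exact absurd h (noloop y)
      rcases hstep' 0 with ⟨h1, h2, hexy⟩ | ⟨h1, h2, heyx⟩
      · rcases hstep' (0 + 1) with ⟨h3, _, _⟩ | ⟨_, _, h6⟩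
        · exact hxny (h3.symm.trans h2)
        · exact hxy ⟨hexy, h6⟩
      · rcases hstep' (0 + 1) with ⟨_, _, h6⟩ | ⟨h3, _, _⟩
        · exact hxy ⟨h6, heyx⟩
        · exact hxny (h2.symm.trans h3)
  -- b-vertices
  · intro i
    fin_cases i
    · constructor
      · refine ⟨a1, hΓAP a1 ha1A ha1P ha1x, ?_⟩
        intro j hj
        rw [hΓAP a1 ha1A ha1P ha1x] at hj
        fin_cases j
        · exact absurd rfl hj
        · exact ⟨b1, hb1', hΓBP b1 hb1B hb1P hb1y⟩
        · exact ⟨y, ha1', hΓy⟩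
      · refine ⟨a2, hΓAP a2 ha2A ha2P ha2x, ?_⟩
        intro j hj
        rw [hΓAP a2 ha2A ha2P ha2x] at hj
        fin_cases j
        · exact absurd rfl hj
        · exact ⟨b2, hb2', hΓBP b2 hb2B hb2P hb2y⟩
        · exact ⟨y, ha2', hΓy⟩
    · constructor
      · refine ⟨e1, hΓBP e1 he1B he1P he1y, ?_⟩
        intro j hj
        rw [hΓBP e1 he1B he1P he1y] at hj
        fin_cases j
        · exact ⟨d1, hd1', hΓAP d1 hd1A hd1P hd1x⟩
        · exact absurd rfl hj
        · exact ⟨x, he1', hΓx⟩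
      · refine ⟨e2, hΓBP e2 he2B he2P he2y, ?_⟩
        intro j hj
        rw [hΓBP e2 he2B he2P he2y] at hj
        fin_cases j
        · exact ⟨d2, hd2', hΓAP d2 hd2A hd2P hd2x⟩
        · exact absurd rfl hj
        · exact ⟨x, he2', hΓx⟩
    · constructor
      · refine ⟨w, hΓBQ w hwB hwQ, ?_⟩
        intro j hj
        rw [hΓBQ w hwB hwQ] at hj
        fin_cases j
        · exact ⟨p0, hp0E, hΓAQ0 p0 hp0A hp0Q hp0f⟩
        · exact ⟨p1, hp1E, hΓAQ1 p1 hp1A hp1Q hp1f⟩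
        · exact absurd rfl hj
      · refine ⟨w, hΓBQ w hwB hwQ, ?_⟩
        intro j hj
        rw [hΓBQ w hwB hwQ] at hj
        fin_cases j
        · exact ⟨r0, hr0E, hΓAQ0 r0 hr0A hr0Q hr0f⟩
        · exact ⟨r1, hr1E, hΓAQ1 r1 hr1A hr1Q hr1f⟩
        · exact absurd rfl hj

theorem my_bdd {V : Type*} [Fintype V] (E : V → V → Prop) :
    BddAbove {k | ∃ Γ : V → Fin k, IsBColoring E Γ} := by
  refine ⟨Fintype.card V, fun k hk => ?_⟩
  obtain ⟨Γ, hb⟩ := hk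
  have hsurj : Function.Surjective Γ := fun i => by
    obtain ⟨u, hu, _⟩ := (hb.2 i).1
    exact ⟨u, hu⟩
  simpa using Fintype.card_le_of_surjective Γ hsurj


/-- a disconnected bipartite digraph with δ ≥ 2 and exactly two weakly
connected components D₁, D₂: dib > 2 iff at least one component is not a complete
symmetric bipartite digraph; if both are complete symmetric, dib = 2. -/
theorem stmt6 {V : Type*} [Fintype V] (E : V → V → Prop) (A B : Set V)
    (hbip : IsBipartition E A B) (hdeg : ∀ v, 2 ≤ outDeg E v ∧ 2 ≤ inDeg E v)
    (P₁ P₂ : Set V) (hdisj : Disjoint P₁ P₂) (hcover : P₁ ∪ P₂ = Set.univ)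
    (hne₁ : P₁.Nonempty) (hne₂ : P₂.Nonempty)
    (hcomp : ∀ u v, E u v → (u ∈ P₁ ∧ v ∈ P₁) ∨ (u ∈ P₂ ∧ v ∈ P₂))
    (hwc₁ : WeaklyConnectedOn E P₁) (hwc₂ : WeaklyConnectedOn E P₂) :
    (¬ ((∀ u ∈ A ∩ P₁, ∀ v ∈ B ∩ P₁, E u v ∧ E v u) ∧
        (∀ u ∈ A ∩ P₂, ∀ v ∈ B ∩ P₂, E u v ∧ E v u)) → 2 < dib E) ∧
    (((∀ u ∈ A ∩ P₁, ∀ v ∈ B ∩ P₁, E u v ∧ E v u) ∧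
        (∀ u ∈ A ∩ P₂, ∀ v ∈ B ∩ P₂, E u v ∧ E v u)) → dib E = 2) := by
  obtain ⟨hAB, hABu, harc⟩ := hbip
  have hABd : ∀ v : V, v ∈ A → v ∈ B → False :=
    fun v h h' => Set.disjoint_left.mp hAB h h'
  have hABc : ∀ v : V, v ∈ A ∨ v ∈ B := fun v => by
    have : v ∈ A ∪ B := hABu ▸ Set.mem_univ v
    exact this
  have hPQd : ∀ v : V, v ∈ P₁ → v ∈ P₂ → False :=
    fun v h h' => Set.disjoint_left.mp hdisj h h'
  have hPQc : ∀ v : V, v ∈ P₁ ∨ v ∈ P₂ := fun v => by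
    have : v ∈ P₁ ∪ P₂ := hcover ▸ Set.mem_univ v
    exact this
  have hdeg' : ∀ v : V, 2 ≤ {t | E v t}.ncard ∧ 2 ≤ {t | E t v}.ncard := hdeg
  constructor
  · intro h
    have h3 : 3 ∈ {k | ∃ Γ : V → Fin k, IsBColoring E Γ} := by
      rcases not_and_or.mp h with h1 | h1
      · push_neg at h1
        obtain ⟨xx, hxx, yy, hyy, hxy⟩ := h1
        exact my_exists3 harc hABd hABc hPQd hPQc hdeg' hne₂ hcomp
          ⟨xx, hxx, yy, hyy, fun hh => hxy hh.1 hh.2⟩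
      · push_neg at h1
        have hPQd' : ∀ v : V, v ∈ P₂ → v ∈ P₁ → False := fun v h h' => hPQd v h' h
        have hPQc' : ∀ v : V, v ∈ P₂ ∨ v ∈ P₁ := fun v => (hPQc v).symm
        have hcomp' : ∀ u v, E u v → (u ∈ P₂ ∧ v ∈ P₂) ∨ (u ∈ P₁ ∧ v ∈ P₁) :=
          fun u v hh => (hcomp u v hh).symm
        obtain ⟨xx, hxx, yy, hyy, hxy⟩ := h1
        exact my_exists3 harc hABd hABc hPQd' hPQc' hdeg' hne₁ hcomp'
          ⟨xx, hxx, yy, hyy, fun hh => hxy hh.1 hh.2⟩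
    have h3' := le_csSup (my_bdd E) h3
    unfold dib
    omega
  · rintro ⟨h1, h2⟩
    have hout1 : ∀ v : V, ∃ t, E v t := fun v =>
      Set.nonempty_of_ncard_ne_zero (s := {t | E v t}) (by have := (hdeg' v).1; omega)
    have hin1 : ∀ v : V, ∃ t, E t v := fun v =>
      Set.nonempty_of_ncard_ne_zero (s := {t | E t v}) (by have := (hdeg' v).2; omega)
    have hAne : ∃ a, a ∈ A := by
      obtain ⟨v, _⟩ := hne₁
      obtain ⟨t, ht⟩ := hout1 v
      rcases harc v t ht with ⟨e1, _⟩ | ⟨_, e2⟩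
      · exact ⟨v, e1⟩
      · exact ⟨t, e2⟩
    have hBne : ∃ b, b ∈ B := by
      obtain ⟨v, _⟩ := hne₁
      obtain ⟨t, ht⟩ := hout1 v
      rcases harc v t ht with ⟨_, e2⟩ | ⟨e1, _⟩
      · exact ⟨t, e2⟩
      · exact ⟨v, e1⟩
    have h2mem : 2 ∈ {k | ∃ Γ : V → Fin k, IsBColoring E Γ} := by
      classical
      refine ⟨fun v => if v ∈ A then 0 else 1, ?_, ?_⟩
      all_goals
        set Γ : V → Fin 2 := fun v => if v ∈ A then 0 else 1 with hΓdef
        have hΓA : ∀ v, v ∈ A → Γ v = 0 := fun v h => by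
          simp only [hΓdef]; rw [if_pos h]
        have hΓB : ∀ v, v ∈ B → Γ v = 1 := fun v h => by
          simp only [hΓdef]; rw [if_neg (fun hA => hABd v hA h)]
        have hI0 : ∀ v, Γ v = 0 → v ∈ A := by
          intro v hv
          simp only [hΓdef] at hv
          by_cases hA : v ∈ A
          · exact hA
          · rw [if_neg hA] at hv; exact absurd hv (by decide)
        have hI1 : ∀ v, Γ v = 1 → v ∈ B := by
          intro v hv
          simp only [hΓdef] at hv
          by_cases hA : v ∈ A
          · rw [if_pos hA] at hv; exact absurd hv (by decide)
          · rcases hABc v with h | h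
            · exact absurd h hA
            · exact h
      · intro i
        fin_cases i
        · refine my_acyclic_of_indep fun u hu v hv huv => ?_
          rcases harc u v huv with ⟨_, e2⟩ | ⟨e1, _⟩
          · exact hABd _ (hI0 v hv) e2
          · exact hABd _ (hI0 u hu) e1
        · refine my_acyclic_of_indep fun u hu v hv huv => ?_
          rcases harc u v huv with ⟨e1, _⟩ | ⟨_, e2⟩
          · exact hABd _ e1 (hI1 u hu)
          · exact hABd _ e2 (hI1 v hv)
      · intro i
        fin_cases i
        · obtain ⟨a, ha⟩ := hAne
          refine ⟨⟨a, hΓA a ha, ?_⟩, ⟨a, hΓA a ha, ?_⟩⟩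
          · intro j hj
            rw [hΓA a ha] at hj
            fin_cases j
            · exact absurd rfl hj
            · obtain ⟨t, ht⟩ := hout1 a
              rcases harc a t ht with ⟨_, e2⟩ | ⟨e1, _⟩
              · exact ⟨t, ht, hΓB t e2⟩
              · exact absurd e1 (fun hh => hABd a ha hh)
          · intro j hj
            rw [hΓA a ha] at hj
            fin_cases j
            · exact absurd rfl hj
            · obtain ⟨t, ht⟩ := hin1 a
              rcases harc t a ht with ⟨e1, e2⟩ | ⟨e1, e2⟩
              · exact absurd e2 (fun hh => hABd a ha hh)
              · exact ⟨t, ht, hΓB t e1⟩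
        · obtain ⟨b, hbb⟩ := hBne
          refine ⟨⟨b, hΓB b hbb, ?_⟩, ⟨b, hΓB b hbb, ?_⟩⟩
          · intro j hj
            rw [hΓB b hbb] at hj
            fin_cases j
            · obtain ⟨t, ht⟩ := hout1 b
              rcases harc b t ht with ⟨e1, e2⟩ | ⟨e1, e2⟩
              · exact absurd e1 (fun hh => hABd b hh hbb)
              · exact ⟨t, ht, hΓA t e2⟩
            · exact absurd rfl hj
          · intro j hj
            rw [hΓB b hbb] at hj
            fin_cases j
            · obtain ⟨t, ht⟩ := hin1 b
              rcases harc t b ht with ⟨e1, e2⟩ | ⟨e1, e2⟩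
              · exact ⟨t, ht, hΓA t e1⟩
              · exact absurd e2 (fun hh => hABd b hh hbb)
            · exact absurd rfl hj
    have hub : ∀ k ∈ {k | ∃ Γ : V → Fin k, IsBColoring E Γ}, k ≤ 2 :=
      fun k hk => my_le2 harc hABd hABc hPQd hPQc hcomp h1 h2 hk
    unfold dib
    exact le_antisymm (csSup_le ⟨2, h2mem⟩ hub) (le_csSup ⟨2, fun k hk => hub k hk⟩ h2mem)
end

section
/- Let D = (A,B) be a weakly connected bipartite digraph with δ(D) ≥ 2. If dib(D) > 2, then A ⊆ ⋃_{v∈B} N̄∪(v) or B ⊆ ⋃_{v∈A} N̄∪(v), where N̄∪(v) is the set of vertices u ≠ v such that vu ∉ E(D) or uv ∉ E(D). -/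
open Classical

/-- a weakly connected bipartite digraph with δ ≥ 2 and dib > 2 satisfies
A ⊆ ⋃_{v∈B} N̄∪(v) or B ⊆ ⋃_{v∈A} N̄∪(v). -/
theorem stmt7 {V : Type*} [Fintype V] (E : V → V → Prop) (A B : Set V)
    (hbip : IsBipartition E A B) (hconn : WeaklyConnected E)
    (hdeg : ∀ v, 2 ≤ outDeg E v ∧ 2 ≤ inDeg E v)
    (hdib : 2 < dib E) :
    A ⊆ ⋃ v ∈ B, {u | u ≠ v ∧ (¬ E v u ∨ ¬ E u v)} ∨
    B ⊆ ⋃ v ∈ A, {u | u ≠ v ∧ (¬ E v u ∨ ¬ E u v)} := by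
  by_contra hcon
  push_neg at hcon
  obtain ⟨hA, hB⟩ := hcon
  rw [Set.not_subset] at hA hB
  obtain ⟨a, haA, haU⟩ := hA
  obtain ⟨b, hbB, hbU⟩ := hB
  obtain ⟨hdisj, hcov, harcs⟩ := hbip
  have hda : ∀ v ∈ B, E v a ∧ E a v := by
    intro v hv
    by_contra h
    exact haU (Set.mem_biUnion hv ⟨hdisj.ne_of_mem haA hv, by tauto⟩)
  have hdb : ∀ v ∈ A, E v b ∧ E b v := by
    intro v hv
    by_contra h
    exact hbU (Set.mem_biUnion hv ⟨(hdisj.ne_of_mem hv hbB).symm, by tauto⟩)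
  -- extract a b-coloring with dib E colors
  have hbdd : BddAbove {k | ∃ Γ : V → Fin k, IsBColoring E Γ} := by
    refine ⟨Fintype.card V, ?_⟩
    rintro k ⟨Γ, hΓ⟩
    have hsurj : Function.Surjective Γ := by
      intro i
      obtain ⟨⟨u, hu, _⟩, _⟩ := hΓ.2 i
      exact ⟨u, hu⟩
    simpa using Fintype.card_le_of_surjective Γ hsurj
  have hne : Set.Nonempty {k | ∃ Γ : V → Fin k, IsBColoring E Γ} := by
    by_contra h
    rw [Set.not_nonempty_iff_eq_empty] at h
    have h0 : dib E = 0 := by rw [dib, h]; exact csSup_empty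
    omega
  have hmem : ∃ Γ : V → Fin (dib E), IsBColoring E Γ := Nat.sSup_mem hne hbdd
  obtain ⟨Γ, hacyc, hbv⟩ := hmem
  -- the color class of a is inside A
  have hclassA : ∀ w, Γ w = Γ a → w ∈ A := by
    intro w hw
    by_contra hwA
    have hwB : w ∈ B := by
      have h := Set.mem_univ w
      rw [← hcov] at h
      exact h.resolve_left hwA
    obtain ⟨h1, h2⟩ := hda w hwB
    refine hacyc (Γ a) ⟨1, ![a, w], ?_, ?_⟩
    · intro i; fin_cases i <;> simp [hw]
    · intro i; fin_cases i <;> simpa using by assumption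
  have hclassB : ∀ w, Γ w = Γ b → w ∈ B := by
    intro w hw
    by_contra hwB
    have hwA : w ∈ A := by
      have h := Set.mem_univ w
      rw [← hcov] at h
      exact h.resolve_right hwB
    obtain ⟨h1, h2⟩ := hdb w hwA
    refine hacyc (Γ b) ⟨1, ![b, w], ?_, ?_⟩
    · intro i; fin_cases i <;> simp [hw]
    · intro i; fin_cases i <;> simpa using by assumption
  have hΓab : Γ a ≠ Γ b := by
    intro h
    exact Set.disjoint_left.mp hdisj (hclassA b h.symm) hbB
  -- find a third color
  obtain ⟨j, hja, hjb⟩ : ∃ j : Fin (dib E), j ≠ Γ a ∧ j ≠ Γ b := by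
    by_contra h
    push_neg at h
    have hsub : (Finset.univ : Finset (Fin (dib E))) ⊆ {Γ a, Γ b} := by
      intro j _
      by_cases h1 : j = Γ a
      · simp [h1]
      · simp [h j h1]
    have hcard := Finset.card_le_card hsub
    have h2 : ({Γ a, Γ b} : Finset (Fin (dib E))).card ≤ 2 :=
      (Finset.card_insert_le _ _).trans (by simp)
    simp [Finset.card_univ] at hcard
    omega
  obtain ⟨⟨u, huj, hplus⟩, -⟩ := hbv j
  obtain ⟨w1, hew1, hw1⟩ := hplus (Γ a) (by rw [huj]; exact Ne.symm hja)
  obtain ⟨w2, hew2, hw2⟩ := hplus (Γ b) (by rw [huj]; exact Ne.symm hjb)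
  have hw1A : w1 ∈ A := hclassA w1 hw1
  have hw2B : w2 ∈ B := hclassB w2 hw2
  rcases harcs u w1 hew1 with ⟨_, hw1B⟩ | ⟨huB, _⟩
  · exact Set.disjoint_left.mp hdisj hw1A hw1B
  · rcases harcs u w2 hew2 with ⟨huA, _⟩ | ⟨_, hw2A⟩
    · exact Set.disjoint_left.mp hdisj huA huB
    · exact Set.disjoint_left.mp hdisj hw2A hw2B
end

section
/- Let D be a simple (digon-free) bipartite digraph with δ(D) ≥ 2. Then dib(D) ≥ 3. -/
open Classical

/-!
Every colour class used lies in one side of the bipartition plus at most one further vertex `x`.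
Such a set is acyclic in an oriented graph: a directed cycle through `x` would come back to `x`
after two steps, i.e. through a digon.

If one side contains a *fork* (two vertices with a common out-neighbour `b` and distinct further
out-neighbours `t₁, t₂ ≠ b` which have in-neighbours outside the pair), in `E` or in the reverse
digraph, a 3-b-colouring is written down around it. Otherwise any two vertices with a common
out-neighbour are out-twins (have the same out-neighbourhood), and dually; then any directed path
`a₀ → x₁ → y₁ → x₂` gives the 3-b-colouring with classes `(A \ {a₀, y₁}) ∪ {x₁}`,
`{a₀, y₁, x₂}` and `B \ {x₁, x₂}`.
-/

section

variable {V : Type*} {E : V → V → Prop} {A B : Set V}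

theorem mem_of_one_lt_ncard_of_subset_pair {α : Type*} {S : Set α} {a b : α}
    (h : 1 < S.ncard) (hS : S ⊆ {a, b}) : a ∈ S := by
  obtain ⟨c, hc, hcb⟩ := Set.exists_ne_of_one_lt_ncard h b
  rcases hS hc with rfl | rfl
  exacts [hc, absurd rfl hcb]

theorem exists_mem_ne_mem_ne_of_one_lt_ncard {α : Type*} {S : Set α} (h : 1 < S.ncard) {t₁ t₂ : α}
    (ht : t₁ ≠ t₂) : ∃ w₁ ∈ S, ∃ w₂ ∈ S, w₁ ≠ w₂ ∧ w₁ ≠ t₁ ∧ w₂ ≠ t₂ := by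
  obtain ⟨w₂, hw₂, hw₂t₂⟩ := Set.exists_ne_of_one_lt_ncard h t₂
  obtain ⟨w₁, hw₁, hw₁w₂⟩ := Set.exists_ne_of_one_lt_ncard h w₂
  by_cases hw₁t₁ : w₁ = t₁
  · subst hw₁t₁
    exact ⟨w₂, hw₂, w₁, hw₁, hw₁w₂.symm, hw₁w₂.symm, ht⟩
  · exact ⟨w₁, hw₁, w₂, hw₂, hw₁w₂, hw₁t₁, hw₂t₂⟩

theorem exists_adj_ne_of_two_le_outDeg {v : V} (h : 2 ≤ outDeg E v) (x : V) :
    ∃ w, E v w ∧ w ≠ x :=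
  Set.exists_ne_of_one_lt_ncard h x

theorem exists_adj_ne_of_two_le_inDeg {v : V} (h : 2 ≤ inDeg E v) (x : V) :
    ∃ w, E w v ∧ w ≠ x :=
  Set.exists_ne_of_one_lt_ncard h x

theorem SimpleDigraph'.flip (h : SimpleDigraph' E) : SimpleDigraph' (flip E) :=
  fun u v huv hvu => h v u huv hvu

theorem SimpleDigraph'.irrefl (h : SimpleDigraph' E) (v : V) : ¬E v v :=
  fun hv => h v v hv hv

theorem acyclicSet_of_subset_insert (hE : SimpleDigraph' E) {S T : Set V} {x : V}
    (hT : ∀ u ∈ T, ∀ v ∈ T, ¬E u v) (hS : S ⊆ insert x T) : AcyclicSet E S := by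
  rintro ⟨n, c, hc, harc⟩
  have hx : ∀ i, c i = x ∨ c (i + 1) = x := fun i => by
    by_contra! h
    exact hT _ ((hS (hc i)).resolve_left h.1) _ ((hS (hc (i + 1))).resolve_left h.2) (harc i)
  obtain ⟨i, hi⟩ : ∃ i, c i = x := (hx 0).elim (⟨0, ·⟩) (⟨0 + 1, ·⟩)
  have hxc : E x (c (i + 1)) := hi ▸ harc i
  have hnext : c (i + 1) ≠ x := fun h => hE.irrefl x (h ▸ hxc)
  have hcx : E (c (i + 1)) x := (hx (i + 1)).resolve_left hnext ▸ harc (i + 1)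
  exact hE _ _ hxc hcx

theorem AcyclicSet.of_flip {S : Set V} (h : AcyclicSet (flip E) S) : AcyclicSet E S := by
  rintro ⟨n, c, hc, harc⟩
  refine h ⟨n, fun i => c (-i), fun i => hc _, fun i => ?_⟩
  have hi : -(i + 1) + 1 = -i := by rw [neg_add, neg_add_cancel_right]
  have := harc (-(i + 1))
  rwa [hi] at this

theorem IsBColoring.of_flip {k : ℕ} {Γ : V → Fin k} (h : IsBColoring (flip E) Γ) :
    IsBColoring E Γ :=
  ⟨fun i => (h.1 i).of_flip, fun i => ⟨(h.2 i).2, (h.2 i).1⟩⟩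

theorem IsBColoring.le_dib [Finite V] {k : ℕ} {Γ : V → Fin k} (h : IsBColoring E Γ) :
    k ≤ dib E := by
  refine le_csSup ⟨Nat.card V, ?_⟩ ⟨Γ, h⟩
  rintro m ⟨Γ', hΓ'⟩
  choose f hf _ using fun i => (hΓ'.2 i).1
  simpa using Nat.card_le_card_of_injective f fun i j hij => by rw [← hf i, ← hf j, hij]

theorem isBPlus_of_three {Γ : V → Fin 3} {u w₁ w₂ : V} {i j k : Fin 3} (h₁ : E u w₁)
    (h₂ : E u w₂) (hu : Γ u = i) (hw₁ : Γ w₁ = j) (hw₂ : Γ w₂ = k)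
    (hijk : i ≠ j ∧ i ≠ k ∧ j ≠ k) : IsBPlus E Γ u := by
  have key : ∀ i j k l : Fin 3, i ≠ j ∧ i ≠ k ∧ j ≠ k → l ≠ i → l = j ∨ l = k := by decide
  intro l hl
  rcases key i j k l hijk (hu ▸ hl) with rfl | rfl
  exacts [⟨w₁, h₁, hw₁⟩, ⟨w₂, h₂, hw₂⟩]

theorem isBMinus_of_three {Γ : V → Fin 3} {u w₁ w₂ : V} {i j k : Fin 3} (h₁ : E w₁ u)
    (h₂ : E w₂ u) (hu : Γ u = i) (hw₁ : Γ w₁ = j) (hw₂ : Γ w₂ = k)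
    (hijk : i ≠ j ∧ i ≠ k ∧ j ≠ k) : IsBMinus E Γ u :=
  isBPlus_of_three (E := flip E) h₁ h₂ hu hw₁ hw₂ hijk

namespace IsBipartition

theorem symm (h : IsBipartition E A B) : IsBipartition E B A :=
  ⟨h.1.symm, by rw [Set.union_comm, h.2.1], fun u v huv => (h.2.2 u v huv).symm⟩

protected theorem flip (h : IsBipartition E A B) : IsBipartition (flip E) A B :=
  ⟨h.1, h.2.1, fun u v huv => (h.2.2 v u huv).symm.imp And.symm And.symm⟩

theorem notMem_left {v : V} (h : IsBipartition E A B) (hv : v ∈ B) : v ∉ A :=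
  Set.disjoint_right.mp h.1 hv

theorem mem_right_of_notMem {v : V} (h : IsBipartition E A B) (hv : v ∉ A) : v ∈ B :=
  (h.2.1.symm ▸ Set.mem_univ v : v ∈ A ∪ B).resolve_left hv

theorem mem_right_of_adj {u v : V} (h : IsBipartition E A B) (huv : E u v) (hu : u ∈ A) :
    v ∈ B :=
  (h.2.2 u v huv).elim And.right fun h' => absurd hu (h.notMem_left h'.1)

theorem mem_left_of_adj {u v : V} (h : IsBipartition E A B) (huv : E u v) (hv : v ∈ B) :
    u ∈ A :=
  h.symm.flip.mem_right_of_adj huv hv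

theorem not_adj {u v : V} (h : IsBipartition E A B) (hu : u ∈ A) (hv : v ∈ A) : ¬E u v :=
  fun huv => h.notMem_left (h.mem_right_of_adj huv hu) hv

theorem exists_adj_mem_right_ne {v : V} (h : IsBipartition E A B) (hv : v ∈ A)
    (hdeg : 2 ≤ outDeg E v) (x : V) : ∃ w ∈ B, E v w ∧ w ≠ x :=
  let ⟨w, hvw, hwx⟩ := exists_adj_ne_of_two_le_outDeg hdeg x
  ⟨w, h.mem_right_of_adj hvw hv, hvw, hwx⟩

theorem exists_mem_right_adj_ne {v : V} (h : IsBipartition E A B) (hv : v ∈ A)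
    (hdeg : 2 ≤ inDeg E v) (x : V) : ∃ w ∈ B, E w v ∧ w ≠ x :=
  h.flip.exists_adj_mem_right_ne hv hdeg x

theorem nonempty_left [Nonempty V] (h : IsBipartition E A B) (hout : ∀ v, 2 ≤ outDeg E v) :
    A.Nonempty := by
  obtain ⟨v⟩ := ‹Nonempty V›
  by_cases hv : v ∈ A
  · exact ⟨v, hv⟩
  obtain ⟨w, hw, -⟩ := h.symm.exists_adj_mem_right_ne (h.mem_right_of_notMem hv) (hout v) v
  exact ⟨w, hw⟩

end IsBipartition

section Piecewise

variable {k : ℕ} {f g : V → Fin k} {i : Fin k} {x : V}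

theorem acyclicSet_piecewise_of_right (hbip : IsBipartition E A B) (hE : SimpleDigraph' E)
    (hg : ∀ v, g v = i → v = x) : AcyclicSet E {v | A.piecewise f g v = i} := by
  refine acyclicSet_of_subset_insert (x := x) hE (fun u hu v hv => hbip.not_adj hu hv)
    fun v hv => ?_
  by_cases hvA : v ∈ A
  · exact Or.inr hvA
  · exact Or.inl (hg v (by simpa [hvA] using hv))

theorem acyclicSet_piecewise_of_left (hbip : IsBipartition E A B) (hE : SimpleDigraph' E)
    (hf : ∀ v, f v = i → v = x) : AcyclicSet E {v | A.piecewise f g v = i} := by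
  refine acyclicSet_of_subset_insert (x := x) hE (fun u hu v hv => hbip.symm.not_adj hu hv)
    fun v hv => ?_
  by_cases hvA : v ∈ A
  · exact Or.inl (hf v (by simpa [hvA] using hv))
  · exact Or.inr (hbip.mem_right_of_notMem hvA)

end Piecewise

noncomputable def forkColoring (A : Set V) (a₁ a₂ b t w : V) : V → Fin 3 :=
  A.piecewise (fun v => if v = a₁ then 1 else if v = a₂ then 2 else 0)
    (fun v => if v = b then 0 else if v = t ∨ v = w then 1 else 2)

theorem acyclicColoring_forkColoring (hbip : IsBipartition E A B) (hE : SimpleDigraph' E)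
    (a₁ a₂ b t w : V) : AcyclicColoring E (forkColoring A a₁ a₂ b t w) := by
  intro i
  fin_cases i
  · exact acyclicSet_piecewise_of_right hbip hE (x := b) fun v => by split_ifs <;> simp_all
  · exact acyclicSet_piecewise_of_left hbip hE (x := a₁) fun v => by split_ifs <;> simp_all
  · exact acyclicSet_piecewise_of_left hbip hE (x := a₂) fun v => by split_ifs <;> simp_all

theorem forkColoring_of_mem_left {a₁ a₂ b t w v : V} (hv : v ∈ A) (h₁ : v ≠ a₁)
    (h₂ : v ≠ a₂) : forkColoring A a₁ a₂ b t w v = 0 := by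
  simp [forkColoring, hv, h₁, h₂]

theorem forkColoring_of_mem_right (hbip : IsBipartition E A B) {a₁ a₂ b t w v : V} (hv : v ∈ B)
    (hb : v ≠ b) (ht : v ≠ t) (hw : v ≠ w) : forkColoring A a₁ a₂ b t w v = 2 := by
  simp [forkColoring, hbip.notMem_left hv, hb, ht, hw]

noncomputable def pathColoring (A : Set V) (a₀ y₁ x₁ x₂ : V) : V → Fin 3 :=
  A.piecewise (fun v => if v = a₀ ∨ v = y₁ then 1 else 0)
    (fun v => if v = x₁ then 0 else if v = x₂ then 1 else 2)

theorem acyclicColoring_pathColoring (hbip : IsBipartition E A B) (hE : SimpleDigraph' E)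
    (a₀ y₁ x₁ x₂ : V) : AcyclicColoring E (pathColoring A a₀ y₁ x₁ x₂) := by
  intro i
  fin_cases i
  · exact acyclicSet_piecewise_of_right hbip hE (x := x₁) fun v => by split_ifs <;> simp_all
  · exact acyclicSet_piecewise_of_right hbip hE (x := x₂) fun v => by split_ifs <;> simp_all
  · exact acyclicSet_piecewise_of_left hbip hE (x := a₀) fun v => by split_ifs <;> simp_all

def HasFork (E : V → V → Prop) (A : Set V) : Prop :=
  ∃ a₁ ∈ A, ∃ a₂ ∈ A, ∃ b t₁ t₂ y₁ y₂ : V, a₁ ≠ a₂ ∧ E a₁ b ∧ E a₂ b ∧ E a₁ t₁ ∧ E a₂ t₂ ∧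
    t₁ ≠ t₂ ∧ t₁ ≠ b ∧ t₂ ≠ b ∧ E y₁ t₁ ∧ E y₂ t₂ ∧ y₁ ≠ a₁ ∧ y₁ ≠ a₂ ∧ y₂ ≠ a₁ ∧ y₂ ≠ a₂

theorem exists_isBColoring_of_hasFork_left (hbip : IsBipartition E A B) (hE : SimpleDigraph' E)
    (hout : ∀ v, 2 ≤ outDeg E v) (hfork : HasFork E A) : ∃ Γ : V → Fin 3, IsBColoring E Γ := by
  obtain ⟨a₁, ha₁, a₂, ha₂, b, t₁, t₂, y₁, y₂, ha, ha₁b, ha₂b, ha₁t₁, ha₂t₂, ht, ht₁b, ht₂b,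
    hy₁t₁, hy₂t₂, hy₁a₁, hy₁a₂, hy₂a₁, hy₂a₂⟩ := hfork
  have hb := hbip.mem_right_of_adj ha₁b ha₁
  have ht₁ := hbip.mem_right_of_adj ha₁t₁ ha₁
  have ht₂ := hbip.mem_right_of_adj ha₂t₂ ha₂
  -- an out-neighbour `a₀` of `b` is not an in-neighbour of `b`: hence `a₀ ≠ a₁, a₂`, and no
  -- out-neighbour of `a₀` is `b`
  obtain ⟨a₀, ha₀, hba₀, -⟩ := hbip.symm.exists_adj_mem_right_ne hb (hout b) b
  have ha₀b : ¬E a₀ b := hE b a₀ hba₀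
  obtain ⟨w₁, ha₀w₁ : E a₀ w₁, w₂, ha₀w₂ : E a₀ w₂, hw, hw₁t₁, hw₂t₂⟩ :=
    exists_mem_ne_mem_ne_of_one_lt_ncard (hout a₀) ht
  have hw₁b : w₁ ≠ b := fun h => ha₀b (h ▸ ha₀w₁)
  have hw₂b : w₂ ≠ b := fun h => ha₀b (h ▸ ha₀w₂)
  set Γ := forkColoring A a₁ a₂ b t₂ w₁
  obtain ⟨hΓb, hΓa₁, hΓa₂, hΓt₂, hΓw₁⟩ : Γ b = 0 ∧ Γ a₁ = 1 ∧ Γ a₂ = 2 ∧ Γ t₂ = 1 ∧ Γ w₁ = 1 := by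
    simp [Γ, forkColoring, ha₁, ha₂, ha.symm, hbip.notMem_left hb, hbip.notMem_left ht₂, ht₂b,
      hbip.notMem_left (hbip.mem_right_of_adj ha₀w₁ ha₀), hw₁b]
  have hΓa₀ : Γ a₀ = 0 :=
    forkColoring_of_mem_left ha₀ (fun h => ha₀b (h ▸ ha₁b)) (fun h => ha₀b (h ▸ ha₂b))
  have hΓw₂ : Γ w₂ = 2 :=
    forkColoring_of_mem_right hbip (hbip.mem_right_of_adj ha₀w₂ ha₀) hw₂b hw₂t₂ (Ne.symm hw)
  have hΓt₁ : Γ t₁ = 2 := forkColoring_of_mem_right hbip ht₁ ht₁b ht (Ne.symm hw₁t₁)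
  have hΓy₁ : Γ y₁ = 0 := forkColoring_of_mem_left (hbip.mem_left_of_adj hy₁t₁ ht₁) hy₁a₁ hy₁a₂
  have hΓy₂ : Γ y₂ = 0 := forkColoring_of_mem_left (hbip.mem_left_of_adj hy₂t₂ ht₂) hy₂a₁ hy₂a₂
  refine ⟨Γ, acyclicColoring_forkColoring hbip hE a₁ a₂ b t₂ w₁, fun i => ?_⟩
  fin_cases i
  · exact ⟨⟨a₀, hΓa₀, isBPlus_of_three ha₀w₁ ha₀w₂ hΓa₀ hΓw₁ hΓw₂ (by decide)⟩,
      ⟨b, hΓb, isBMinus_of_three ha₁b ha₂b hΓb hΓa₁ hΓa₂ (by decide)⟩⟩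
  · exact ⟨⟨a₁, hΓa₁, isBPlus_of_three ha₁b ha₁t₁ hΓa₁ hΓb hΓt₁ (by decide)⟩,
      ⟨t₂, hΓt₂, isBMinus_of_three hy₂t₂ ha₂t₂ hΓt₂ hΓy₂ hΓa₂ (by decide)⟩⟩
  · exact ⟨⟨a₂, hΓa₂, isBPlus_of_three ha₂b ha₂t₂ hΓa₂ hΓb hΓt₂ (by decide)⟩,
      ⟨t₁, hΓt₁, isBMinus_of_three hy₁t₁ ha₁t₁ hΓt₁ hΓy₁ hΓa₁ (by decide)⟩⟩

theorem exists_isBColoring_of_hasFork (hbip : IsBipartition E A B) (hE : SimpleDigraph' E)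
    (hout : ∀ v, 2 ≤ outDeg E v) (hfork : HasFork E A ∨ HasFork E B) :
    ∃ Γ : V → Fin 3, IsBColoring E Γ :=
  hfork.elim (exists_isBColoring_of_hasFork_left hbip hE hout)
    (exists_isBColoring_of_hasFork_left hbip.symm hE hout)

theorem inNbrs_subset_pair_of_not_hasFork (hin : ∀ v, 2 ≤ inDeg E v) (hfork : ¬HasFork E A)
    {u w b t s : V} (hu : u ∈ A) (hw : w ∈ A) (hub : E u b) (hwb : E w b) (hut : E u t)
    (hwt : ¬E w t) (hws : E w s) (hsb : s ≠ b) : {r | E r s} ⊆ {u, w} := by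
  intro r hrs
  by_contra hr
  simp only [Set.mem_insert_iff, Set.mem_singleton_iff, not_or] at hr
  obtain ⟨e, het, heu⟩ := exists_adj_ne_of_two_le_inDeg (hin t) u
  have hew : e ≠ w := by rintro rfl; exact hwt het
  exact hfork ⟨u, hu, w, hw, b, t, s, e, r, by rintro rfl; exact hwt hut, hub, hwb, hut, hws,
    by rintro rfl; exact hwt hws, by rintro rfl; exact hwt hwb, hsb, het, hrs, heu, hew, hr⟩

theorem adj_of_not_hasFork (hbip : IsBipartition E A B)
    (hdeg : ∀ v, 2 ≤ outDeg E v ∧ 2 ≤ inDeg E v) (hA : ¬HasFork E A) (hB : ¬HasFork (flip E) B)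
    {u w v t : V} (hu : u ∈ A) (hw : w ∈ A) (huv : E u v) (hwv : E w v) (hut : E u t) :
    E w t := by
  by_contra hwt
  have hv := hbip.mem_right_of_adj huv hu
  have ht := hbip.mem_right_of_adj hut hu
  obtain ⟨e, het, heu⟩ := exists_adj_ne_of_two_le_inDeg (hdeg t).2 u
  have hev : E e v := mem_of_one_lt_ncard_of_subset_pair (S := {r | E e r}) (hdeg e).1 <|
    inNbrs_subset_pair_of_not_hasFork (E := flip E) (fun x => (hdeg x).1) hB hv ht huv hut hwv
      hwt het heu
  obtain ⟨s, hws, hsv⟩ := exists_adj_ne_of_two_le_outDeg (hdeg w).1 v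
  have hus : E u s := mem_of_one_lt_ncard_of_subset_pair (S := {r | E r s}) (hdeg s).2 <|
    inNbrs_subset_pair_of_not_hasFork (fun x => (hdeg x).2) hA hu hw huv hwv hut hwt hws hsv
  rcases inNbrs_subset_pair_of_not_hasFork (fun x => (hdeg x).2) hA hu hw hus hws hut hwt hwv
    hsv.symm hev with rfl | rfl
  · exact heu rfl
  · exact hwt het

theorem adj_of_adj_of_not_hasFork (hbip : IsBipartition E A B)
    (hdeg : ∀ v, 2 ≤ outDeg E v ∧ 2 ≤ inDeg E v) (hA : ¬HasFork E A) (hB : ¬HasFork E B)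
    (hA' : ¬HasFork (flip E) A) (hB' : ¬HasFork (flip E) B) :
    ∀ u w v, E u v → E w v → ∀ t, E u t → E w t := by
  intro u w v huv hwv t hut
  by_cases hv : v ∈ A
  · exact adj_of_not_hasFork hbip.symm hdeg hB hA' (hbip.symm.mem_left_of_adj huv hv)
      (hbip.symm.mem_left_of_adj hwv hv) huv hwv hut
  · have hv := hbip.mem_right_of_notMem hv
    exact adj_of_not_hasFork hbip hdeg hA hB' (hbip.mem_left_of_adj huv hv)
      (hbip.mem_left_of_adj hwv hv) huv hwv hut

theorem pathColoring_of_mem_left {a₀ y₁ x₁ x₂ v : V} (hv : v ∈ A) (h₀ : v ≠ a₀) (h₁ : v ≠ y₁) :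
    pathColoring A a₀ y₁ x₁ x₂ v = 0 := by
  simp [pathColoring, hv, h₀, h₁]

theorem pathColoring_of_mem_right (hbip : IsBipartition E A B) {a₀ y₁ x₁ x₂ v : V} (hv : v ∈ B)
    (h₁ : v ≠ x₁) (h₂ : v ≠ x₂) : pathColoring A a₀ y₁ x₁ x₂ v = 2 := by
  simp [pathColoring, hbip.notMem_left hv, h₁, h₂]

theorem isBColoring_pathColoring (hbip : IsBipartition E A B) (hE : SimpleDigraph' E)
    (hdeg : ∀ v, 2 ≤ outDeg E v ∧ 2 ≤ inDeg E v)
    (hout : ∀ u w v, E u v → E w v → ∀ t, E u t → E w t)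
    (hin : ∀ u w v, E v u → E v w → ∀ t, E t u → E t w) {a₀ x₁ y₁ x₂ : V} (ha₀ : a₀ ∈ A)
    (ha₀x₁ : E a₀ x₁) (hx₁y₁ : E x₁ y₁) (hy₁x₂ : E y₁ x₂) :
    IsBColoring E (pathColoring A a₀ y₁ x₁ x₂) := by
  have hx₁ := hbip.mem_right_of_adj ha₀x₁ ha₀
  have hy₁ := hbip.symm.mem_right_of_adj hx₁y₁ hx₁
  have hx₂ := hbip.mem_right_of_adj hy₁x₂ hy₁
  have hy₁x₁ : ¬E y₁ x₁ := hE _ _ hx₁y₁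
  have hx₂y₁ : ¬E x₂ y₁ := hE _ _ hy₁x₂
  have ha₀x₂ : ¬E a₀ x₂ := fun h => hy₁x₁ (hin x₂ x₁ a₀ h ha₀x₁ y₁ hy₁x₂)
  have hx₂x₁ : x₂ ≠ x₁ := fun h => hy₁x₁ (h ▸ hy₁x₂)
  set Γ := pathColoring A a₀ y₁ x₁ x₂
  obtain ⟨hΓa₀, hΓy₁, hΓx₁, hΓx₂⟩ : Γ a₀ = 1 ∧ Γ y₁ = 1 ∧ Γ x₁ = 0 ∧ Γ x₂ = 1 := by
    simp [Γ, pathColoring, ha₀, hy₁, hbip.notMem_left hx₁, hbip.notMem_left hx₂, hx₂x₁]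
  obtain ⟨z, hz, ha₀z, hzx₁⟩ := hbip.exists_adj_mem_right_ne ha₀ (hdeg a₀).1 x₁
  have hΓz : Γ z = 2 := pathColoring_of_mem_right hbip hz hzx₁ fun h => ha₀x₂ (h ▸ ha₀z)
  obtain ⟨w, hw, hwy₁, hwx₁⟩ := hbip.exists_mem_right_adj_ne hy₁ (hdeg y₁).2 x₁
  have hΓw : Γ w = 2 := pathColoring_of_mem_right hbip hw hwx₁ fun h => hx₂y₁ (h ▸ hwy₁)
  obtain ⟨y, hy, hx₁y, hyy₁⟩ := hbip.symm.exists_adj_mem_right_ne hx₁ (hdeg x₁).1 y₁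
  have hΓy : Γ y = 0 := pathColoring_of_mem_left hy (fun h => hE _ _ ha₀x₁ (h ▸ hx₁y)) hyy₁
  obtain ⟨x, hx, hy₁x, hxx₂⟩ := hbip.exists_adj_mem_right_ne hy₁ (hdeg y₁).1 x₂
  have hΓx : Γ x = 2 := pathColoring_of_mem_right hbip hx (fun h => hy₁x₁ (h ▸ hy₁x)) hxx₂
  obtain ⟨u, hu, hux₂, huy₁⟩ := hbip.symm.exists_mem_right_adj_ne hx₂ (hdeg x₂).2 y₁
  have hΓu : Γ u = 0 := pathColoring_of_mem_left hu (fun h => ha₀x₂ (h ▸ hux₂)) huy₁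
  obtain ⟨v, hv, hx₂v, hva₀⟩ := hbip.symm.exists_adj_mem_right_ne hx₂ (hdeg x₂).1 a₀
  have hΓv : Γ v = 0 := pathColoring_of_mem_left hv hva₀ fun h => hx₂y₁ (h ▸ hx₂v)
  obtain ⟨s, hs, hsv, hsx₂⟩ := hbip.exists_mem_right_adj_ne hv (hdeg v).2 x₂
  have hΓs : Γ s = 2 := pathColoring_of_mem_right hbip hs
    (fun h => hx₂y₁ (hin v y₁ x₁ (h ▸ hsv) hx₁y₁ x₂ hx₂v)) hsx₂
  have hux : E u x := hin x₂ x y₁ hy₁x₂ hy₁x u hux₂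
  refine ⟨acyclicColoring_pathColoring hbip hE a₀ y₁ x₁ x₂, fun i => ?_⟩
  fin_cases i
  · exact ⟨⟨u, hΓu, isBPlus_of_three hux₂ hux hΓu hΓx₂ hΓx (by decide)⟩,
      ⟨v, hΓv, isBMinus_of_three hx₂v hsv hΓv hΓx₂ hΓs (by decide)⟩⟩
  · exact ⟨⟨a₀, hΓa₀, isBPlus_of_three ha₀x₁ ha₀z hΓa₀ hΓx₁ hΓz (by decide)⟩,
      ⟨y₁, hΓy₁, isBMinus_of_three hx₁y₁ hwy₁ hΓy₁ hΓx₁ hΓw (by decide)⟩⟩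
  · exact ⟨⟨w, hΓw, isBPlus_of_three (hout x₁ w y₁ hx₁y₁ hwy₁ y hx₁y) hwy₁ hΓw hΓy hΓy₁
        (by decide)⟩, ⟨x, hΓx, isBMinus_of_three hux hy₁x hΓx hΓu hΓy₁ (by decide)⟩⟩

theorem exists_isBColoring_of_twins [Nonempty V] (hbip : IsBipartition E A B)
    (hE : SimpleDigraph' E) (hdeg : ∀ v, 2 ≤ outDeg E v ∧ 2 ≤ inDeg E v)
    (hout : ∀ u w v, E u v → E w v → ∀ t, E u t → E w t)
    (hin : ∀ u w v, E v u → E v w → ∀ t, E t u → E t w) :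
    ∃ Γ : V → Fin 3, IsBColoring E Γ := by
  obtain ⟨a₀, ha₀⟩ := hbip.nonempty_left fun v => (hdeg v).1
  obtain ⟨x₁, ha₀x₁, -⟩ := exists_adj_ne_of_two_le_outDeg (hdeg a₀).1 a₀
  obtain ⟨y₁, hx₁y₁, -⟩ := exists_adj_ne_of_two_le_outDeg (hdeg x₁).1 x₁
  obtain ⟨x₂, hy₁x₂, -⟩ := exists_adj_ne_of_two_le_outDeg (hdeg y₁).1 y₁
  exact ⟨_, isBColoring_pathColoring hbip hE hdeg hout hin ha₀ ha₀x₁ hx₁y₁ hy₁x₂⟩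

end

/-- a simple (digon-free) bipartite digraph with δ ≥ 2 has dib ≥ 3. -/
theorem stmt9 {V : Type*} [Fintype V] [Nonempty V] (E : V → V → Prop) (A B : Set V)
    (hbip : IsBipartition E A B) (hsimple : SimpleDigraph' E)
    (hdeg : ∀ v, 2 ≤ outDeg E v ∧ 2 ≤ inDeg E v) :
    3 ≤ dib E := by
  obtain ⟨Γ, hΓ⟩ : ∃ Γ : V → Fin 3, IsBColoring E Γ := by
    by_cases hE : HasFork E A ∨ HasFork E B
    · exact exists_isBColoring_of_hasFork hbip hsimple (fun v => (hdeg v).1) hE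
    by_cases hF : HasFork (flip E) A ∨ HasFork (flip E) B
    · obtain ⟨Γ, hΓ⟩ :=
        exists_isBColoring_of_hasFork hbip.flip hsimple.flip (fun v => (hdeg v).2) hF
      exact ⟨Γ, hΓ.of_flip⟩
    obtain ⟨hA, hB⟩ := not_or.mp hE
    obtain ⟨hA', hB'⟩ := not_or.mp hF
    exact exists_isBColoring_of_twins hbip hsimple hdeg
      (adj_of_adj_of_not_hasFork hbip hdeg hA hB hA' hB')
      (adj_of_adj_of_not_hasFork hbip.flip (fun v => (hdeg v).symm) hA' hB' hA hB)
  exact hΓ.le_dib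
end

section
/- Let D be a simple bipartite digraph in which every vertex has out-degree exactly 2 and in-degree exactly 2. Then dib(D) = 3. -/
open Classical

set_option maxHeartbeats 1000000
namespace Stmt10Aux

variable {V : Type*}

lemma fin3cases : ∀ j : Fin 3, j = 0 ∨ j = 1 ∨ j = 2 := by decide

lemma two_of_out {E : V → V → Prop}
    (houtp : ∀ v : V, ∃ x y, x ≠ y ∧ E v x ∧ E v y ∧ ∀ w, E v w → w = x ∨ w = y)
    {v x y : V} (hx : E v x) (hy : E v y) (hxy : x ≠ y) :
    ∀ w, E v w → w = x ∨ w = y := by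
  obtain ⟨p, q, hpq, hp, hq, hall⟩ := houtp v
  intro w hw
  rcases hall x hx with h1 | h1 <;> rcases hall y hy with h2 | h2
  · exact absurd (h1.trans h2.symm) hxy
  · rcases hall w hw with h3 | h3
    · exact Or.inl (h3.trans h1.symm)
    · exact Or.inr (h3.trans h2.symm)
  · rcases hall w hw with h3 | h3
    · exact Or.inr (h3.trans h2.symm)
    · exact Or.inl (h3.trans h1.symm)
  · exact absurd (h1.trans h2.symm) hxy

lemma two_of_in {E : V → V → Prop}
    (hinp : ∀ v : V, ∃ x y, x ≠ y ∧ E x v ∧ E y v ∧ ∀ w, E w v → w = x ∨ w = y)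
    {v x y : V} (hx : E x v) (hy : E y v) (hxy : x ≠ y) :
    ∀ w, E w v → w = x ∨ w = y := by
  obtain ⟨p, q, hpq, hp, hq, hall⟩ := hinp v
  intro w hw
  rcases hall x hx with h1 | h1 <;> rcases hall y hy with h2 | h2
  · exact absurd (h1.trans h2.symm) hxy
  · rcases hall w hw with h3 | h3
    · exact Or.inl (h3.trans h1.symm)
    · exact Or.inr (h3.trans h2.symm)
  · rcases hall w hw with h3 | h3
    · exact Or.inr (h3.trans h2.symm)
    · exact Or.inl (h3.trans h1.symm)
  · exact absurd (h1.trans h2.symm) hxy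

lemma three_of_out {E : V → V → Prop}
    (houtp : ∀ v : V, ∃ x y, x ≠ y ∧ E v x ∧ E v y ∧ ∀ w, E v w → w = x ∨ w = y)
    {v p1 p2 q : V} (h1 : E v p1) (h2 : E v p2) (h3 : E v q)
    (h12 : p1 ≠ p2) (hq1 : q ≠ p1) (hq2 : q ≠ p2) : False := by
  obtain ⟨a, b, hab, _, _, hall⟩ := houtp v
  rcases hall p1 h1 with e1 | e1 <;> rcases hall p2 h2 with e2 | e2 <;>
    rcases hall q h3 with e3 | e3 <;>
    first
      | exact h12 (e1.trans e2.symm)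
      | exact hq1 (e3.trans e1.symm)
      | exact hq2 (e3.trans e2.symm)

lemma three_of_in {E : V → V → Prop}
    (hinp : ∀ v : V, ∃ x y, x ≠ y ∧ E x v ∧ E y v ∧ ∀ w, E w v → w = x ∨ w = y)
    {v p1 p2 q : V} (h1 : E p1 v) (h2 : E p2 v) (h3 : E q v)
    (h12 : p1 ≠ p2) (hq1 : q ≠ p1) (hq2 : q ≠ p2) : False := by
  obtain ⟨a, b, hab, _, _, hall⟩ := hinp v
  rcases hall p1 h1 with e1 | e1 <;> rcases hall p2 h2 with e2 | e2 <;>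
    rcases hall q h3 with e3 | e3 <;>
    first
      | exact h12 (e1.trans e2.symm)
      | exact hq1 (e3.trans e1.symm)
      | exact hq2 (e3.trans e2.symm)

lemma LAcyclic {E : V → V → Prop} {A B : Set V} (hdisj : Disjoint A B)
    (hcross : ∀ u v, E u v → (u ∈ A ∧ v ∈ B) ∨ (u ∈ B ∧ v ∈ A))
    {S : Set V}
    (hL : ∀ a, a ∈ S → a ∈ A → (∀ x, x ∈ S → ¬ E x a) ∨ (∀ x, x ∈ S → ¬ E a x)) :
    AcyclicSet E S := by
  rintro ⟨n, c, hmem, harc⟩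
  have key : ∀ i : Fin (n+1), c i ∈ A → False := by
    intro i hA
    rcases hL (c i) (hmem i) hA with h | h
    · have h2 := harc (i - 1)
      rw [sub_add_cancel] at h2
      exact h _ (hmem (i - 1)) h2
    · exact h _ (hmem (i + 1)) (harc i)
  rcases hcross _ _ (harc 0) with ⟨h1, _⟩ | ⟨_, h2⟩
  · exact key 0 h1
  · exact key (0 + 1) h2

end Stmt10Aux
namespace Stmt10Aux

lemma caseI {V : Type*} {E : V → V → Prop} {A B : Set V} (hdisj : Disjoint A B)
    (hcross : ∀ u v, E u v → (u ∈ A ∧ v ∈ B) ∨ (u ∈ B ∧ v ∈ A))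
    (hns : ∀ u v, E u v → ¬ E v u)
    (houtp : ∀ v : V, ∃ x y, x ≠ y ∧ E v x ∧ E v y ∧ ∀ w, E v w → w = x ∨ w = y)
    (hinp : ∀ v : V, ∃ x y, x ≠ y ∧ E x v ∧ E y v ∧ ∀ w, E w v → w = x ∨ w = y)
    {b0 a1 a2 : V} (hb0 : b0 ∈ B) (h1 : E b0 a1) (h2 : E b0 a2) (h12 : a1 ≠ a2)
    (hgood : ∀ w, E w a1 → E w a2 → w = b0) :
    ∃ Γ : V → Fin 3, IsBColoring E Γ := by
  classical
  have notboth : ∀ {v}, v ∈ A → v ∈ B → False := fun hA hB => Set.disjoint_left.mp hdisj hA hB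
  have crossOutB : ∀ {u v}, E u v → u ∈ B → v ∈ A := by
    intro u v h hu
    rcases hcross u v h with ⟨hA, _⟩ | ⟨_, hA⟩
    · exact (notboth hA hu).elim
    · exact hA
  have crossInA : ∀ {u v}, E u v → v ∈ A → u ∈ B := by
    intro u v h hv
    rcases hcross u v h with ⟨_, hB⟩ | ⟨hB, _⟩
    · exact (notboth hv hB).elim
    · exact hB
  have ha1 : a1 ∈ A := crossOutB h1 hb0
  have ha2 : a2 ∈ A := crossOutB h2 hb0
  have hOb0 : ∀ w, E b0 w → w = a1 ∨ w = a2 := two_of_out houtp h1 h2 h12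
  -- the second in-neighbour of a1
  obtain ⟨s, hsne, hsE, hsall⟩ : ∃ s, s ≠ b0 ∧ E s a1 ∧ ∀ w, E w a1 → w = b0 ∨ w = s := by
    obtain ⟨x, y, hxy, hx, hy, hall⟩ := hinp a1
    rcases hall b0 h1 with h | h
    · refine ⟨y, fun hy' => hxy (h.symm.trans hy'.symm), hy, fun w hw => ?_⟩
      rcases hall w hw with h' | h'
      · exact Or.inl (h'.trans h.symm)
      · exact Or.inr h'
    · refine ⟨x, fun hx' => hxy (hx'.trans h), hx, fun w hw => ?_⟩
      rcases hall w hw with h' | h'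
      · exact Or.inr h'
      · exact Or.inl (h'.trans h.symm)
  -- the second in-neighbour of a2
  obtain ⟨p, hpne, hpE, hpall⟩ : ∃ p, p ≠ b0 ∧ E p a2 ∧ ∀ w, E w a2 → w = b0 ∨ w = p := by
    obtain ⟨x, y, hxy, hx, hy, hall⟩ := hinp a2
    rcases hall b0 h2 with h | h
    · refine ⟨y, fun hy' => hxy (h.symm.trans hy'.symm), hy, fun w hw => ?_⟩
      rcases hall w hw with h' | h'
      · exact Or.inl (h'.trans h.symm)
      · exact Or.inr h'
    · refine ⟨x, fun hx' => hxy (hx'.trans h), hx, fun w hw => ?_⟩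
      rcases hall w hw with h' | h'
      · exact Or.inr h'
      · exact Or.inl (h'.trans h.symm)
  have hsB : s ∈ B := crossInA hsE ha1
  have hpB : p ∈ B := crossInA hpE ha2
  have hps : p ≠ s := by
    intro h
    exact hpne (hgood p (by rw [h]; exact hsE) hpE)
  -- the second out-neighbour of p
  obtain ⟨q, hqne2, hqE⟩ : ∃ q, q ≠ a2 ∧ E p q := by
    obtain ⟨x, y, hxy, hx, hy, hall⟩ := houtp p
    rcases hall a2 hpE with h | h
    · exact ⟨y, fun hy' => hxy (h.symm.trans hy'.symm), hy⟩
    · exact ⟨x, fun hx' => hxy (hx'.trans h), hx⟩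
  have hqne1 : q ≠ a1 := fun h => hpne (hgood p (by rw [← h]; exact hqE) hpE)
  have hqA : q ∈ A := crossOutB hqE hpB
  -- the second out-neighbour of s
  obtain ⟨q', hq'ne1, hq'E⟩ : ∃ q', q' ≠ a1 ∧ E s q' := by
    obtain ⟨x, y, hxy, hx, hy, hall⟩ := houtp s
    rcases hall a1 hsE with h | h
    · exact ⟨y, fun hy' => hxy (h.symm.trans hy'.symm), hy⟩
    · exact ⟨x, fun hx' => hxy (hx'.trans h), hx⟩
  have hq'ne2 : q' ≠ a2 := fun h => hsne (hgood s hsE (by rw [← h]; exact hq'E))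
  have hq'A : q' ∈ A := crossOutB hq'E hsB
  -- an in-neighbour of b0
  obtain ⟨astar, _, _, hastE, _, _⟩ := hinp b0
  have hastA : astar ∈ A := by
    rcases hcross _ _ hastE with ⟨hA, _⟩ | ⟨_, hA⟩
    · exact hA
    · exact (notboth hA hb0).elim
  have hastne1 : astar ≠ a1 := fun h => hns b0 a1 h1 (by rw [← h]; exact hastE)
  have hastne2 : astar ≠ a2 := fun h => hns b0 a2 h2 (by rw [← h]; exact hastE)
  -- the in-neighbours of astar
  obtain ⟨t1, t2, ht12, ht1, ht2, _⟩ := hinp astar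
  have ht1b0 : t1 ≠ b0 := by
    intro h
    rcases hOb0 astar (by rw [← h]; exact ht1) with h' | h'
    · exact hastne1 h'
    · exact hastne2 h'
  have ht2b0 : t2 ≠ b0 := by
    intro h
    rcases hOb0 astar (by rw [← h]; exact ht2) with h' | h'
    · exact hastne1 h'
    · exact hastne2 h'
  have ht1B : t1 ∈ B := crossInA ht1 hastA
  have ht2B : t2 ∈ B := crossInA ht2 hastA
  obtain ⟨u1, u2, hu1E, hu2E, hu1s, hu12, hpu2, hu1b0, hu2b0, hu1B, hu2B⟩ :
      ∃ u1 u2, E u1 astar ∧ E u2 astar ∧ u1 ≠ s ∧ u1 ≠ u2 ∧ p ≠ u2 ∧ u1 ≠ b0 ∧ u2 ≠ b0 ∧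
        u1 ∈ B ∧ u2 ∈ B := by
    by_cases hc1 : t1 = s
    · exact ⟨t2, t1, ht2, ht1, fun h => ht12 (hc1.trans h.symm), fun h => ht12 h.symm,
        fun h => hps (h.trans hc1), ht2b0, ht1b0, ht2B, ht1B⟩
    by_cases hc2 : t2 = s
    · exact ⟨t1, t2, ht1, ht2, hc1, ht12,
        fun h => hps (h.trans hc2), ht1b0, ht2b0, ht1B, ht2B⟩
    by_cases hc3 : t1 = p
    · exact ⟨t1, t2, ht1, ht2, hc1, ht12, fun h => ht12 (hc3.trans h), ht1b0, ht2b0, ht1B, ht2B⟩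
    · exact ⟨t2, t1, ht2, ht1, hc2, fun h => ht12 h.symm, fun h => hc3 h.symm, ht2b0, ht1b0,
        ht2B, ht1B⟩
  -- the colouring
  obtain ⟨Γ, hΓ⟩ : ∃ Γ : V → Fin 3, Γ = fun v =>
    if v = a1 then 1 else if v = a2 then 2 else if v ∈ A then 0
    else if v = b0 then 0 else if v = s then 2 else if v = u2 then 2 else 1 := ⟨_, rfl⟩
  have hAB' : ∀ {v w : V}, v ∈ A → w ∈ B → v ≠ w := fun hv hw h => notboth hv (h ▸ hw)
  have hb0nA : b0 ∉ A := fun h => notboth h hb0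
  have hsnA : s ∉ A := fun h => notboth h hsB
  have hpnA : p ∉ A := fun h => notboth h hpB
  have hu1nA : u1 ∉ A := fun h => notboth h hu1B
  have hu2nA : u2 ∉ A := fun h => notboth h hu2B
  -- colour evaluations
  have ga1 : Γ a1 = 1 := by simp [hΓ]
  have ga2 : Γ a2 = 2 := by simp [hΓ, h12, Ne.symm h12]
  have gb0 : Γ b0 = 0 := by simp [hΓ, (hAB' ha1 hb0).symm, (hAB' ha2 hb0).symm, hb0nA]
  have gs : Γ s = 2 := by simp [hΓ, (hAB' ha1 hsB).symm, (hAB' ha2 hsB).symm, hsnA, hsne]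
  have gp : Γ p = 1 := by
    simp [hΓ, (hAB' ha1 hpB).symm, (hAB' ha2 hpB).symm, hpnA, hpne, hps, hpu2]
  have gq : Γ q = 0 := by simp [hΓ, hqne1, hqne2, hqA]
  have gq' : Γ q' = 0 := by simp [hΓ, hq'ne1, hq'ne2, hq'A]
  have gast : Γ astar = 0 := by simp [hΓ, hastne1, hastne2, hastA]
  have gu1 : Γ u1 = 1 := by
    simp [hΓ, (hAB' ha1 hu1B).symm, (hAB' ha2 hu1B).symm, hu1nA, hu1b0, hu1s, hu12]
  have gu2 : Γ u2 = 2 := by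
    by_cases h : u2 = s
    · rw [h]; exact gs
    · simp [hΓ, (hAB' ha1 hu2B).symm, (hAB' ha2 hu2B).symm, hu2nA, hu2b0, h]
  -- classifications
  have cls0 : ∀ v, Γ v = 0 → (v ∈ A ∧ v ≠ a1 ∧ v ≠ a2) ∨ v = b0 := by
    intro v hv
    simp only [hΓ] at hv
    split_ifs at hv with w1 w2 w3 w4 w5 w6
    · exact absurd hv (by decide)
    · exact absurd hv (by decide)
    · exact Or.inl ⟨w3, w1, w2⟩
    · exact Or.inr w4
    · exact absurd hv (by decide)
    · exact absurd hv (by decide)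
    · exact absurd hv (by decide)
  have clsA1 : ∀ v, Γ v = 1 → v ∈ A → v = a1 := by
    intro v hv hvA
    simp only [hΓ] at hv
    split_ifs at hv with w1 w2 w3 w4 w5 w6
    · exact w1
    · exact absurd hv (by decide)
    · exact absurd hv (by decide)
    all_goals exact absurd hvA w3
  have clsA2 : ∀ v, Γ v = 2 → v ∈ A → v = a2 := by
    intro v hv hvA
    simp only [hΓ] at hv
    split_ifs at hv with w1 w2 w3 w4 w5 w6
    · exact absurd hv (by decide)
    · exact w2
    · exact absurd hv (by decide)
    all_goals exact absurd hvA w3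
  refine ⟨Γ, ?_, ?_⟩
  · -- acyclicity
    intro i
    rcases fin3cases i with rfl | rfl | rfl
    · refine LAcyclic hdisj hcross ?_
      intro a ha haA
      left
      intro x hx hEx
      have hxB : x ∈ B := crossInA hEx haA
      rcases cls0 x hx with ⟨hxA, _, _⟩ | rfl
      · exact notboth hxA hxB
      · rcases hOb0 a hEx with rfl | rfl
        · simp only [Set.mem_setOf_eq, ga1] at ha
          exact absurd ha (by decide)
        · simp only [Set.mem_setOf_eq, ga2] at ha
          exact absurd ha (by decide)
    · refine LAcyclic hdisj hcross ?_
      intro a ha haA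
      have := clsA1 a ha haA
      subst this
      left
      intro x hx hEx
      rcases hsall x hEx with rfl | rfl
      · simp only [Set.mem_setOf_eq, gb0] at hx
        exact absurd hx (by decide)
      · simp only [Set.mem_setOf_eq, gs] at hx
        exact absurd hx (by decide)
    · refine LAcyclic hdisj hcross ?_
      intro a ha haA
      have := clsA2 a ha haA
      subst this
      left
      intro x hx hEx
      rcases hpall x hEx with rfl | rfl
      · simp only [Set.mem_setOf_eq, gb0] at hx
        exact absurd hx (by decide)
      · simp only [Set.mem_setOf_eq, gp] at hx
        exact absurd hx (by decide)
  · -- b-vertices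
    intro i
    rcases fin3cases i with rfl | rfl | rfl
    · constructor
      · refine ⟨b0, gb0, fun j hj => ?_⟩
        rw [gb0] at hj
        rcases fin3cases j with rfl | rfl | rfl
        · exact absurd rfl hj
        · exact ⟨a1, h1, ga1⟩
        · exact ⟨a2, h2, ga2⟩
      · refine ⟨astar, gast, fun j hj => ?_⟩
        rw [gast] at hj
        rcases fin3cases j with rfl | rfl | rfl
        · exact absurd rfl hj
        · exact ⟨u1, hu1E, gu1⟩
        · exact ⟨u2, hu2E, gu2⟩
    · constructor
      · refine ⟨p, gp, fun j hj => ?_⟩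
        rw [gp] at hj
        rcases fin3cases j with rfl | rfl | rfl
        · exact ⟨q, hqE, gq⟩
        · exact absurd rfl hj
        · exact ⟨a2, hpE, ga2⟩
      · refine ⟨a1, ga1, fun j hj => ?_⟩
        rw [ga1] at hj
        rcases fin3cases j with rfl | rfl | rfl
        · exact ⟨b0, h1, gb0⟩
        · exact absurd rfl hj
        · exact ⟨s, hsE, gs⟩
    · constructor
      · refine ⟨s, gs, fun j hj => ?_⟩
        rw [gs] at hj
        rcases fin3cases j with rfl | rfl | rfl
        · exact ⟨q', hq'E, gq'⟩
        · exact ⟨a1, hsE, ga1⟩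
        · exact absurd rfl hj
      · refine ⟨a2, ga2, fun j hj => ?_⟩
        rw [ga2] at hj
        rcases fin3cases j with rfl | rfl | rfl
        · exact ⟨b0, h2, gb0⟩
        · exact ⟨p, hpE, gp⟩
        · exact absurd rfl hj

end Stmt10Aux
namespace Stmt10Aux

/-- A "gadget": a complete `K_{2,2}` with `b, b'` pointing to `a, x`, such that these
are exactly the in-neighbours of `a` and `x` and the out-neighbours of `b` and `b'`. -/
def Gad {V : Type*} (E : V → V → Prop) (a x b b' : V) : Prop :=
  a ≠ x ∧ b ≠ b' ∧ E b a ∧ E b x ∧ E b' a ∧ E b' x ∧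
  (∀ w, E w a → w = b ∨ w = b') ∧ (∀ w, E w x → w = b ∨ w = b') ∧
  (∀ w, E b w → w = a ∨ w = x) ∧ (∀ w, E b' w → w = a ∨ w = x)

variable {V : Type*}

lemma Gad.swapA {E : V → V → Prop} {a x b b' : V} (h : Gad E a x b b') : Gad E x a b b' :=
  ⟨h.1.symm, h.2.1, h.2.2.2.1, h.2.2.1, h.2.2.2.2.2.1, h.2.2.2.2.1, h.2.2.2.2.2.2.2.1,
    h.2.2.2.2.2.2.1, fun w hw => (h.2.2.2.2.2.2.2.2.1 w hw).symm,
    fun w hw => (h.2.2.2.2.2.2.2.2.2 w hw).symm⟩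

lemma Gad.swapB {E : V → V → Prop} {a x b b' : V} (h : Gad E a x b b') : Gad E a x b' b :=
  ⟨h.1, h.2.1.symm, h.2.2.2.2.1, h.2.2.2.2.2.1, h.2.2.1, h.2.2.2.1,
    fun w hw => (h.2.2.2.2.2.2.1 w hw).symm, fun w hw => (h.2.2.2.2.2.2.2.1 w hw).symm,
    h.2.2.2.2.2.2.2.2.2, h.2.2.2.2.2.2.2.2.1⟩

lemma mkGad {E : V → V → Prop}
    (hbad : ∀ u x y, E u x → E u y → x ≠ y → ∃ w, E w x ∧ E w y ∧ w ≠ u)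
    (houtp : ∀ v : V, ∃ x y, x ≠ y ∧ E v x ∧ E v y ∧ ∀ w, E v w → w = x ∨ w = y)
    (hinp : ∀ v : V, ∃ x y, x ≠ y ∧ E x v ∧ E y v ∧ ∀ w, E w v → w = x ∨ w = y)
    (a : V) : ∃ x b b', Gad E a x b b' := by
  obtain ⟨b, bb, hbne, hbE, _, _⟩ := hinp a
  obtain ⟨u, v, huv, hu, hv, hall⟩ := houtp b
  obtain ⟨x, hxa, hbx, houtb⟩ : ∃ x, x ≠ a ∧ E b x ∧ ∀ w, E b w → w = a ∨ w = x := by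
    rcases hall a hbE with h | h
    · refine ⟨v, fun h' => huv (h.symm.trans h'.symm), hv, fun w hw => ?_⟩
      rcases hall w hw with h' | h'
      · exact Or.inl (h'.trans h.symm)
      · exact Or.inr h'
    · refine ⟨u, fun h' => huv (h'.trans h), hu, fun w hw => ?_⟩
      rcases hall w hw with h' | h'
      · exact Or.inr h'
      · exact Or.inl (h'.trans h.symm)
  obtain ⟨b', hb'a, hb'x, hb'ne⟩ := hbad b a x hbE hbx (fun h => hxa h.symm)
  refine ⟨x, b, b', fun h => hxa h.symm, fun h => hb'ne h.symm, hbE, hbx, hb'a, hb'x,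
    two_of_in hinp hbE hb'a hb'ne.symm, two_of_in hinp hbx hb'x hb'ne.symm, houtb,
    two_of_out houtp hb'a hb'x (fun h => hxa h.symm)⟩

lemma caseIIa {E : V → V → Prop} {A B : Set V} (hdisj : Disjoint A B)
    (hcross : ∀ u v, E u v → (u ∈ A ∧ v ∈ B) ∨ (u ∈ B ∧ v ∈ A))
    (hns : ∀ u v, E u v → ¬ E v u)
    (houtp : ∀ v : V, ∃ x y, x ≠ y ∧ E v x ∧ E v y ∧ ∀ w, E v w → w = x ∨ w = y)
    (hinp : ∀ v : V, ∃ x y, x ≠ y ∧ E x v ∧ E y v ∧ ∀ w, E w v → w = x ∨ w = y)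
    (hbad : ∀ u x y, E u x → E u y → x ≠ y → ∃ w, E w x ∧ E w y ∧ w ≠ u)
    {A1 A2 B0 P Y1 Y2 C CB : V}
    (hA1 : A1 ∈ A) (hY1 : Y1 ∈ A)
    (g1 : Gad E A1 A2 B0 P) (g2 : Gad E Y1 Y2 C CB)
    (hsY1A1 : Y1 ≠ A1) (hsY1A2 : Y1 ≠ A2) (hsY2A1 : Y2 ≠ A1) (hsY2A2 : Y2 ≠ A2)
    (hnE1 : ¬ E A1 CB) (hnE2 : ¬ E Y1 P) :
    ∃ Γ : V → Fin 3, IsBColoring E Γ := by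
  classical
  obtain ⟨h12, hBP, hB0A1, hB0A2, hPA1, hPA2, hinA1, hinA2, houtB0, houtP⟩ := g1
  obtain ⟨hY12, hCCB, hCY1, hCY2, hCBY1, hCBY2, hinY1, hinY2, houtC, houtCB⟩ := g2
  have notboth : ∀ {v}, v ∈ A → v ∈ B → False := fun hA hB => Set.disjoint_left.mp hdisj hA hB
  have crossOutB : ∀ {u v}, E u v → u ∈ B → v ∈ A := by
    intro u v h hu
    rcases hcross u v h with ⟨hA, _⟩ | ⟨_, hA⟩
    · exact (notboth hA hu).elim
    · exact hA
  have crossInA : ∀ {u v}, E u v → v ∈ A → u ∈ B := by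
    intro u v h hv
    rcases hcross u v h with ⟨_, hB⟩ | ⟨hB, _⟩
    · exact (notboth hv hB).elim
    · exact hB
  have crossOutA : ∀ {u v}, E u v → u ∈ A → v ∈ B := by
    intro u v h hu
    rcases hcross u v h with ⟨_, hB⟩ | ⟨hB, _⟩
    · exact hB
    · exact (notboth hu hB).elim
  have hB0B : B0 ∈ B := crossInA hB0A1 hA1
  have hPB : P ∈ B := crossInA hPA1 hA1
  have hA2A : A2 ∈ A := crossOutB hB0A2 hB0B
  have hCB' : C ∈ B := crossInA hCY1 hY1
  have hCBB : CB ∈ B := crossInA hCBY1 hY1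
  have hY2A : Y2 ∈ A := crossOutB hCY2 hCB'
  -- the two β's are disjoint
  have hCB0 : C ≠ B0 := fun h => by
    rcases houtB0 Y1 (by rw [← h]; exact hCY1) with h' | h'
    · exact hsY1A1 h'
    · exact hsY1A2 h'
  have hCP : C ≠ P := fun h => by
    rcases houtP Y1 (by rw [← h]; exact hCY1) with h' | h'
    · exact hsY1A1 h'
    · exact hsY1A2 h'
  have hCBB0 : CB ≠ B0 := fun h => by
    rcases houtB0 Y1 (by rw [← h]; exact hCBY1) with h' | h'
    · exact hsY1A1 h'
    · exact hsY1A2 h'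
  have hCBP : CB ≠ P := fun h => by
    rcases houtP Y1 (by rw [← h]; exact hCBY1) with h' | h'
    · exact hsY1A1 h'
    · exact hsY1A2 h'
  -- the out-neighbours of A1
  obtain ⟨o1, o2, ho12, ho1, ho2, _⟩ := houtp A1
  have honeB0 : ∀ {o}, E A1 o → o ≠ B0 := fun {o} ho h => hns B0 A1 hB0A1 (by rw [← h]; exact ho)
  have honeP : ∀ {o}, E A1 o → o ≠ P := fun {o} ho h => hns P A1 hPA1 (by rw [← h]; exact ho)
  have honeCB : ∀ {o}, E A1 o → o ≠ CB := fun {o} ho h => hnE1 (h ▸ ho)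
  obtain ⟨E1, E2, hE1, hE2, hE1C, hE12⟩ :
      ∃ E1 E2, E A1 E1 ∧ E A1 E2 ∧ E1 ≠ C ∧ E1 ≠ E2 := by
    by_cases h : o1 = C
    · exact ⟨o2, o1, ho2, ho1, fun h' => ho12 (h'.trans h.symm).symm, ho12.symm⟩
    · exact ⟨o1, o2, ho1, ho2, h, ho12⟩
  have hE1B : E1 ∈ B := crossOutA hE1 hA1
  have hE2B : E2 ∈ B := crossOutA hE2 hA1
  -- third gadget
  obtain ⟨w1, hw1E⟩ : ∃ w1, E E1 w1 := by
    obtain ⟨u, v, _, hu, _, _⟩ := houtp E1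
    exact ⟨u, hu⟩
  have hw1A : w1 ∈ A := crossOutB hw1E hE1B
  obtain ⟨x3, d, d', g3⟩ := mkGad hbad houtp hinp w1
  obtain ⟨hw1x3, hdd', hdw1, hdx3, hd'w1, hd'x3, hinw1, hinx3, houtd, houtd'⟩ := g3
  have hE1in : E1 = d ∨ E1 = d' := hinw1 E1 hw1E
  have hw1A1 : w1 ≠ A1 := by
    intro h
    rcases hinA1 E1 (by rw [← h]; exact hw1E) with h' | h'
    · exact honeB0 hE1 h'
    · exact honeP hE1 h'
  have hw1A2 : w1 ≠ A2 := by
    intro h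
    rcases hinA2 E1 (by rw [← h]; exact hw1E) with h' | h'
    · exact honeB0 hE1 h'
    · exact honeP hE1 h'
  have hw1Y1 : w1 ≠ Y1 := by
    intro h
    rcases hinY1 E1 (by rw [← h]; exact hw1E) with h' | h'
    · exact hE1C h'
    · exact honeCB hE1 h'
  have hw1Y2 : w1 ≠ Y2 := by
    intro h
    rcases hinY2 E1 (by rw [← h]; exact hw1E) with h' | h'
    · exact hE1C h'
    · exact honeCB hE1 h'
  have hdB : d ∈ B := crossInA hdw1 hw1A
  have hd'B : d' ∈ B := crossInA hd'w1 hw1A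
  -- d, d' avoid the two β's
  have havoid : ∀ {e}, E e w1 → e ≠ B0 ∧ e ≠ P ∧ e ≠ C ∧ e ≠ CB := by
    intro e he
    refine ⟨?_, ?_, ?_, ?_⟩
    · intro h
      rcases houtB0 w1 (by rw [← h]; exact he) with h' | h'
      · exact hw1A1 h'
      · exact hw1A2 h'
    · intro h
      rcases houtP w1 (by rw [← h]; exact he) with h' | h'
      · exact hw1A1 h'
      · exact hw1A2 h'
    · intro h
      rcases houtC w1 (by rw [← h]; exact he) with h' | h'
      · exact hw1Y1 h'
      · exact hw1Y2 h'
    · intro h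
      rcases houtCB w1 (by rw [← h]; exact he) with h' | h'
      · exact hw1Y1 h'
      · exact hw1Y2 h'
  obtain ⟨hdB0, hdP, hdC, hdCB⟩ := havoid hdw1
  obtain ⟨hd'B0, hd'P, hd'C, hd'CB⟩ := havoid hd'w1
  -- choose D1 D2
  obtain ⟨D1, D2, hD1w1, hD2w1, hD1d, hD1E2, hE1D2, hD12, hD1B, hD2B, hD1B0, hD1P, hD1C, hD1CB,
      hD2B0, hD2P, hD2C, hD2CB⟩ :
      ∃ D1 D2, E D1 w1 ∧ E D2 w1 ∧ (D1 = d ∨ D1 = d') ∧ D1 ≠ E2 ∧ E1 ≠ D2 ∧ D1 ≠ D2 ∧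
        D1 ∈ B ∧ D2 ∈ B ∧ D1 ≠ B0 ∧ D1 ≠ P ∧ D1 ≠ C ∧ D1 ≠ CB ∧
        D2 ≠ B0 ∧ D2 ≠ P ∧ D2 ≠ C ∧ D2 ≠ CB := by
    by_cases c1 : d' = E1
    · refine ⟨d', d, hd'w1, hdw1, Or.inr rfl, ?_, ?_, hdd'.symm, hd'B, hdB,
        hd'B0, hd'P, hd'C, hd'CB, hdB0, hdP, hdC, hdCB⟩
      · rw [c1]; exact hE12
      · rw [← c1]; exact hdd'.symm
    by_cases c2 : d = E1
    · refine ⟨d, d', hdw1, hd'w1, Or.inl rfl, ?_, ?_, hdd', hdB, hd'B,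
        hdB0, hdP, hdC, hdCB, hd'B0, hd'P, hd'C, hd'CB⟩
      · rw [c2]; exact hE12
      · rw [← c2]; exact hdd'
    by_cases c3 : d' = E2
    · refine ⟨d, d', hdw1, hd'w1, Or.inl rfl, ?_, fun h => c1 h.symm, hdd', hdB, hd'B,
        hdB0, hdP, hdC, hdCB, hd'B0, hd'P, hd'C, hd'CB⟩
      · rw [c3] at hdd'; exact hdd'
    by_cases c4 : d = E2
    · refine ⟨d', d, hd'w1, hdw1, Or.inr rfl, ?_, fun h => c2 h.symm, hdd'.symm, hd'B, hdB,
        hd'B0, hd'P, hd'C, hd'CB, hdB0, hdP, hdC, hdCB⟩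
      · rw [c4] at hdd'; exact fun h => hdd' h.symm
    · exact ⟨d, d', hdw1, hd'w1, Or.inl rfl, c4, fun h => c1 h.symm, hdd', hdB, hd'B,
        hdB0, hdP, hdC, hdCB, hd'B0, hd'P, hd'C, hd'CB⟩
  -- the colouring
  obtain ⟨Γ, hΓ⟩ : ∃ Γ : V → Fin 3, Γ = fun v =>
    if v = A2 then 2 else if v = Y2 then 1 else if v ∈ A then 0
    else if v = B0 then 1 else if v = C then 2 else if v = P then 0 else if v = CB then 0
    else if v = E2 then 2 else if v = D2 then 2 else 1 := ⟨_, rfl⟩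
  have hAB' : ∀ {v w : V}, v ∈ A → w ∈ B → v ≠ w := fun hv hw h => notboth hv (h ▸ hw)
  have hB0nA : B0 ∉ A := fun h => notboth h hB0B
  have hPnA : P ∉ A := fun h => notboth h hPB
  have hCnA : C ∉ A := fun h => notboth h hCB'
  have hCBnA : CB ∉ A := fun h => notboth h hCBB
  have hE1nA : E1 ∉ A := fun h => notboth h hE1B
  have hE2nA : E2 ∉ A := fun h => notboth h hE2B
  have hD1nA : D1 ∉ A := fun h => notboth h hD1B
  have hD2nA : D2 ∉ A := fun h => notboth h hD2B
  -- colour evaluations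
  have gA2 : Γ A2 = 2 := by simp [hΓ]
  have gY2 : Γ Y2 = 1 := by simp [hΓ, hsY2A2]
  have gA1 : Γ A1 = 0 := by simp [hΓ, h12, Ne.symm hsY2A1, hA1]
  have gY1 : Γ Y1 = 0 := by simp [hΓ, hsY1A2, hY12, hY1]
  have gw1 : Γ w1 = 0 := by simp [hΓ, hw1A2, hw1Y2, hw1A]
  have gB0 : Γ B0 = 1 := by
    simp [hΓ, (hAB' hA2A hB0B).symm, (hAB' hY2A hB0B).symm, hB0nA]
  have gC : Γ C = 2 := by
    simp [hΓ, (hAB' hA2A hCB').symm, (hAB' hY2A hCB').symm, hCnA, hCB0]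
  have gP : Γ P = 0 := by
    simp [hΓ, (hAB' hA2A hPB).symm, (hAB' hY2A hPB).symm, hPnA,
      Ne.symm hBP, Ne.symm hCP]
  have gCB : Γ CB = 0 := by
    simp [hΓ, (hAB' hA2A hCBB).symm, (hAB' hY2A hCBB).symm, hCBnA,
      hCBB0, Ne.symm hCCB, hCBP]
  have gE1 : Γ E1 = 1 := by
    simp [hΓ, (hAB' hA2A hE1B).symm, (hAB' hY2A hE1B).symm, hE1nA,
      honeB0 hE1, honeP hE1, honeCB hE1, hE1C, hE12, hE1D2]
  have gE2 : Γ E2 = 2 := by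
    by_cases h : E2 = C
    · rw [h]; exact gC
    · simp [hΓ, (hAB' hA2A hE2B).symm, (hAB' hY2A hE2B).symm, hE2nA,
        honeB0 hE2, honeP hE2, honeCB hE2, h]
  have gD1 : Γ D1 = 1 := by
    simp [hΓ, (hAB' hA2A hD1B).symm, (hAB' hY2A hD1B).symm, hD1nA,
      hD1B0, hD1P, hD1C, hD1CB, hD1E2, hD12]
  have gD2 : Γ D2 = 2 := by
    by_cases h : D2 = E2
    · rw [h]; exact gE2
    · simp [hΓ, (hAB' hA2A hD2B).symm, (hAB' hY2A hD2B).symm, hD2nA,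
        hD2B0, hD2P, hD2C, hD2CB, h]
  -- classifications
  have cls0 : ∀ v, Γ v = 0 → (v ∈ A ∧ v ≠ A2 ∧ v ≠ Y2) ∨ v = P ∨ v = CB := by
    intro v hv
    simp only [hΓ] at hv
    by_cases w1' : v = A2
    · rw [if_pos w1'] at hv; exact absurd hv (by decide)
    rw [if_neg w1'] at hv
    by_cases w2 : v = Y2
    · rw [if_pos w2] at hv; exact absurd hv (by decide)
    rw [if_neg w2] at hv
    by_cases w3 : v ∈ A
    · exact Or.inl ⟨w3, w1', w2⟩
    rw [if_neg w3] at hv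
    by_cases w4 : v = B0
    · rw [if_pos w4] at hv; exact absurd hv (by decide)
    rw [if_neg w4] at hv
    by_cases w5 : v = C
    · rw [if_pos w5] at hv; exact absurd hv (by decide)
    rw [if_neg w5] at hv
    by_cases w6 : v = P
    · exact Or.inr (Or.inl w6)
    rw [if_neg w6] at hv
    by_cases w7 : v = CB
    · exact Or.inr (Or.inr w7)
    rw [if_neg w7] at hv
    by_cases w8 : v = E2
    · rw [if_pos w8] at hv; exact absurd hv (by decide)
    rw [if_neg w8] at hv
    by_cases w9 : v = D2
    · rw [if_pos w9] at hv; exact absurd hv (by decide)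
    rw [if_neg w9] at hv
    exact absurd hv (by decide)
  have clsA1c : ∀ v, Γ v = 1 → v ∈ A → v = Y2 := by
    intro v hv hvA
    simp only [hΓ] at hv
    by_cases w1' : v = A2
    · rw [if_pos w1'] at hv; exact absurd hv (by decide)
    rw [if_neg w1'] at hv
    by_cases w2 : v = Y2
    · exact w2
    rw [if_neg w2, if_pos hvA] at hv
    exact absurd hv (by decide)
  have clsA2c : ∀ v, Γ v = 2 → v ∈ A → v = A2 := by
    intro v hv hvA
    by_cases w1' : v = A2
    · exact w1'
    simp only [hΓ] at hv
    rw [if_neg w1'] at hv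
    by_cases w2 : v = Y2
    · rw [if_pos w2] at hv; exact absurd hv (by decide)
    rw [if_neg w2, if_pos hvA] at hv
    exact absurd hv (by decide)
  refine ⟨Γ, ?_, ?_⟩
  · intro i
    rcases fin3cases i with rfl | rfl | rfl
    · refine LAcyclic hdisj hcross ?_
      intro a ha haA
      by_cases haA1 : a = A1
      · subst haA1
        right
        intro x hx hEx
        rcases cls0 x hx with ⟨hxA, _, _⟩ | rfl | rfl
        · exact notboth hxA (crossOutA hEx haA)
        · exact honeP hEx rfl
        · exact hnE1 hEx
      by_cases haY1 : a = Y1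
      · subst haY1
        right
        intro x hx hEx
        rcases cls0 x hx with ⟨hxA, _, _⟩ | rfl | rfl
        · exact notboth hxA (crossOutA hEx haA)
        · exact hnE2 hEx
        · exact hns _ _ hCBY1 hEx
      · left
        intro x hx hEx
        have hxB : x ∈ B := crossInA hEx haA
        rcases cls0 x hx with ⟨hxA, _, _⟩ | rfl | rfl
        · exact notboth hxA hxB
        · rcases houtP a hEx with rfl | rfl
          · exact haA1 rfl
          · simp only [Set.mem_setOf_eq, gA2] at ha
            exact absurd ha (by decide)
        · rcases houtCB a hEx with rfl | rfl
          · exact haY1 rfl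
          · simp only [Set.mem_setOf_eq, gY2] at ha
            exact absurd ha (by decide)
    · refine LAcyclic hdisj hcross ?_
      intro a ha haA
      have := clsA1c a ha haA
      subst this
      left
      intro x hx hEx
      rcases hinY2 x hEx with rfl | rfl
      · simp only [Set.mem_setOf_eq, gC] at hx
        exact absurd hx (by decide)
      · simp only [Set.mem_setOf_eq, gCB] at hx
        exact absurd hx (by decide)
    · refine LAcyclic hdisj hcross ?_
      intro a ha haA
      have := clsA2c a ha haA
      subst this
      left
      intro x hx hEx
      rcases hinA2 x hEx with rfl | rfl
      · simp only [Set.mem_setOf_eq, gB0] at hx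
        exact absurd hx (by decide)
      · simp only [Set.mem_setOf_eq, gP] at hx
        exact absurd hx (by decide)
  · intro i
    rcases fin3cases i with rfl | rfl | rfl
    · constructor
      · refine ⟨A1, gA1, fun j hj => ?_⟩
        rw [gA1] at hj
        rcases fin3cases j with rfl | rfl | rfl
        · exact absurd rfl hj
        · exact ⟨E1, hE1, gE1⟩
        · exact ⟨E2, hE2, gE2⟩
      · refine ⟨w1, gw1, fun j hj => ?_⟩
        rw [gw1] at hj
        rcases fin3cases j with rfl | rfl | rfl
        · exact absurd rfl hj
        · exact ⟨D1, hD1w1, gD1⟩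
        · exact ⟨D2, hD2w1, gD2⟩
    · constructor
      · refine ⟨B0, gB0, fun j hj => ?_⟩
        rw [gB0] at hj
        rcases fin3cases j with rfl | rfl | rfl
        · exact ⟨A1, hB0A1, gA1⟩
        · exact absurd rfl hj
        · exact ⟨A2, hB0A2, gA2⟩
      · refine ⟨Y2, gY2, fun j hj => ?_⟩
        rw [gY2] at hj
        rcases fin3cases j with rfl | rfl | rfl
        · exact ⟨CB, hCBY2, gCB⟩
        · exact absurd rfl hj
        · exact ⟨C, hCY2, gC⟩
    · constructor
      · refine ⟨C, gC, fun j hj => ?_⟩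
        rw [gC] at hj
        rcases fin3cases j with rfl | rfl | rfl
        · exact ⟨Y1, hCY1, gY1⟩
        · exact ⟨Y2, hCY2, gY2⟩
        · exact absurd rfl hj
      · refine ⟨A2, gA2, fun j hj => ?_⟩
        rw [gA2] at hj
        rcases fin3cases j with rfl | rfl | rfl
        · exact ⟨P, hPA2, gP⟩
        · exact ⟨B0, hB0A2, gB0⟩
        · exact absurd rfl hj

end Stmt10Aux
namespace Stmt10Aux

lemma d8case {V : Type*} {E : V → V → Prop} {A B : Set V} (hdisj : Disjoint A B)
    (hcross : ∀ u v, E u v → (u ∈ A ∧ v ∈ B) ∨ (u ∈ B ∧ v ∈ A))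
    (houtp : ∀ v : V, ∃ x y, x ≠ y ∧ E v x ∧ E v y ∧ ∀ w, E v w → w = x ∨ w = y)
    (hinp : ∀ v : V, ∃ x y, x ≠ y ∧ E x v ∧ E y v ∧ ∀ w, E w v → w = x ∨ w = y)
    {a1 a2 bb bb' y1 y2 c c' : V}
    (ha1A : a1 ∈ A)
    (g1 : Gad E a1 a2 bb bb') (g2 : Gad E y1 y2 c c')
    (hy1a1 : y1 ≠ a1) (hy1a2 : y1 ≠ a2) (hy2a1 : y2 ≠ a1) (hy2a2 : y2 ≠ a2)
    (F12 : E a1 c ∧ E a1 c' ∧ E a2 c ∧ E a2 c')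
    (F21 : E y1 bb ∧ E y1 bb' ∧ E y2 bb ∧ E y2 bb')
    (covA : ∀ v, v ∈ A → v = a1 ∨ v = a2 ∨ v = y1 ∨ v = y2) :
    ∃ Γ : V → Fin 3, IsBColoring E Γ := by
  classical
  obtain ⟨h12, hbbne, hba1, hba2, hb'a1, hb'a2, hina1, hina2, houtbb, houtbb'⟩ := g1
  obtain ⟨hy12, hccne, hcy1, hcy2, hc'y1, hc'y2, hiny1, hiny2, houtc, houtc'⟩ := g2
  have notboth : ∀ {v}, v ∈ A → v ∈ B → False := fun hA hB => Set.disjoint_left.mp hdisj hA hB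
  have crossOutB : ∀ {u v}, E u v → u ∈ B → v ∈ A := by
    intro u v h hu
    rcases hcross u v h with ⟨hA, _⟩ | ⟨_, hA⟩
    · exact (notboth hA hu).elim
    · exact hA
  have crossInA : ∀ {u v}, E u v → v ∈ A → u ∈ B := by
    intro u v h hv
    rcases hcross u v h with ⟨_, hB⟩ | ⟨hB, _⟩
    · exact (notboth hv hB).elim
    · exact hB
  have crossOutA : ∀ {u v}, E u v → u ∈ A → v ∈ B := by
    intro u v h hu
    rcases hcross u v h with ⟨_, hB⟩ | ⟨hB, _⟩
    · exact hB
    · exact (notboth hu hB).elim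
  have hbbB : bb ∈ B := crossInA hba1 ha1A
  have hbb'B : bb' ∈ B := crossInA hb'a1 ha1A
  have ha2A : a2 ∈ A := crossOutB hba2 hbbB
  have hcB : c ∈ B := crossOutA F12.1 ha1A
  have hc'B : c' ∈ B := crossOutA F12.2.1 ha1A
  have hy1A : y1 ∈ A := crossOutB hcy1 hcB
  have hy2A : y2 ∈ A := crossOutB hcy2 hcB
  -- β disjointness
  have hcbb : c ≠ bb := fun h => by
    rcases houtbb y1 (by rw [← h]; exact hcy1) with h' | h'
    · exact hy1a1 h'
    · exact hy1a2 h'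
  have hcbb' : c ≠ bb' := fun h => by
    rcases houtbb' y1 (by rw [← h]; exact hcy1) with h' | h'
    · exact hy1a1 h'
    · exact hy1a2 h'
  have hc'bb : c' ≠ bb := fun h => by
    rcases houtbb y1 (by rw [← h]; exact hc'y1) with h' | h'
    · exact hy1a1 h'
    · exact hy1a2 h'
  have hc'bb' : c' ≠ bb' := fun h => by
    rcases houtbb' y1 (by rw [← h]; exact hc'y1) with h' | h'
    · exact hy1a1 h'
    · exact hy1a2 h'
  -- degree characterizations
  have hinbb : ∀ w, E w bb → w = y1 ∨ w = y2 := two_of_in hinp F21.1 F21.2.2.1 hy12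
  have hinbb' : ∀ w, E w bb' → w = y1 ∨ w = y2 := two_of_in hinp F21.2.1 F21.2.2.2 hy12
  have houta1 : ∀ w, E a1 w → w = c ∨ w = c' := two_of_out houtp F12.1 F12.2.1 hccne
  have houta2 : ∀ w, E a2 w → w = c ∨ w = c' := two_of_out houtp F12.2.2.1 F12.2.2.2 hccne
  have houty1 : ∀ w, E y1 w → w = bb ∨ w = bb' := two_of_out houtp F21.1 F21.2.1 hbbne
  have houty2 : ∀ w, E y2 w → w = bb ∨ w = bb' := two_of_out houtp F21.2.2.1 F21.2.2.2 hbbne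
  have hAB' : ∀ {v w : V}, v ∈ A → w ∈ B → v ≠ w := fun hv hw h => notboth hv (h ▸ hw)
  -- the colouring
  obtain ⟨Γ, hΓ⟩ : ∃ Γ : V → Fin 3, Γ = fun v =>
      if v = bb then 0 else if v = a1 then 0 else if v = c then 0
      else if v = c' then 2 else if v = y2 then 2 else 1 := ⟨_, rfl⟩
  have gbb : Γ bb = 0 := by simp [hΓ]
  have ga1 : Γ a1 = 0 := by simp [hΓ, hAB' ha1A hbbB]
  have gc : Γ c = 0 := by simp [hΓ, hcbb, (hAB' ha1A hcB).symm]
  have gc' : Γ c' = 2 := by simp [hΓ, hc'bb, (hAB' ha1A hc'B).symm, Ne.symm hccne]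
  have gy2 : Γ y2 = 2 := by
    simp [hΓ, hAB' hy2A hbbB, hy2a1, hAB' hy2A hcB, hAB' hy2A hc'B]
  have gbb' : Γ bb' = 1 := by
    simp [hΓ, Ne.symm hbbne, (hAB' ha1A hbb'B).symm, Ne.symm hcbb', Ne.symm hc'bb',
      (hAB' hy2A hbb'B).symm]
  have ga2 : Γ a2 = 1 := by
    simp [hΓ, hAB' ha2A hbbB, Ne.symm h12, hAB' ha2A hcB, hAB' ha2A hc'B, Ne.symm hy2a2]
  have gy1 : Γ y1 = 1 := by
    simp [hΓ, hAB' hy1A hbbB, hy1a1, hAB' hy1A hcB, hAB' hy1A hc'B, hy12]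
  -- classifications
  have cls0 : ∀ v, Γ v = 0 → v = bb ∨ v = a1 ∨ v = c := by
    intro v hv
    simp only [hΓ] at hv
    by_cases w1 : v = bb
    · exact Or.inl w1
    rw [if_neg w1] at hv
    by_cases w2 : v = a1
    · exact Or.inr (Or.inl w2)
    rw [if_neg w2] at hv
    by_cases w3 : v = c
    · exact Or.inr (Or.inr w3)
    rw [if_neg w3] at hv
    by_cases w4 : v = c'
    · rw [if_pos w4] at hv; exact absurd hv (by decide)
    rw [if_neg w4] at hv
    by_cases w5 : v = y2
    · rw [if_pos w5] at hv; exact absurd hv (by decide)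
    rw [if_neg w5] at hv
    exact absurd hv (by decide)
  have cls1A : ∀ v, Γ v = 1 → v ∈ A → v = a2 ∨ v = y1 := by
    intro v hv hvA
    rcases covA v hvA with rfl | rfl | rfl | rfl
    · rw [ga1] at hv; exact absurd hv (by decide)
    · exact Or.inl rfl
    · exact Or.inr rfl
    · rw [gy2] at hv; exact absurd hv (by decide)
  have cls2A : ∀ v, Γ v = 2 → v ∈ A → v = y2 := by
    intro v hv hvA
    rcases covA v hvA with rfl | rfl | rfl | rfl
    · rw [ga1] at hv; exact absurd hv (by decide)
    · rw [ga2] at hv; exact absurd hv (by decide)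
    · rw [gy1] at hv; exact absurd hv (by decide)
    · rfl
  refine ⟨Γ, ?_, ?_⟩
  · intro i
    rcases fin3cases i with rfl | rfl | rfl
    · refine LAcyclic hdisj.symm (fun u v h => (hcross u v h).symm) ?_
      intro f hf hfB
      rcases cls0 f hf with rfl | rfl | rfl
      · left
        intro x hx hEx
        rcases hinbb x hEx with rfl | rfl
        · rw [Set.mem_setOf_eq, gy1] at hx; exact absurd hx (by decide)
        · rw [Set.mem_setOf_eq, gy2] at hx; exact absurd hx (by decide)
      · exact (notboth ha1A hfB).elim
      · right
        intro x hx hEx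
        rcases houtc x hEx with rfl | rfl
        · rw [Set.mem_setOf_eq, gy1] at hx; exact absurd hx (by decide)
        · rw [Set.mem_setOf_eq, gy2] at hx; exact absurd hx (by decide)
    · refine LAcyclic hdisj hcross ?_
      intro a ha haA
      rcases cls1A a ha haA with rfl | rfl
      · right
        intro x hx hEx
        rcases houta2 x hEx with rfl | rfl
        · rw [Set.mem_setOf_eq, gc] at hx; exact absurd hx (by decide)
        · rw [Set.mem_setOf_eq, gc'] at hx; exact absurd hx (by decide)
      · left
        intro x hx hEx
        rcases hiny1 x hEx with rfl | rfl
        · rw [Set.mem_setOf_eq, gc] at hx; exact absurd hx (by decide)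
        · rw [Set.mem_setOf_eq, gc'] at hx; exact absurd hx (by decide)
    · refine LAcyclic hdisj hcross ?_
      intro a ha haA
      rcases cls2A a ha haA with rfl
      right
      intro x hx hEx
      rcases houty2 x hEx with rfl | rfl
      · rw [Set.mem_setOf_eq, gbb] at hx; exact absurd hx (by decide)
      · rw [Set.mem_setOf_eq, gbb'] at hx; exact absurd hx (by decide)
  · intro i
    rcases fin3cases i with rfl | rfl | rfl
    · constructor
      · refine ⟨c, gc, fun j hj => ?_⟩
        rw [gc] at hj
        rcases fin3cases j with rfl | rfl | rfl
        · exact absurd rfl hj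
        · exact ⟨y1, hcy1, gy1⟩
        · exact ⟨y2, hcy2, gy2⟩
      · refine ⟨bb, gbb, fun j hj => ?_⟩
        rw [gbb] at hj
        rcases fin3cases j with rfl | rfl | rfl
        · exact absurd rfl hj
        · exact ⟨y1, F21.1, gy1⟩
        · exact ⟨y2, F21.2.2.1, gy2⟩
    · constructor
      · refine ⟨a2, ga2, fun j hj => ?_⟩
        rw [ga2] at hj
        rcases fin3cases j with rfl | rfl | rfl
        · exact ⟨c, F12.2.2.1, gc⟩
        · exact absurd rfl hj
        · exact ⟨c', F12.2.2.2, gc'⟩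
      · refine ⟨y1, gy1, fun j hj => ?_⟩
        rw [gy1] at hj
        rcases fin3cases j with rfl | rfl | rfl
        · exact ⟨c, hcy1, gc⟩
        · exact absurd rfl hj
        · exact ⟨c', hc'y1, gc'⟩
    · constructor
      · refine ⟨y2, gy2, fun j hj => ?_⟩
        rw [gy2] at hj
        rcases fin3cases j with rfl | rfl | rfl
        · exact ⟨bb, F21.2.2.1, gbb⟩
        · exact ⟨bb', F21.2.2.2, gbb'⟩
        · exact absurd rfl hj
      · refine ⟨c', gc', fun j hj => ?_⟩
        rw [gc'] at hj
        rcases fin3cases j with rfl | rfl | rfl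
        · exact ⟨a1, F12.2.1, ga1⟩
        · exact ⟨a2, F12.2.2.2, ga2⟩
        · exact absurd rfl hj

end Stmt10Aux
namespace Stmt10Aux

lemma d12case {V : Type*} {E : V → V → Prop} {A B : Set V} (hdisj : Disjoint A B)
    (hcross : ∀ u v, E u v → (u ∈ A ∧ v ∈ B) ∨ (u ∈ B ∧ v ∈ A))
    (houtp : ∀ v : V, ∃ x y, x ≠ y ∧ E v x ∧ E v y ∧ ∀ w, E v w → w = x ∨ w = y)
    (hinp : ∀ v : V, ∃ x y, x ≠ y ∧ E x v ∧ E y v ∧ ∀ w, E w v → w = x ∨ w = y)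
    {a1 x1 b1 d1 a2 x2 b2 d2 a3 x3 b3 d3 : V}
    (ha1A : a1 ∈ A)
    (g1 : Gad E a1 x1 b1 d1) (g2 : Gad E a2 x2 b2 d2) (g3 : Gad E a3 x3 b3 d3)
    (s21 : a2 ≠ a1) (s21' : a2 ≠ x1) (s21'' : x2 ≠ a1) (s21''' : x2 ≠ x1)
    (s31 : a3 ≠ a1) (s31' : a3 ≠ x1) (s31'' : x3 ≠ a1) (s31''' : x3 ≠ x1)
    (s32 : a3 ≠ a2) (s32' : a3 ≠ x2) (s32'' : x3 ≠ a2) (s32''' : x3 ≠ x2)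
    (F12 : E a1 b2 ∧ E a1 d2 ∧ E x1 b2 ∧ E x1 d2)
    (F23 : E a2 b3 ∧ E a2 d3 ∧ E x2 b3 ∧ E x2 d3)
    (F31 : E a3 b1 ∧ E a3 d1 ∧ E x3 b1 ∧ E x3 d1)
    (covA : ∀ v, v ∈ A → v = a1 ∨ v = x1 ∨ v = a2 ∨ v = x2 ∨ v = a3 ∨ v = x3) :
    ∃ Γ : V → Fin 3, IsBColoring E Γ := by
  classical
  obtain ⟨gn1, gm1, e1a, e1x, f1a, f1x, in1a, in1x, out1b, out1d⟩ := g1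
  obtain ⟨gn2, gm2, e2a, e2x, f2a, f2x, in2a, in2x, out2b, out2d⟩ := g2
  obtain ⟨gn3, gm3, e3a, e3x, f3a, f3x, in3a, in3x, out3b, out3d⟩ := g3
  have notboth : ∀ {v}, v ∈ A → v ∈ B → False := fun hA hB => Set.disjoint_left.mp hdisj hA hB
  have crossOutB : ∀ {u v}, E u v → u ∈ B → v ∈ A := by
    intro u v h hu
    rcases hcross u v h with ⟨hA, _⟩ | ⟨_, hA⟩
    · exact (notboth hA hu).elim
    · exact hA
  have crossInA : ∀ {u v}, E u v → v ∈ A → u ∈ B := by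
    intro u v h hv
    rcases hcross u v h with ⟨_, hB⟩ | ⟨hB, _⟩
    · exact (notboth hv hB).elim
    · exact hB
  have crossOutA : ∀ {u v}, E u v → u ∈ A → v ∈ B := by
    intro u v h hu
    rcases hcross u v h with ⟨_, hB⟩ | ⟨hB, _⟩
    · exact hB
    · exact (notboth hu hB).elim
  have hb1B : b1 ∈ B := crossInA e1a ha1A
  have hd1B : d1 ∈ B := crossInA f1a ha1A
  have hx1A : x1 ∈ A := crossOutB e1x hb1B
  have hb2B : b2 ∈ B := crossOutA F12.1 ha1A
  have hd2B : d2 ∈ B := crossOutA F12.2.1 ha1A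
  have ha2A : a2 ∈ A := crossOutB e2a hb2B
  have hx2A : x2 ∈ A := crossOutB e2x hb2B
  have hb3B : b3 ∈ B := crossOutA F23.1 ha2A
  have hd3B : d3 ∈ B := crossOutA F23.2.1 ha2A
  have ha3A : a3 ∈ A := crossOutB e3a hb3B
  have hx3A : x3 ∈ A := crossOutB e3x hb3B
  -- β disjointness
  have avoid12 : ∀ {f}, E f a2 → f ≠ b1 ∧ f ≠ d1 := by
    intro f hf
    constructor
    · intro h
      rcases out1b a2 (by rw [← h]; exact hf) with h' | h'
      · exact s21 h'
      · exact s21' h'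
    · intro h
      rcases out1d a2 (by rw [← h]; exact hf) with h' | h'
      · exact s21 h'
      · exact s21' h'
  have avoid23 : ∀ {f}, E f a3 → f ≠ b2 ∧ f ≠ d2 := by
    intro f hf
    constructor
    · intro h
      rcases out2b a3 (by rw [← h]; exact hf) with h' | h'
      · exact s32 h'
      · exact s32' h'
    · intro h
      rcases out2d a3 (by rw [← h]; exact hf) with h' | h'
      · exact s32 h'
      · exact s32' h'
  have avoid13 : ∀ {f}, E f a3 → f ≠ b1 ∧ f ≠ d1 := by
    intro f hf
    constructor
    · intro h
      rcases out1b a3 (by rw [← h]; exact hf) with h' | h'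
      · exact s31 h'
      · exact s31' h'
    · intro h
      rcases out1d a3 (by rw [← h]; exact hf) with h' | h'
      · exact s31 h'
      · exact s31' h'
  obtain ⟨hb2b1, hb2d1⟩ := avoid12 e2a
  obtain ⟨hd2b1, hd2d1⟩ := avoid12 f2a
  obtain ⟨hb3b2, hb3d2⟩ := avoid23 e3a
  obtain ⟨hd3b2, hd3d2⟩ := avoid23 f3a
  obtain ⟨hb3b1, hb3d1⟩ := avoid13 e3a
  obtain ⟨hd3b1, hd3d1⟩ := avoid13 f3a
  -- degree characterizations
  have houta1 : ∀ w, E a1 w → w = b2 ∨ w = d2 := two_of_out houtp F12.1 F12.2.1 gm2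
  have houtx1 : ∀ w, E x1 w → w = b2 ∨ w = d2 := two_of_out houtp F12.2.2.1 F12.2.2.2 gm2
  have houta2 : ∀ w, E a2 w → w = b3 ∨ w = d3 := two_of_out houtp F23.1 F23.2.1 gm3
  have houtx2 : ∀ w, E x2 w → w = b3 ∨ w = d3 := two_of_out houtp F23.2.2.1 F23.2.2.2 gm3
  have houta3 : ∀ w, E a3 w → w = b1 ∨ w = d1 := two_of_out houtp F31.1 F31.2.1 gm1
  have houtx3 : ∀ w, E x3 w → w = b1 ∨ w = d1 := two_of_out houtp F31.2.2.1 F31.2.2.2 gm1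
  have hAB' : ∀ {v w : V}, v ∈ A → w ∈ B → v ≠ w := fun hv hw h => notboth hv (h ▸ hw)
  -- the colouring
  obtain ⟨Γ, hΓ⟩ : ∃ Γ : V → Fin 3, Γ = fun v =>
      if v = b1 then 0 else if v = d1 then 0 else if v = a1 then 0 else if v = x1 then 0
      else if v = a2 then 0 else if v = b3 then 0 else if v = x2 then 2 else if v = x3 then 2
      else 1 := ⟨_, rfl⟩
  have gb1 : Γ b1 = 0 := by simp [hΓ]
  have gd1 : Γ d1 = 0 := by simp [hΓ, Ne.symm gm1]
  have ga1 : Γ a1 = 0 := by simp [hΓ, hAB' ha1A hb1B, hAB' ha1A hd1B]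
  have gx1 : Γ x1 = 0 := by simp [hΓ, hAB' hx1A hb1B, hAB' hx1A hd1B, Ne.symm gn1]
  have ga2 : Γ a2 = 0 := by simp [hΓ, hAB' ha2A hb1B, hAB' ha2A hd1B, s21, s21']
  have gb3 : Γ b3 = 0 := by
    simp [hΓ, hb3b1, hb3d1, (hAB' ha1A hb3B).symm, (hAB' hx1A hb3B).symm, (hAB' ha2A hb3B).symm]
  have gx2 : Γ x2 = 2 := by
    simp [hΓ, hAB' hx2A hb1B, hAB' hx2A hd1B, s21'', s21''', Ne.symm gn2, hAB' hx2A hb3B]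
  have gx3 : Γ x3 = 2 := by
    simp [hΓ, hAB' hx3A hb1B, hAB' hx3A hd1B, s31'', s31''', s32'', hAB' hx3A hb3B,
      Ne.symm s32''']
  have gb2 : Γ b2 = 1 := by
    simp [hΓ, hb2b1, hb2d1, (hAB' ha1A hb2B).symm, (hAB' hx1A hb2B).symm, (hAB' ha2A hb2B).symm,
      (hAB' hx2A hb2B).symm, (hAB' hx3A hb2B).symm, Ne.symm hb3b2]
  have gd2 : Γ d2 = 1 := by
    simp [hΓ, hd2b1, hd2d1, (hAB' ha1A hd2B).symm, (hAB' hx1A hd2B).symm, (hAB' ha2A hd2B).symm,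
      (hAB' hx2A hd2B).symm, (hAB' hx3A hd2B).symm, Ne.symm hb3d2]
  have gd3 : Γ d3 = 1 := by
    simp [hΓ, hd3b1, hd3d1, (hAB' ha1A hd3B).symm, (hAB' hx1A hd3B).symm, (hAB' ha2A hd3B).symm,
      (hAB' hx2A hd3B).symm, (hAB' hx3A hd3B).symm, Ne.symm gm3]
  have ga3 : Γ a3 = 1 := by
    simp [hΓ, hAB' ha3A hb1B, hAB' ha3A hd1B, s31, s31', s32, hAB' ha3A hb3B, s32', gn3]
  -- classification
  have cls0 : ∀ v, Γ v = 0 → v = b1 ∨ v = d1 ∨ v = a1 ∨ v = x1 ∨ v = a2 ∨ v = b3 := by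
    intro v hv
    simp only [hΓ] at hv
    by_cases w1 : v = b1
    · exact Or.inl w1
    rw [if_neg w1] at hv
    by_cases w2 : v = d1
    · exact Or.inr (Or.inl w2)
    rw [if_neg w2] at hv
    by_cases w3 : v = a1
    · exact Or.inr (Or.inr (Or.inl w3))
    rw [if_neg w3] at hv
    by_cases w4 : v = x1
    · exact Or.inr (Or.inr (Or.inr (Or.inl w4)))
    rw [if_neg w4] at hv
    by_cases w5 : v = a2
    · exact Or.inr (Or.inr (Or.inr (Or.inr (Or.inl w5))))
    rw [if_neg w5] at hv
    by_cases w6 : v = b3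
    · exact Or.inr (Or.inr (Or.inr (Or.inr (Or.inr w6))))
    rw [if_neg w6] at hv
    by_cases w7 : v = x2
    · rw [if_pos w7] at hv; exact absurd hv (by decide)
    rw [if_neg w7] at hv
    by_cases w8 : v = x3
    · rw [if_pos w8] at hv; exact absurd hv (by decide)
    rw [if_neg w8] at hv
    exact absurd hv (by decide)
  have cls1A : ∀ v, Γ v = 1 → v ∈ A → v = a3 := by
    intro v hv hvA
    rcases covA v hvA with rfl | rfl | rfl | rfl | rfl | rfl
    · rw [ga1] at hv; exact absurd hv (by decide)
    · rw [gx1] at hv; exact absurd hv (by decide)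
    · rw [ga2] at hv; exact absurd hv (by decide)
    · rw [gx2] at hv; exact absurd hv (by decide)
    · rfl
    · rw [gx3] at hv; exact absurd hv (by decide)
  have cls2A : ∀ v, Γ v = 2 → v ∈ A → v = x2 ∨ v = x3 := by
    intro v hv hvA
    rcases covA v hvA with rfl | rfl | rfl | rfl | rfl | rfl
    · rw [ga1] at hv; exact absurd hv (by decide)
    · rw [gx1] at hv; exact absurd hv (by decide)
    · rw [ga2] at hv; exact absurd hv (by decide)
    · exact Or.inl rfl
    · rw [ga3] at hv; exact absurd hv (by decide)
    · exact Or.inr rfl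
  refine ⟨Γ, ?_, ?_⟩
  · intro i
    rcases fin3cases i with rfl | rfl | rfl
    · refine LAcyclic hdisj hcross ?_
      intro a ha haA
      rcases cls0 a ha with rfl | rfl | rfl | rfl | rfl | rfl
      · exact (notboth haA hb1B).elim
      · exact (notboth haA hd1B).elim
      · right
        intro x hx hEx
        rcases houta1 x hEx with rfl | rfl
        · rw [Set.mem_setOf_eq, gb2] at hx; exact absurd hx (by decide)
        · rw [Set.mem_setOf_eq, gd2] at hx; exact absurd hx (by decide)
      · right
        intro x hx hEx
        rcases houtx1 x hEx with rfl | rfl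
        · rw [Set.mem_setOf_eq, gb2] at hx; exact absurd hx (by decide)
        · rw [Set.mem_setOf_eq, gd2] at hx; exact absurd hx (by decide)
      · left
        intro x hx hEx
        rcases in2a x hEx with rfl | rfl
        · rw [Set.mem_setOf_eq, gb2] at hx; exact absurd hx (by decide)
        · rw [Set.mem_setOf_eq, gd2] at hx; exact absurd hx (by decide)
      · exact (notboth haA hb3B).elim
    · refine LAcyclic hdisj hcross ?_
      intro a ha haA
      rcases cls1A a ha haA with rfl
      right
      intro x hx hEx
      rcases houta3 x hEx with rfl | rfl
      · rw [Set.mem_setOf_eq, gb1] at hx; exact absurd hx (by decide)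
      · rw [Set.mem_setOf_eq, gd1] at hx; exact absurd hx (by decide)
    · refine LAcyclic hdisj hcross ?_
      intro a ha haA
      rcases cls2A a ha haA with rfl | rfl
      · right
        intro x hx hEx
        rcases houtx2 x hEx with rfl | rfl
        · rw [Set.mem_setOf_eq, gb3] at hx; exact absurd hx (by decide)
        · rw [Set.mem_setOf_eq, gd3] at hx; exact absurd hx (by decide)
      · right
        intro x hx hEx
        rcases houtx3 x hEx with rfl | rfl
        · rw [Set.mem_setOf_eq, gb1] at hx; exact absurd hx (by decide)
        · rw [Set.mem_setOf_eq, gd1] at hx; exact absurd hx (by decide)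
  · intro i
    rcases fin3cases i with rfl | rfl | rfl
    · constructor
      · refine ⟨b3, gb3, fun j hj => ?_⟩
        rw [gb3] at hj
        rcases fin3cases j with rfl | rfl | rfl
        · exact absurd rfl hj
        · exact ⟨a3, e3a, ga3⟩
        · exact ⟨x3, e3x, gx3⟩
      · refine ⟨b1, gb1, fun j hj => ?_⟩
        rw [gb1] at hj
        rcases fin3cases j with rfl | rfl | rfl
        · exact absurd rfl hj
        · exact ⟨a3, F31.1, ga3⟩
        · exact ⟨x3, F31.2.2.1, gx3⟩
    · constructor
      · refine ⟨b2, gb2, fun j hj => ?_⟩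
        rw [gb2] at hj
        rcases fin3cases j with rfl | rfl | rfl
        · exact ⟨a2, e2a, ga2⟩
        · exact absurd rfl hj
        · exact ⟨x2, e2x, gx2⟩
      · refine ⟨d3, gd3, fun j hj => ?_⟩
        rw [gd3] at hj
        rcases fin3cases j with rfl | rfl | rfl
        · exact ⟨a2, F23.2.1, ga2⟩
        · exact absurd rfl hj
        · exact ⟨x2, F23.2.2.2, gx2⟩
    · constructor
      · refine ⟨x2, gx2, fun j hj => ?_⟩
        rw [gx2] at hj
        rcases fin3cases j with rfl | rfl | rfl
        · exact ⟨b3, F23.2.2.1, gb3⟩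
        · exact ⟨d3, F23.2.2.2, gd3⟩
        · exact absurd rfl hj
      · refine ⟨x3, gx3, fun j hj => ?_⟩
        rw [gx3] at hj
        rcases fin3cases j with rfl | rfl | rfl
        · exact ⟨b3, e3x, gb3⟩
        · exact ⟨d3, f3x, gd3⟩
        · exact absurd rfl hj

end Stmt10Aux
namespace Stmt10Aux

set_option maxHeartbeats 1000000 in
lemma caseII {V : Type*} {E : V → V → Prop} {A B : Set V} (hdisj : Disjoint A B)
    (hcross : ∀ u v, E u v → (u ∈ A ∧ v ∈ B) ∨ (u ∈ B ∧ v ∈ A))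
    (hns : ∀ u v, E u v → ¬ E v u)
    (houtp : ∀ v : V, ∃ x y, x ≠ y ∧ E v x ∧ E v y ∧ ∀ w, E v w → w = x ∨ w = y)
    (hinp : ∀ v : V, ∃ x y, x ≠ y ∧ E x v ∧ E y v ∧ ∀ w, E w v → w = x ∨ w = y)
    (hbad : ∀ u x y, E u x → E u y → x ≠ y → ∃ w, E w x ∧ E w y ∧ w ≠ u)
    {a0 : V} (ha0 : a0 ∈ A) : ∃ Γ : V → Fin 3, IsBColoring E Γ := by
  classical
  have notboth : ∀ {v}, v ∈ A → v ∈ B → False := fun hA hB => Set.disjoint_left.mp hdisj hA hB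
  have crossOutB : ∀ {u v}, E u v → u ∈ B → v ∈ A := by
    intro u v h hu
    rcases hcross u v h with ⟨hA, _⟩ | ⟨_, hA⟩
    · exact (notboth hA hu).elim
    · exact hA
  have crossInA : ∀ {u v}, E u v → v ∈ A → u ∈ B := by
    intro u v h hv
    rcases hcross u v h with ⟨_, hB⟩ | ⟨hB, _⟩
    · exact (notboth hv hB).elim
    · exact hB
  have crossOutA : ∀ {u v}, E u v → u ∈ A → v ∈ B := by
    intro u v h hu
    rcases hcross u v h with ⟨_, hB⟩ | ⟨hB, _⟩
    · exact hB
    · exact (notboth hu hB).elim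
  by_cases hgp : ∃ a x bb bb' y x' c c', a ∈ A ∧ y ∈ A ∧ y ≠ a ∧ y ≠ x ∧
      Gad E a x bb bb' ∧ Gad E y x' c c' ∧
      (∃ u f, (u = a ∨ u = x) ∧ (f = c ∨ f = c') ∧ ¬ E u f) ∧
      (∃ u f, (u = y ∨ u = x') ∧ (f = bb ∨ f = bb') ∧ ¬ E u f)
  · obtain ⟨a, x, bb, bb', y, x', c, c', haA, hyA, hya, hyx, g1, g2,
      ⟨u, f, hu, hf, huf⟩, ⟨u', f', hu', hf', hu'f'⟩⟩ := hgp
    have hbbB : bb ∈ B := crossInA g1.2.2.1 haA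
    have hxA : x ∈ A := crossOutB g1.2.2.2.1 hbbB
    have hcB : c ∈ B := crossInA g2.2.2.1 hyA
    have hx'A : x' ∈ A := crossOutB g2.2.2.2.1 hcB
    -- x' avoids the first gadget's α
    have hx'ax : x' ≠ a ∧ x' ≠ x := by
      constructor
      · intro h
        rcases g1.2.2.2.2.2.2.1 c (by rw [← h]; exact g2.2.2.2.1) with h' | h'
        · rcases (h' ▸ g1.2.2.2.2.2.2.2.2.1 : ∀ w, E c w → w = a ∨ w = x) y g2.2.2.1 with
            h'' | h''
          · exact hya h''
          · exact hyx h''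
        · rcases (h' ▸ g1.2.2.2.2.2.2.2.2.2 : ∀ w, E c w → w = a ∨ w = x) y g2.2.2.1 with
            h'' | h''
          · exact hya h''
          · exact hyx h''
      · intro h
        rcases g1.2.2.2.2.2.2.2.1 c (by rw [← h]; exact g2.2.2.2.1) with h' | h'
        · rcases (h' ▸ g1.2.2.2.2.2.2.2.2.1 : ∀ w, E c w → w = a ∨ w = x) y g2.2.2.1 with
            h'' | h''
          · exact hya h''
          · exact hyx h''
        · rcases (h' ▸ g1.2.2.2.2.2.2.2.2.2 : ∀ w, E c w → w = a ∨ w = x) y g2.2.2.1 with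
            h'' | h''
          · exact hya h''
          · exact hyx h''
    -- relabelings
    obtain ⟨A1, A2, gA, hnAf, hmemA⟩ : ∃ A1 A2, Gad E A1 A2 bb bb' ∧ ¬ E A1 f ∧
        ((A1 = a ∧ A2 = x) ∨ (A1 = x ∧ A2 = a)) := by
      rcases hu with rfl | rfl
      · exact ⟨u, x, g1, huf, Or.inl ⟨rfl, rfl⟩⟩
      · exact ⟨u, a, g1.swapA, huf, Or.inr ⟨rfl, rfl⟩⟩
    obtain ⟨B0, P, gA2, hPf'⟩ : ∃ B0 P, Gad E A1 A2 B0 P ∧ P = f' := by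
      rcases hf' with rfl | rfl
      · exact ⟨bb', f', gA.swapB, rfl⟩
      · exact ⟨bb, f', gA, rfl⟩
    obtain ⟨Y1, Y2, gY, hnYf', hmemY⟩ : ∃ Y1 Y2, Gad E Y1 Y2 c c' ∧ ¬ E Y1 f' ∧
        ((Y1 = y ∧ Y2 = x') ∨ (Y1 = x' ∧ Y2 = y)) := by
      rcases hu' with rfl | rfl
      · exact ⟨u', x', g2, hu'f', Or.inl ⟨rfl, rfl⟩⟩
      · exact ⟨u', y, g2.swapA, hu'f', Or.inr ⟨rfl, rfl⟩⟩
    obtain ⟨C, CB, gY2, hCBf⟩ : ∃ C CB, Gad E Y1 Y2 C CB ∧ CB = f := by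
      rcases hf with rfl | rfl
      · exact ⟨c', f, gY.swapB, rfl⟩
      · exact ⟨c, f, gY, rfl⟩
    have base : ∀ {v w : V}, (v = y ∨ v = x') → (w = a ∨ w = x) → v ≠ w := by
      intro v w hv hw
      rcases hv with rfl | rfl <;> rcases hw with rfl | rfl
      · exact hya
      · exact hyx
      · exact hx'ax.1
      · exact hx'ax.2
    have hY1m : Y1 = y ∨ Y1 = x' := hmemY.imp (fun h => h.1) (fun h => h.1)
    have hY2m : Y2 = y ∨ Y2 = x' := hmemY.elim (fun h => Or.inr h.2) (fun h => Or.inl h.2)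
    have hA1m : A1 = a ∨ A1 = x := hmemA.imp (fun h => h.1) (fun h => h.1)
    have hA2m : A2 = a ∨ A2 = x := hmemA.elim (fun h => Or.inr h.2) (fun h => Or.inl h.2)
    have hA1A : A1 ∈ A := by rcases hA1m with rfl | rfl; exacts [haA, hxA]
    have hY1A : Y1 ∈ A := by rcases hY1m with rfl | rfl; exacts [hyA, hx'A]
    exact caseIIa hdisj hcross hns houtp hinp hbad hA1A hY1A gA2 gY2
      (base hY1m hA1m) (base hY1m hA2m) (base hY2m hA1m) (base hY2m hA2m)
      (by rw [hCBf]; exact hnAf) (by rw [hPf']; exact hnYf')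
  · -- no good pair: necklace structure
    push_neg at hgp
    have hforce : ∀ a x bb bb' y x' c c', a ∈ A → y ∈ A → y ≠ a → y ≠ x →
        Gad E a x bb bb' → Gad E y x' c c' →
        ¬ (E a c ∧ E a c' ∧ E x c ∧ E x c') →
        (E y bb ∧ E y bb' ∧ E x' bb ∧ E x' bb') := by
      intro a x bb bb' y x' c c' h1 h2 h3 h4 h5 h6 h7
      have hex : ∃ u f, (u = a ∨ u = x) ∧ (f = c ∨ f = c') ∧ ¬ E u f := by
        by_contra hne
        push_neg at hne
        exact h7 ⟨hne a c (Or.inl rfl) (Or.inl rfl), hne a c' (Or.inl rfl) (Or.inr rfl),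
          hne x c (Or.inr rfl) (Or.inl rfl), hne x c' (Or.inr rfl) (Or.inr rfl)⟩
      have hall := hgp a x bb bb' y x' c c' h1 h2 h3 h4 h5 h6 hex
      exact ⟨hall y bb (Or.inl rfl) (Or.inl rfl), hall y bb' (Or.inl rfl) (Or.inr rfl),
        hall x' bb (Or.inr rfl) (Or.inl rfl), hall x' bb' (Or.inr rfl) (Or.inr rfl)⟩
    obtain ⟨x0, b, b', g1⟩ := mkGad hbad houtp hinp a0
    obtain ⟨gn1, gm1, e1a, e1x, f1a, f1x, in1a, in1x, out1b, out1d⟩ := id g1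
    have hbB : b ∈ B := crossInA e1a ha0
    have hb'B : b' ∈ B := crossInA f1a ha0
    have hx0A : x0 ∈ A := crossOutB e1x hbB
    obtain ⟨e, _, _, he, _, _⟩ := houtp a0
    have heb : e ≠ b := fun h => hns b a0 e1a (by rw [← h]; exact he)
    have heb' : e ≠ b' := fun h => hns b' a0 f1a (by rw [← h]; exact he)
    have heB : e ∈ B := crossOutA he ha0
    obtain ⟨y0, _, _, hey0, _, _⟩ := houtp e
    have hy0A : y0 ∈ A := crossOutB hey0 heB
    have hy0a0 : y0 ≠ a0 := by
      intro h
      rcases in1a e (by rw [← h]; exact hey0) with h' | h'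
      · exact heb h'
      · exact heb' h'
    have hy0x0 : y0 ≠ x0 := by
      intro h
      rcases in1x e (by rw [← h]; exact hey0) with h' | h'
      · exact heb h'
      · exact heb' h'
    obtain ⟨x0', c, c', g2⟩ := mkGad hbad houtp hinp y0
    obtain ⟨gn2, gm2, e2a, e2x, f2a, f2x, in2a, in2x, out2b, out2d⟩ := id g2
    have hcB : c ∈ B := crossInA e2a hy0A
    have hc'B : c' ∈ B := crossInA f2a hy0A
    have hx0'A : x0' ∈ A := crossOutB e2x hcB
    -- c, c' avoid {b, b'}
    have hcb : c ≠ b := fun h => by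
      rcases out1b y0 (by rw [← h]; exact e2a) with h' | h'
      · exact hy0a0 h'
      · exact hy0x0 h'
    have hcb' : c ≠ b' := fun h => by
      rcases out1d y0 (by rw [← h]; exact e2a) with h' | h'
      · exact hy0a0 h'
      · exact hy0x0 h'
    have hc'b : c' ≠ b := fun h => by
      rcases out1b y0 (by rw [← h]; exact f2a) with h' | h'
      · exact hy0a0 h'
      · exact hy0x0 h'
    have hc'b' : c' ≠ b' := fun h => by
      rcases out1d y0 (by rw [← h]; exact f2a) with h' | h'
      · exact hy0a0 h'
      · exact hy0x0 h'
    -- x0' avoids {a0, x0}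
    have hx0'a0 : x0' ≠ a0 := by
      intro h
      rcases in1a c (by rw [← h]; exact e2x) with h' | h'
      · rcases out1b y0 (by rw [← h']; exact e2a) with h'' | h''
        · exact hy0a0 h''
        · exact hy0x0 h''
      · rcases out1d y0 (by rw [← h']; exact e2a) with h'' | h''
        · exact hy0a0 h''
        · exact hy0x0 h''
    have hx0'x0 : x0' ≠ x0 := by
      intro h
      rcases in1x c (by rw [← h]; exact e2x) with h' | h'
      · rcases out1b y0 (by rw [← h']; exact e2a) with h'' | h''
        · exact hy0a0 h''
        · exact hy0x0 h''
      · rcases out1d y0 (by rw [← h']; exact e2a) with h'' | h''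
        · exact hy0a0 h''
        · exact hy0x0 h''
    by_cases hz : ∃ z, z ∈ A ∧ z ≠ a0 ∧ z ≠ x0 ∧ z ≠ y0 ∧ z ≠ x0'
    · -- three gadgets: D12
      obtain ⟨z, hzA, hz1, hz2, hz3, hz4⟩ := hz
      obtain ⟨x3, d, d', g3⟩ := mkGad hbad houtp hinp z
      obtain ⟨gn3, gm3, e3a, e3x, f3a, f3x, in3a, in3x, out3b, out3d⟩ := id g3
      have hdB : d ∈ B := crossInA e3a hzA
      have hd'B : d' ∈ B := crossInA f3a hzA
      have hx3A : x3 ∈ A := crossOutB e3x hdB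
      -- d, d' avoid {b, b', c, c'}
      have hdav : ∀ {dd}, E dd z → dd ≠ b ∧ dd ≠ b' ∧ dd ≠ c ∧ dd ≠ c' := by
        intro dd hdd
        refine ⟨fun h => ?_, fun h => ?_, fun h => ?_, fun h => ?_⟩
        · rcases out1b z (by rw [← h]; exact hdd) with h' | h'
          · exact hz1 h'
          · exact hz2 h'
        · rcases out1d z (by rw [← h]; exact hdd) with h' | h'
          · exact hz1 h'
          · exact hz2 h'
        · rcases out2b z (by rw [← h]; exact hdd) with h' | h'
          · exact hz3 h'
          · exact hz4 h'
        · rcases out2d z (by rw [← h]; exact hdd) with h' | h'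
          · exact hz3 h'
          · exact hz4 h'
      obtain ⟨hdb, hdb', hdc, hdc'⟩ := hdav e3a
      obtain ⟨hd'b, hd'b', hd'c, hd'c'⟩ := hdav f3a
      -- x3 avoids {a0, x0, y0, x0'}
      have hx3a0 : x3 ≠ a0 := by
        intro h
        rcases in1a d (by rw [← h]; exact e3x) with h' | h'
        · exact hdb h'
        · exact hdb' h'
      have hx3x0 : x3 ≠ x0 := by
        intro h
        rcases in1x d (by rw [← h]; exact e3x) with h' | h'
        · exact hdb h'
        · exact hdb' h'
      have hx3y0 : x3 ≠ y0 := by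
        intro h
        rcases in2a d (by rw [← h]; exact e3x) with h' | h'
        · exact hdc h'
        · exact hdc' h'
      have hx3x0' : x3 ≠ x0' := by
        intro h
        rcases in2x d (by rw [← h]; exact e3x) with h' | h'
        · exact hdc h'
        · exact hdc' h'
      -- coverage of A by the three gadgets
      have hcov : ∀ v, v ∈ A → v = a0 ∨ v = x0 ∨ v = y0 ∨ v = x0' ∨ v = z ∨ v = x3 := by
        intro v hvA
        by_contra hvn
        push_neg at hvn
        obtain ⟨hv1, hv2, hv3, hv4, hv5, hv6⟩ := hvn
        obtain ⟨x4, e4, e4', g4⟩ := mkGad hbad houtp hinp v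
        obtain ⟨gn4, gm4, e4a, e4x, f4a, f4x, in4a, in4x, out4b, out4d⟩ := id g4
        have or14 := Classical.em (E a0 e4 ∧ E a0 e4' ∧ E x0 e4 ∧ E x0 e4')
        have or24 := Classical.em (E y0 e4 ∧ E y0 e4' ∧ E x0' e4 ∧ E x0' e4')
        have or34 := Classical.em (E z e4 ∧ E z e4' ∧ E x3 e4 ∧ E x3 e4')
        rcases or14 with P1 | nP1
        · rcases or24 with P2 | nP2
          · exact three_of_in hinp P1.1 P1.2.2.1 P2.1 gn1 hy0a0 hy0x0
          · have Q2 := hforce y0 x0' c c' v x4 e4 e4' hy0A hvA hv3 hv4 g2 g4 nP2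
            rcases or34 with P3 | nP3
            · exact three_of_in hinp P1.1 P1.2.2.1 P3.1 gn1 hz1 hz2
            · have Q3 := hforce z x3 d d' v x4 e4 e4' hzA hvA hv5 hv6 g3 g4 nP3
              exact three_of_out houtp Q2.1 Q2.2.1 Q3.1 gm2 hdc hdc'
        · have Q1 := hforce a0 x0 b b' v x4 e4 e4' ha0 hvA hv1 hv2 g1 g4 nP1
          rcases or24 with P2 | nP2
          · rcases or34 with P3 | nP3
            · exact three_of_in hinp P2.1 P2.2.2.1 P3.1 gn2 hz3 hz4
            · have Q3 := hforce z x3 d d' v x4 e4 e4' hzA hvA hv5 hv6 g3 g4 nP3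
              exact three_of_out houtp Q1.1 Q1.2.1 Q3.1 gm1 hdb hdb'
          · have Q2 := hforce y0 x0' c c' v x4 e4 e4' hy0A hvA hv3 hv4 g2 g4 nP2
            exact three_of_out houtp Q1.1 Q1.2.1 Q2.1 gm1 hcb hcb'
      -- orientation of the necklace
      have or12 := Classical.em (E a0 c ∧ E a0 c' ∧ E x0 c ∧ E x0 c')
      have or13 := Classical.em (E a0 d ∧ E a0 d' ∧ E x0 d ∧ E x0 d')
      have or23 := Classical.em (E y0 d ∧ E y0 d' ∧ E x0' d ∧ E x0' d')
      rcases or12 with F12 | nF12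
      · have F31 : E z b ∧ E z b' ∧ E x3 b ∧ E x3 b' := by
          rcases or13 with F13 | nF13
          · exact (three_of_out houtp F12.1 F12.2.1 F13.1 gm2 hdc hdc').elim
          · exact hforce a0 x0 b b' z x3 d d' ha0 hzA hz1 hz2 g1 g3 nF13
        have F23 : E y0 d ∧ E y0 d' ∧ E x0' d ∧ E x0' d' := by
          rcases or23 with F23 | nF23
          · exact F23
          · have F32 := hforce y0 x0' c c' z x3 d d' hy0A hzA hz3 hz4 g2 g3 nF23
            exact (three_of_in hinp F12.1 F12.2.2.1 F32.1 gn1 hz1 hz2).elim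
        exact d12case hdisj hcross houtp hinp ha0 g1 g2 g3
          hy0a0 hy0x0 hx0'a0 hx0'x0 hz1 hz2 hx3a0 hx3x0 hz3 hz4 hx3y0 hx3x0'
          F12 F23 F31 hcov
      · have F21 := hforce a0 x0 b b' y0 x0' c c' ha0 hy0A hy0a0 hy0x0 g1 g2 nF12
        have F32 : E z c ∧ E z c' ∧ E x3 c ∧ E x3 c' := by
          rcases or23 with F23 | nF23
          · exact (three_of_out houtp F21.1 F21.2.1 F23.1 gm1 hdb hdb').elim
          · exact hforce y0 x0' c c' z x3 d d' hy0A hzA hz3 hz4 g2 g3 nF23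
        have F13 : E a0 d ∧ E a0 d' ∧ E x0 d ∧ E x0 d' := by
          rcases or13 with F13 | nF13
          · exact F13
          · have F31 := hforce a0 x0 b b' z x3 d d' ha0 hzA hz1 hz2 g1 g3 nF13
            exact (three_of_in hinp F21.1 F21.2.2.1 F31.1 gn2 hz3 hz4).elim
        refine d12case hdisj hcross houtp hinp hy0A g2 g1 g3
          hy0a0.symm ?_ ?_ ?_ hz3 hz4 hx3y0 hx3x0' hz1 hz2 hx3a0 hx3x0
          F21 F13 F32 ?_
        · exact fun h => hx0'a0 h.symm
        · exact hy0x0.symm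
        · exact fun h => hx0'x0 h.symm
        · intro v hv
          rcases hcov v hv with h | h | h | h | h | h
          · exact Or.inr (Or.inr (Or.inl h))
          · exact Or.inr (Or.inr (Or.inr (Or.inl h)))
          · exact Or.inl h
          · exact Or.inr (Or.inl h)
          · exact Or.inr (Or.inr (Or.inr (Or.inr (Or.inl h))))
          · exact Or.inr (Or.inr (Or.inr (Or.inr (Or.inr h))))
    · -- two gadgets: D8
      push_neg at hz
      have cov4 : ∀ v, v ∈ A → v = a0 ∨ v = x0 ∨ v = y0 ∨ v = x0' := by
        intro v hv
        by_cases h1 : v = a0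
        · exact Or.inl h1
        by_cases h2 : v = x0
        · exact Or.inr (Or.inl h2)
        by_cases h3 : v = y0
        · exact Or.inr (Or.inr (Or.inl h3))
        · exact Or.inr (Or.inr (Or.inr (hz v hv h1 h2 h3)))
      have AF12 : E a0 c ∧ E a0 c' ∧ E x0 c ∧ E x0 c' := by
        have houtsub : ∀ u, (u = a0 ∨ u = x0) → ∀ w, E u w → w = c ∨ w = c' := by
          intro u hu w hw
          have huA : u ∈ A := by rcases hu with rfl | rfl; exacts [ha0, hx0A]
          have hwB : w ∈ B := crossOutA hw huA
          obtain ⟨t, _, _, ht, _, _⟩ := houtp w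
          have htA : t ∈ A := crossOutB ht hwB
          have hwb : w ≠ b := by
            intro h
            rcases hu with rfl | rfl
            · exact hns b u e1a (by rw [← h]; exact hw)
            · exact hns b u e1x (by rw [← h]; exact hw)
          have hwb' : w ≠ b' := by
            intro h
            rcases hu with rfl | rfl
            · exact hns b' u f1a (by rw [← h]; exact hw)
            · exact hns b' u f1x (by rw [← h]; exact hw)
          rcases cov4 t htA with rfl | rfl | rfl | rfl
          · rcases in1a w ht with h' | h'
            · exact absurd h' hwb
            · exact absurd h' hwb'
          · rcases in1x w ht with h' | h'
            · exact absurd h' hwb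
            · exact absurd h' hwb'
          · exact in2a w ht
          · exact in2x w ht
        have pair : ∀ u, (u = a0 ∨ u = x0) → E u c ∧ E u c' := by
          intro u hu
          obtain ⟨o1, o2, ho12, ho1, ho2, _⟩ := houtp u
          rcases houtsub u hu o1 ho1 with rfl | rfl <;> rcases houtsub u hu o2 ho2 with rfl | rfl
          · exact absurd rfl ho12
          · exact ⟨ho1, ho2⟩
          · exact ⟨ho2, ho1⟩
          · exact absurd rfl ho12
        obtain ⟨p1, p2⟩ := pair a0 (Or.inl rfl)
        obtain ⟨p3, p4⟩ := pair x0 (Or.inr rfl)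
        exact ⟨p1, p2, p3, p4⟩
      have AF21 : E y0 b ∧ E y0 b' ∧ E x0' b ∧ E x0' b' := by
        have houtsub : ∀ u, (u = y0 ∨ u = x0') → ∀ w, E u w → w = b ∨ w = b' := by
          intro u hu w hw
          have huA : u ∈ A := by rcases hu with rfl | rfl; exacts [hy0A, hx0'A]
          have hwB : w ∈ B := crossOutA hw huA
          obtain ⟨t, _, _, ht, _, _⟩ := houtp w
          have htA : t ∈ A := crossOutB ht hwB
          have hwc : w ≠ c := by
            intro h
            rcases hu with rfl | rfl
            · exact hns c u e2a (by rw [← h]; exact hw)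
            · exact hns c u e2x (by rw [← h]; exact hw)
          have hwc' : w ≠ c' := by
            intro h
            rcases hu with rfl | rfl
            · exact hns c' u f2a (by rw [← h]; exact hw)
            · exact hns c' u f2x (by rw [← h]; exact hw)
          rcases cov4 t htA with rfl | rfl | rfl | rfl
          · exact in1a w ht
          · exact in1x w ht
          · rcases in2a w ht with h' | h'
            · exact absurd h' hwc
            · exact absurd h' hwc'
          · rcases in2x w ht with h' | h'
            · exact absurd h' hwc
            · exact absurd h' hwc'
        have pair : ∀ u, (u = y0 ∨ u = x0') → E u b ∧ E u b' := by
          intro u hu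
          obtain ⟨o1, o2, ho12, ho1, ho2, _⟩ := houtp u
          rcases houtsub u hu o1 ho1 with rfl | rfl <;> rcases houtsub u hu o2 ho2 with rfl | rfl
          · exact absurd rfl ho12
          · exact ⟨ho1, ho2⟩
          · exact ⟨ho2, ho1⟩
          · exact absurd rfl ho12
        obtain ⟨p1, p2⟩ := pair y0 (Or.inl rfl)
        obtain ⟨p3, p4⟩ := pair x0' (Or.inr rfl)
        exact ⟨p1, p2, p3, p4⟩
      exact d8case hdisj hcross houtp hinp ha0 g1 g2 hy0a0 hy0x0
        (fun h => hx0'a0 h) (fun h => hx0'x0 h) AF12 AF21 cov4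

end Stmt10Aux
open Stmt10Aux in
/-- a simple bipartite digraph where every vertex has out-degree and
in-degree exactly 2 has dib = 3. -/
theorem stmt10 {V : Type*} [Fintype V] [Nonempty V] (E : V → V → Prop) (A B : Set V)
    (hbip : IsBipartition E A B) (hsimple : SimpleDigraph' E)
    (hdeg : ∀ v, outDeg E v = 2 ∧ inDeg E v = 2) :
    dib E = 3 := by
  classical
  obtain ⟨hdisj, hcover, hcross⟩ := hbip
  have houtp : ∀ v : V, ∃ x y, x ≠ y ∧ E v x ∧ E v y ∧ ∀ w, E v w → w = x ∨ w = y := by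
    intro v
    have h2 : {w | E v w}.ncard = 2 := (hdeg v).1
    obtain ⟨x, y, hxy, hset⟩ := Set.ncard_eq_two.mp h2
    refine ⟨x, y, hxy, ?_, ?_, ?_⟩
    · show x ∈ {w | E v w}
      rw [hset]; exact Set.mem_insert _ _
    · show y ∈ {w | E v w}
      rw [hset]; exact Set.mem_insert_of_mem _ rfl
    · intro w hw
      have : w ∈ ({x, y} : Set V) := hset ▸ hw
      simpa using this
  have hinp : ∀ v : V, ∃ x y, x ≠ y ∧ E x v ∧ E y v ∧ ∀ w, E w v → w = x ∨ w = y := by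
    intro v
    have h2 : {w | E w v}.ncard = 2 := (hdeg v).2
    obtain ⟨x, y, hxy, hset⟩ := Set.ncard_eq_two.mp h2
    refine ⟨x, y, hxy, ?_, ?_, ?_⟩
    · show x ∈ {w | E w v}
      rw [hset]; exact Set.mem_insert _ _
    · show y ∈ {w | E w v}
      rw [hset]; exact Set.mem_insert_of_mem _ rfl
    · intro w hw
      have : w ∈ ({x, y} : Set V) := hset ▸ hw
      simpa using this
  have hmem : ∀ v : V, v ∈ A ∨ v ∈ B := by
    intro v
    have : v ∈ A ∪ B := by rw [hcover]; trivial
    exact this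
  -- existence of a 3-colour acyclic b-colouring
  have hex : ∃ Γ : V → Fin 3, IsBColoring E Γ := by
    by_cases hI : ∃ b0 u v, E b0 u ∧ E b0 v ∧ u ≠ v ∧ ∀ w, E w u → E w v → w = b0
    · obtain ⟨b0, u, v, h1, h2, huv, hgood⟩ := hI
      rcases hcross _ _ h1 with ⟨hb0A, _⟩ | ⟨hb0B, _⟩
      · exact caseI hdisj.symm (fun u v h => (hcross u v h).symm) hsimple houtp hinp
          hb0A h1 h2 huv hgood
      · exact caseI hdisj hcross hsimple houtp hinp hb0B h1 h2 huv hgood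
    · push_neg at hI
      have hbad : ∀ u x y, E u x → E u y → x ≠ y → ∃ w, E w x ∧ E w y ∧ w ≠ u := hI
      obtain ⟨v0⟩ := ‹Nonempty V›
      rcases hmem v0 with hv | hv
      · exact caseII hdisj hcross hsimple houtp hinp hbad hv
      · obtain ⟨x, _, _, hx, _, _⟩ := houtp v0
        have hxA : x ∈ A := by
          rcases hcross _ _ hx with ⟨hA, _⟩ | ⟨_, hA⟩
          · exact ((Set.disjoint_left.mp hdisj hA hv).elim)
          · exact hA
        exact caseII hdisj hcross hsimple houtp hinp hbad hxA
  -- the upper bound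
  have hub : ∀ k ∈ {k | ∃ Γ : V → Fin k, IsBColoring E Γ}, k ≤ 3 := by
    rintro k ⟨Γ, hacyc, hbv⟩
    by_contra hk
    push_neg at hk
    have h4 : 4 ≤ k := hk
    obtain ⟨u, hu, hbp⟩ := (hbv ⟨0, by omega⟩).1
    have hdist : ∃ j1 j2 j3 : Fin k, j1 ≠ j2 ∧ j1 ≠ j3 ∧ j2 ≠ j3 ∧
        j1 ≠ Γ u ∧ j2 ≠ Γ u ∧ j3 ≠ Γ u := by
      have e0 : (⟨0, by omega⟩ : Fin k) ≠ ⟨1, by omega⟩ := by simp [Fin.ext_iff]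
      have e1 : (⟨0, by omega⟩ : Fin k) ≠ ⟨2, by omega⟩ := by simp [Fin.ext_iff]
      have e2 : (⟨0, by omega⟩ : Fin k) ≠ ⟨3, by omega⟩ := by simp [Fin.ext_iff]
      have e3 : (⟨1, by omega⟩ : Fin k) ≠ ⟨2, by omega⟩ := by simp [Fin.ext_iff]
      have e4 : (⟨1, by omega⟩ : Fin k) ≠ ⟨3, by omega⟩ := by simp [Fin.ext_iff]
      have e5 : (⟨2, by omega⟩ : Fin k) ≠ ⟨3, by omega⟩ := by simp [Fin.ext_iff]
      by_cases h0 : Γ u = ⟨0, by omega⟩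
      · exact ⟨⟨1, by omega⟩, ⟨2, by omega⟩, ⟨3, by omega⟩, e3, e4, e5,
          by rw [h0]; exact e0.symm, by rw [h0]; exact e1.symm, by rw [h0]; exact e2.symm⟩
      by_cases h1 : Γ u = ⟨1, by omega⟩
      · exact ⟨⟨0, by omega⟩, ⟨2, by omega⟩, ⟨3, by omega⟩, e1, e2, e5,
          by rw [h1]; exact e0, by rw [h1]; exact e3.symm, by rw [h1]; exact e4.symm⟩
      by_cases h2 : Γ u = ⟨2, by omega⟩
      · exact ⟨⟨0, by omega⟩, ⟨1, by omega⟩, ⟨3, by omega⟩, e0, e2, e4,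
          by rw [h2]; exact e1, by rw [h2]; exact e3, by rw [h2]; exact e5.symm⟩
      · exact ⟨⟨0, by omega⟩, ⟨1, by omega⟩, ⟨2, by omega⟩, e0, e1, e3,
          fun h => h0 h.symm, fun h => h1 h.symm, fun h => h2 h.symm⟩
    obtain ⟨j1, j2, j3, d12, d13, d23, n1, n2, n3⟩ := hdist
    obtain ⟨w1, hw1, hc1⟩ := hbp j1 n1
    obtain ⟨w2, hw2, hc2⟩ := hbp j2 n2
    obtain ⟨w3, hw3, hc3⟩ := hbp j3 n3
    have hw12 : w1 ≠ w2 := fun h => d12 (by rw [← hc1, ← hc2, h])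
    have hw13 : w1 ≠ w3 := fun h => d13 (by rw [← hc1, ← hc3, h])
    have hw23 : w2 ≠ w3 := fun h => d23 (by rw [← hc2, ← hc3, h])
    have hsub : ({w1, w2, w3} : Set V) ⊆ {w | E u w} := by
      intro z hz
      rcases hz with rfl | rfl | rfl
      · exact hw1
      · exact hw2
      · exact hw3
    have hle : ({w1, w2, w3} : Set V).ncard ≤ {w | E u w}.ncard :=
      Set.ncard_le_ncard hsub (Set.toFinite _)
    have hcard : ({w1, w2, w3} : Set V).ncard = 3 := by
      rw [Set.ncard_insert_of_notMem (by simp [hw12, hw13]),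
        Set.ncard_insert_of_notMem (by simp [hw23]), Set.ncard_singleton]
    rw [hcard] at hle
    have := (hdeg u).1
    rw [outDeg] at this
    rw [this] at hle
    omega
  have h3 : 3 ∈ {k | ∃ Γ : V → Fin k, IsBColoring E Γ} := hex
  refine le_antisymm (csSup_le ⟨3, h3⟩ hub) (le_csSup ⟨3, ?_⟩ h3)
  intro k hk
  exact hub k hk
end

section
/- Let D = (A,B) be a simple bipartite digraph with |A| = n ≤ m = |B|. If B contains no source or B contains no sink, then dib(D) ≤ n. -/
open Classical

/-- a simple bipartite digraph with |A| = n ≤ m = |B| in which B has no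
source or B has no sink satisfies dib ≤ n. -/
theorem stmt12 {V : Type*} [Fintype V] (E : V → V → Prop) (A B : Set V)
    (hbip : IsBipartition E A B) (hsimple : SimpleDigraph' E)
    (n m : ℕ) (hA : A.ncard = n) (hB : B.ncard = m) (hnm : n ≤ m)
    (h : (∀ v ∈ B, 1 ≤ inDeg E v) ∨ (∀ v ∈ B, 1 ≤ outDeg E v)) :
    dib E ≤ n :=  by
  have key : ∀ k, (∃ Γ : V → Fin k, IsBColoring E Γ) → k ≤ n := by
    intro k ⟨Γ, hΓ⟩
    by_contra hk
    push_neg at hk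
    obtain ⟨hdisj, hcov, harcs⟩ := hbip
    have hAfin : A.Finite := A.toFinite
    -- a color missing on A
    have himg : (Γ '' A).ncard ≤ n := hA ▸ Set.ncard_image_le hAfin
    have hne : Γ '' A ≠ Set.univ := by
      intro heq
      rw [heq, Set.ncard_univ, Nat.card_eq_fintype_card, Fintype.card_fin] at himg
      omega
    obtain ⟨i₀, hi₀⟩ := Set.ne_univ_iff_exists_notMem _ |>.mp hne
    obtain ⟨u, hu, hum⟩ := (hΓ.2 i₀).2
    obtain ⟨w, hw, hwp⟩ := (hΓ.2 i₀).1
    have hmemB : ∀ x : V, Γ x = i₀ → x ∈ B := by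
      intro x hx
      rcases (Set.mem_union x A B).mp (hcov ▸ Set.mem_univ x) with hxa | hxb
      · exact absurd ⟨x, hxa, hx⟩ hi₀
      · exact hxb
    have huB : u ∈ B := hmemB u hu
    have hwB : w ∈ B := hmemB w hw
    -- in-neighbors of u of each color j ≠ i₀, lying in A
    have inA : ∀ x, E x u → x ∈ A := by
      intro x hx
      rcases harcs _ _ hx with ⟨hxa, _⟩ | ⟨_, hua⟩
      · exact hxa
      · exact absurd (hdisj.ne_of_mem hua huB) (fun hh => hh rfl)
    choose g hg1 hg2 using fun j : {j : Fin k // j ≠ i₀} => hum j.1 (hu ▸ j.2)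
    have hginj : Function.Injective g := by
      intro a b hab
      exact Subtype.ext (by rw [← hg2 a, ← hg2 b, hab])
    have hgA : Set.range g ⊆ A := by
      rintro x ⟨j, rfl⟩
      exact inA _ (hg1 j)
    have hcard : Nat.card {j : Fin k // j ≠ i₀} = k - 1 := by
      rw [Nat.card_eq_fintype_card, Fintype.card_subtype_compl]
      simp
    have hrange : (Set.range g).ncard = k - 1 := by
      rw [← Nat.card_coe_set_eq, Nat.card_range_of_injective hginj, hcard]
    have hle : k - 1 ≤ n := by
      have := Set.ncard_le_ncard hgA hAfin
      omega
    have hkeq : k - 1 = n := by omega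
    have hAeq : Set.range g = A := by
      apply Set.eq_of_subset_of_ncard_le hgA _ hAfin
      omega
    -- every vertex of A sends an arc to u
    have hAu : ∀ a ∈ A, E a u := by
      intro a ha
      obtain ⟨j, rfl⟩ := hAeq ▸ ha
      exact hg1 j
    -- w sends an arc to every vertex of A
    have hwA : ∀ a ∈ A, E w a := by
      intro a ha
      obtain ⟨j, rfl⟩ := hAeq ▸ ha
      obtain ⟨x, hwx, hx⟩ := hwp j.1 (hw ▸ j.2)
      have hxA : x ∈ A := by
        rcases harcs _ _ hwx with ⟨hwa, _⟩ | ⟨_, hxa⟩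
        · exact absurd (hdisj.ne_of_mem hwa hwB) (fun hh => hh rfl)
        · exact hxa
      obtain ⟨j', rfl⟩ := hAeq ▸ hxA
      have : j' = j := Subtype.ext (by rw [← hg2 j']; exact hx)
      rwa [← this]
    rcases h with hin | hout
    · -- w has an in-neighbor, necessarily in A : digon
      have : {x | E x w}.Nonempty := by
        rw [Set.nonempty_iff_ne_empty]
        intro hemp
        have := hin w hwB
        rw [inDeg, hemp] at this
        simp at this
      obtain ⟨x, hxw⟩ := this
      have hxA : x ∈ A := by
        rcases harcs _ _ hxw with ⟨hxa, _⟩ | ⟨_, hwa⟩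
        · exact hxa
        · exact absurd (hdisj.ne_of_mem hwa hwB) (fun hh => hh rfl)
      exact hsimple w x (hwA x hxA) hxw
    · -- u has an out-neighbor, necessarily in A : digon
      have : {y | E u y}.Nonempty := by
        rw [Set.nonempty_iff_ne_empty]
        intro hemp
        have := hout u huB
        rw [outDeg, hemp] at this
        simp at this
      obtain ⟨y, huy⟩ := this
      have hyA : y ∈ A := by
        rcases harcs _ _ huy with ⟨hua, _⟩ | ⟨_, hya⟩
        · exact absurd (hdisj.ne_of_mem hua huB) (fun hh => hh rfl)
        · exact hya
      exact hsimple y u (hAu y hyA) huy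
  exact csSup_le' key
end
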